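/- arXiv:0901.1108 — 4 statements merged into one kernel-verified Lean document; each statement's English description precedes it below -/
import Mathlib

section
/- There exists a universal constant c > 0 such that for all integers p ≥ 1 and N ≥ 2, every vector ψ ∈ ℂ^{(ℤ/pℤ)×{1,…,N}×{1,…,N}} orthogonal to the all-ones vector satisfies ⟨ψ, H_{p,N} ψ⟩ ≥ c·‖ψ‖² / (p²·N²·log N); i.e., the spectral gap of H_{p,N} above its ground state is Ω(1/(p²N² log N)). -/
open Matrix

/-- Index set (ℤ/pℤ)×{1,…,N}×{1,…,N}; the site a ∈ {1,…,N} is represented by the index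
a−1 : Fin N. -/
abbrev Idx (p N : ℕ) := ZMod p × Fin N × Fin N

/-- Diagonal coefficient d(a): 2 for interior sites, 1 at the two endpoints. -/
noncomputable def degA (N : ℕ) (a : Fin N) : ℂ :=
  (if (a : ℕ) = 0 then 0 else 1) + (if (a : ℕ) = N - 1 then 0 else 1)

/-- The operator A: path Laplacian in the coordinate a, i.e.
(Aψ)(r,a,b) = d(a)ψ(r,a,b) − ψ(r,a−1,b) − ψ(r,a+1,b) (boundary terms omitted). -/
noncomputable def Amat (p N : ℕ) : Matrix (Idx p N) (Idx p N) ℂ :=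
  Matrix.of fun x y =>
    if x.1 = y.1 ∧ x.2.2 = y.2.2 then
      (if x.2.1 = y.2.1 then degA N x.2.1
       else if (x.2.1 : ℕ) + 1 = (y.2.1 : ℕ) ∨ (y.2.1 : ℕ) + 1 = (x.2.1 : ℕ) then -1
       else 0)
    else 0

/-- The operator B: path Laplacian in the coordinate b. -/
noncomputable def Bmat (p N : ℕ) : Matrix (Idx p N) (Idx p N) ℂ :=
  Matrix.of fun x y =>
    if x.1 = y.1 ∧ x.2.1 = y.2.1 then
      (if x.2.2 = y.2.2 then degA N x.2.2
       else if (x.2.2 : ℕ) + 1 = (y.2.2 : ℕ) ∨ (y.2.2 : ℕ) + 1 = (x.2.2 : ℕ) then -1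
       else 0)
    else 0

/-- The vector v_s = e_{(s,N,N)} − e_{(s+1,1,1)}. -/
noncomputable def cvec (p N : ℕ) (s : ZMod p) : Idx p N → ℂ := fun x =>
  (if x.1 = s ∧ (x.2.1 : ℕ) = N - 1 ∧ (x.2.2 : ℕ) = N - 1 then 1 else 0)
    - (if x.1 = s + 1 ∧ (x.2.1 : ℕ) = 0 ∧ (x.2.2 : ℕ) = 0 then 1 else 0)

/-- The operator C = Σ_r v_r v_r†. -/
noncomputable def Cmat (p N : ℕ) [NeZero p] : Matrix (Idx p N) (Idx p N) ℂ :=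
  ∑ s : ZMod p, Matrix.vecMulVec (cvec p N s) (star (cvec p N s))

/-- The Hamiltonian H_{p,N} = A + B + C. -/
noncomputable def Hpn (p N : ℕ) [NeZero p] : Matrix (Idx p N) (Idx p N) ℂ :=
  Amat p N + Bmat p N + Cmat p N


open Finset Complex


noncomputable section AuxDefs

/-- Horizontal edge energy of a grid function. -/
def hQ (N : ℕ) (f : ℕ → ℕ → ℂ) : ℝ :=
  ∑ a ∈ range (N-1), ∑ b ∈ range N, normSq (f (a+1) b - f a b)

/-- Vertical edge energy. -/
def vQ (N : ℕ) (f : ℕ → ℕ → ℂ) : ℝ :=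
  ∑ a ∈ range N, ∑ b ∈ range (N-1), normSq (f a (b+1) - f a b)

def gq (N : ℕ) (f : ℕ → ℕ → ℂ) : ℝ := hQ N f + vQ N f

def gsum (N : ℕ) (f : ℕ → ℕ → ℂ) : ℂ := ∑ a ∈ range N, ∑ b ∈ range N, f a b

def gmean (N : ℕ) (f : ℕ → ℕ → ℂ) : ℂ := gsum N f / ((N:ℂ)^2)

end AuxDefs

section Prelim

lemma normSq_nonneg' (z : ℂ) : 0 ≤ normSq z := normSq_nonneg z

lemma hQ_nonneg (N : ℕ) (f : ℕ → ℕ → ℂ) : 0 ≤ hQ N f := by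
  apply Finset.sum_nonneg; intro a _; apply Finset.sum_nonneg; intro b _; exact normSq_nonneg _

lemma vQ_nonneg (N : ℕ) (f : ℕ → ℕ → ℂ) : 0 ≤ vQ N f := by
  apply Finset.sum_nonneg; intro a _; apply Finset.sum_nonneg; intro b _; exact normSq_nonneg _

lemma gq_nonneg (N : ℕ) (f : ℕ → ℕ → ℂ) : 0 ≤ gq N f :=
  add_nonneg (hQ_nonneg N f) (vQ_nonneg N f)

/-- Cauchy–Schwarz for a complex sum with real coefficients. -/
lemma normSq_sum_smul_le {ι : Type*} (s : Finset ι) (c : ι → ℝ) (z : ι → ℂ) :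
    normSq (∑ t ∈ s, (c t : ℂ) * z t) ≤ (∑ t ∈ s, (c t)^2) * (∑ t ∈ s, normSq (z t)) := by
  have h1 : ‖∑ t ∈ s, (c t : ℂ) * z t‖ ≤ ∑ t ∈ s, |c t| * ‖z t‖ := by
    refine (norm_sum_le _ _).trans_eq ?_
    refine Finset.sum_congr rfl fun t _ => ?_
    rw [norm_mul, Complex.norm_real, Real.norm_eq_abs]
  have h2 : (∑ t ∈ s, |c t| * ‖z t‖)^2 ≤ (∑ t ∈ s, |c t|^2) * (∑ t ∈ s, ‖z t‖^2) :=
    Finset.sum_mul_sq_le_sq_mul_sq s _ _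
  calc normSq (∑ t ∈ s, (c t : ℂ) * z t) = ‖∑ t ∈ s, (c t : ℂ) * z t‖^2 := by
        rw [Complex.sq_norm]
    _ ≤ (∑ t ∈ s, |c t| * ‖z t‖)^2 := by
        apply pow_le_pow_left₀ (norm_nonneg _) h1
    _ ≤ (∑ t ∈ s, |c t|^2) * (∑ t ∈ s, ‖z t‖^2) := h2
    _ = (∑ t ∈ s, (c t)^2) * (∑ t ∈ s, normSq (z t)) := by
        congr 1
        · exact Finset.sum_congr rfl fun t _ => sq_abs _
        · exact Finset.sum_congr rfl fun t _ => by rw [Complex.sq_norm]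

lemma normSq_sum_le_card {ι : Type*} (s : Finset ι) (z : ι → ℂ) :
    normSq (∑ t ∈ s, z t) ≤ (s.card : ℝ) * ∑ t ∈ s, normSq (z t) := by
  have := normSq_sum_smul_le s (fun _ => 1) z
  simpa using this

lemma normSq_comm (x y : ℂ) : normSq (x - y) = normSq (y - x) := by
  rw [← Complex.normSq_neg, neg_sub]

lemma normSq_add_le (u v : ℂ) : normSq (u + v) ≤ 2 * normSq u + 2 * normSq v := by
  have h := norm_add_le u v
  have hu : normSq u = ‖u‖^2 := by rw [Complex.sq_norm]
  have hv : normSq v = ‖v‖^2 := by rw [Complex.sq_norm]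
  have huv : normSq (u+v) = ‖u+v‖^2 := by rw [Complex.sq_norm]
  rw [hu, hv, huv]
  nlinarith [sq_nonneg (‖u‖ - ‖v‖), norm_nonneg u, norm_nonneg v, norm_nonneg (u+v)]

lemma normSq_add3_le (u v w : ℂ) :
    normSq (u + v + w) ≤ 3 * normSq u + 3 * normSq v + 3 * normSq w := by
  have hu : normSq u = ‖u‖^2 := by rw [Complex.sq_norm]
  have hv : normSq v = ‖v‖^2 := by rw [Complex.sq_norm]
  have hw : normSq w = ‖w‖^2 := by rw [Complex.sq_norm]
  have huv : normSq (u+v+w) = ‖u+v+w‖^2 := by rw [Complex.sq_norm]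
  have h : ‖u+v+w‖ ≤ ‖u‖ + ‖v‖ + ‖w‖ := norm_add₃_le
  rw [hu, hv, hw, huv]
  nlinarith [sq_nonneg (‖u‖ - ‖v‖), sq_nonneg (‖u‖ - ‖w‖), sq_nonneg (‖v‖ - ‖w‖),
    norm_nonneg u, norm_nonneg v, norm_nonneg w, norm_nonneg (u+v+w)]

/-- Harmonic sum is at most `1 + log N`. -/
lemma harmonic_le_log (N : ℕ) : ∑ a ∈ range N, (1:ℝ)/(a+1) ≤ 1 + Real.log N := by
  induction N with
  | zero => simp
  | succ n ih =>
    rw [Finset.sum_range_succ]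
    rcases Nat.eq_zero_or_pos n with h | h
    · subst h; simp
    · have hn : (0:ℝ) < n := by exact_mod_cast h
      have hx : (0:ℝ) < (n:ℝ)/(n+1) := by positivity
      have hlog := Real.log_le_sub_one_of_pos hx
      rw [Real.log_div (by positivity) (by positivity)] at hlog
      have h2 : (n:ℝ)/(n+1) - 1 = -(1/(n+1)) := by field_simp; ring
      have h3 : (1:ℝ)/(n+1) ≤ Real.log (n+1) - Real.log n := by
        rw [h2] at hlog; linarith
      have h4 : Real.log ((n:ℝ)+1) = Real.log ((n+1 : ℕ):ℝ) := by push_cast; ring_nf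
      push_cast
      linarith [ih]

/-- Telescoping bound. -/
lemma tele_sum (a : ℝ) (ha : 0 ≤ a) (N : ℕ) :
    ∑ b ∈ range N, 1/((a+b+1)*(a+b+2)) ≤ 1/(a+1) := by
  have key : ∀ b : ℕ, 1/((a+(b:ℝ)+1)*(a+b+2))
      = (fun b : ℕ => 1/(a+b+1)) b - (fun b : ℕ => 1/(a+b+1)) (b+1) := by
    intro b
    have h1 : a+(b:ℝ)+1 > 0 := by positivity
    have h2 : a+(b:ℝ)+2 > 0 := by positivity
    have h1' : a+(b:ℝ)+1 ≠ 0 := ne_of_gt h1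
    have h2' : a+(b:ℝ)+2 ≠ 0 := ne_of_gt h2
    simp only []
    push_cast
    field_simp
    ring_nf
  calc ∑ b ∈ range N, 1/((a+b+1)*(a+b+2))
      = ∑ b ∈ range N, ((fun b : ℕ => 1/(a+b+1)) b - (fun b : ℕ => 1/(a+b+1)) (b+1)) := by
        exact Finset.sum_congr rfl fun b _ => key b
    _ = 1/(a+0+1) - 1/(a+N+1) := by
        rw [Finset.sum_range_sub' (fun b : ℕ => 1/(a+(b:ℝ)+1)) N]
        norm_num
    _ ≤ 1/(a+1) := by
        have : (0:ℝ) ≤ 1/(a+N+1) := by positivity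
        have h0 : a+0+1 = a+1 := by ring
        rw [h0]; linarith

/-- Mean-shift identity for sums of `normSq`. -/
lemma sum_normSq_eq {ι : Type*} (s : Finset ι) (g : ι → ℂ) (m : ℂ)
    (hm : ∑ t ∈ s, g t = (s.card : ℂ) * m) :
    ∑ t ∈ s, normSq (g t) = ∑ t ∈ s, normSq (g t - m) + (s.card : ℝ) * normSq m := by
  have expand : ∀ t, normSq (g t - m) = normSq (g t) + normSq m - 2 * (g t * (starRingEnd ℂ) m).re :=
    fun t => Complex.normSq_sub (g t) m
  have h1 : ∑ t ∈ s, normSq (g t - m)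
      = ∑ t ∈ s, normSq (g t) + (s.card : ℝ) * normSq m
        - 2 * ((∑ t ∈ s, g t) * (starRingEnd ℂ) m).re := by
    rw [Finset.sum_congr rfl fun t _ => expand t]
    rw [Finset.sum_sub_distrib, Finset.sum_add_distrib]
    rw [Finset.sum_const, nsmul_eq_mul]
    rw [← Finset.mul_sum, ← Complex.re_sum, ← Finset.sum_mul]
  have h2 : ((∑ t ∈ s, g t) * (starRingEnd ℂ) m).re = (s.card : ℝ) * normSq m := by
    rw [hm, mul_assoc, Complex.mul_conj]
    simp
  rw [h1, h2]; ring

/-- Pairwise difference identity. -/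
lemma sum_pair_normSq {ι : Type*} (s : Finset ι) (g : ι → ℂ) (h0 : ∑ t ∈ s, g t = 0) :
    ∑ x ∈ s, ∑ y ∈ s, normSq (g x - g y) = 2 * (s.card : ℝ) * ∑ x ∈ s, normSq (g x) := by
  have expand : ∀ x y : ι, normSq (g x - g y)
      = normSq (g x) + normSq (g y) - 2 * (g x * (starRingEnd ℂ) (g y)).re :=
    fun x y => Complex.normSq_sub _ _
  have h1 : ∀ x, ∑ y ∈ s, normSq (g x - g y)
      = (s.card:ℝ) * normSq (g x) + ∑ y ∈ s, normSq (g y)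
        - 2 * (g x * (starRingEnd ℂ) (∑ y ∈ s, g y)).re := by
    intro x
    rw [Finset.sum_congr rfl fun y _ => expand x y]
    rw [Finset.sum_sub_distrib, Finset.sum_add_distrib, Finset.sum_const, nsmul_eq_mul]
    rw [map_sum, Finset.mul_sum, Complex.re_sum, ← Finset.mul_sum]
  calc ∑ x ∈ s, ∑ y ∈ s, normSq (g x - g y)
      = ∑ x ∈ s, ((s.card:ℝ) * normSq (g x) + ∑ y ∈ s, normSq (g y)
        - 2 * (g x * (starRingEnd ℂ) (∑ y ∈ s, g y)).re) :=
        Finset.sum_congr rfl fun x _ => h1 x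
    _ = 2 * (s.card : ℝ) * ∑ x ∈ s, normSq (g x) := by
        rw [h0]
        simp only [map_zero, mul_zero, Complex.zero_re]
        rw [Finset.sum_sub_distrib, Finset.sum_add_distrib, ← Finset.mul_sum,
          Finset.sum_const, nsmul_eq_mul]
        ring_nf
        simp

section GridPoincare

/-- Telescoping 1D bound. -/
lemma oneD_tel (N : ℕ) (g : ℕ → ℂ) {i j : ℕ} (hi : i < N) (hj : j < N) :
    normSq (g i - g j) ≤ (N:ℝ) * ∑ k ∈ range (N-1), normSq (g (k+1) - g k) := by
  have key : ∀ i j : ℕ, i ≤ j → j < N →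
      normSq (g j - g i) ≤ (N:ℝ) * ∑ k ∈ range (N-1), normSq (g (k+1) - g k) := by
    intro i j hij hjN
    have htel : g j - g i = ∑ k ∈ Ico i j, (g (k+1) - g k) := by
      rw [Finset.sum_Ico_eq_sub _ hij, Finset.sum_range_sub g j, Finset.sum_range_sub g i]
      ring
    rw [htel]
    calc normSq (∑ k ∈ Ico i j, (g (k+1) - g k))
        ≤ ((Ico i j).card : ℝ) * ∑ k ∈ Ico i j, normSq (g (k+1) - g k) :=
          normSq_sum_le_card _ _
      _ ≤ (N:ℝ) * ∑ k ∈ range (N-1), normSq (g (k+1) - g k) := by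
          apply mul_le_mul
          · rw [Nat.card_Ico]; exact_mod_cast Nat.le_of_lt (by omega)
          · apply Finset.sum_le_sum_of_subset_of_nonneg
            · intro k hk
              rw [Finset.mem_Ico] at hk; rw [Finset.mem_range]; omega
            · intro k _ _; exact normSq_nonneg _
          · apply Finset.sum_nonneg; intro k _; exact normSq_nonneg _
          · positivity
  rcases le_or_gt i j with h | h
  · rw [normSq_comm]; exact key i j h hj
  · exact key j i (le_of_lt h) hi

lemma gsum_card (N : ℕ) (hN : 0 < N) (f : ℕ → ℕ → ℂ) :
    ∑ x ∈ range N ×ˢ range N, f x.1 x.2 = (((range N ×ˢ range N).card : ℕ) : ℂ) * gmean N f := by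
  have hcard : (range N ×ˢ range N).card = N^2 := by
    rw [Finset.card_product, Finset.card_range]; ring
  have hN2 : ((N:ℂ)^2) ≠ 0 := pow_ne_zero _ (Nat.cast_ne_zero.mpr (by omega))
  rw [hcard, gmean, gsum, Finset.sum_product]
  push_cast
  rw [mul_comm, div_mul_cancel₀ _ hN2]

/-- Grid Poincaré inequality: variance is at most `N² ⋅ gq`. -/
lemma gvar_le (N : ℕ) (hN : 2 ≤ N) (f : ℕ → ℕ → ℂ) :
    ∑ a ∈ range N, ∑ b ∈ range N, normSq (f a b - gmean N f) ≤ (N:ℝ)^2 * gq N f := by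
  set μ := gmean N f with hμ
  set s := range N ×ˢ range N with hs
  have hcard : ((s.card : ℕ) : ℝ) = (N:ℝ)^2 := by
    rw [hs, Finset.card_product, Finset.card_range]; push_cast; ring
  have h0 : ∑ x ∈ s, (f x.1 x.2 - μ) = 0 := by
    rw [Finset.sum_sub_distrib, gsum_card N (by omega) f, Finset.sum_const, nsmul_eq_mul]
    rw [hs]; ring
  have hpair := sum_pair_normSq s (fun x => f x.1 x.2 - μ) h0
  set V : ℕ → ℝ := fun a => ∑ k ∈ range (N-1), normSq (f a (k+1) - f a k) with hV
  set H : ℕ → ℝ := fun b => ∑ k ∈ range (N-1), normSq (f (k+1) b - f k b) with hH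
  have hbound : ∀ x ∈ s, ∀ y ∈ s,
      normSq ((f x.1 x.2 - μ) - (f y.1 y.2 - μ)) ≤ 2*(N:ℝ)*V x.1 + 2*(N:ℝ)*H y.2 := by
    intro x hx y hy
    rw [hs, Finset.mem_product, Finset.mem_range, Finset.mem_range] at hx hy
    have hsimp : (f x.1 x.2 - μ) - (f y.1 y.2 - μ)
        = (f x.1 x.2 - f x.1 y.2) + (f x.1 y.2 - f y.1 y.2) := by ring
    rw [hsimp]
    have h1 : normSq (f x.1 x.2 - f x.1 y.2) ≤ (N:ℝ) * V x.1 :=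
      oneD_tel N (fun k => f x.1 k) hx.2 hy.2
    have h2 : normSq (f x.1 y.2 - f y.1 y.2) ≤ (N:ℝ) * H y.2 :=
      oneD_tel N (fun k => f k y.2) hx.1 hy.1
    calc normSq ((f x.1 x.2 - f x.1 y.2) + (f x.1 y.2 - f y.1 y.2))
        ≤ 2 * normSq (f x.1 x.2 - f x.1 y.2) + 2 * normSq (f x.1 y.2 - f y.1 y.2) :=
          normSq_add_le _ _
      _ ≤ 2*(N:ℝ)*V x.1 + 2*(N:ℝ)*H y.2 := by linarith
  have hsumV : ∑ x ∈ s, V x.1 = (N:ℝ) * vQ N f := by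
    rw [hs, Finset.sum_product]
    rw [vQ]
    simp only [Finset.sum_const, Finset.card_range, nsmul_eq_mul, hV]
    rw [← Finset.mul_sum]
  have hsumH : ∑ y ∈ s, H y.2 = (N:ℝ) * hQ N f := by
    rw [hs, Finset.sum_product]
    have e0 : ∀ x ∈ range N, ∑ y ∈ range N, H (x, y).2 = ∑ y ∈ range N, H y :=
      fun _ _ => rfl
    rw [Finset.sum_congr rfl e0, Finset.sum_const, Finset.card_range, nsmul_eq_mul]
    rw [hQ, Finset.sum_comm]
  have hle : ∑ x ∈ s, ∑ y ∈ s, normSq ((f x.1 x.2 - μ) - (f y.1 y.2 - μ))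
      ≤ 2*(N:ℝ)^4 * gq N f := by
    calc ∑ x ∈ s, ∑ y ∈ s, normSq ((f x.1 x.2 - μ) - (f y.1 y.2 - μ))
        ≤ ∑ x ∈ s, ∑ y ∈ s, (2*(N:ℝ)*V x.1 + 2*(N:ℝ)*H y.2) := by
          apply Finset.sum_le_sum; intro x hx
          apply Finset.sum_le_sum; intro y hy
          exact hbound x hx y hy
      _ = ∑ x ∈ s, (((s.card : ℕ):ℝ) * (2*(N:ℝ)*V x.1) + 2*(N:ℝ)*((N:ℝ) * hQ N f)) := by
          apply Finset.sum_congr rfl; intro x _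
          rw [Finset.sum_add_distrib, Finset.sum_const, nsmul_eq_mul, ← Finset.mul_sum, hsumH]
      _ = (∑ x ∈ s, ((s.card : ℕ):ℝ) * (2*(N:ℝ)*V x.1))
            + ((s.card:ℕ):ℝ) * (2*(N:ℝ)*((N:ℝ) * hQ N f)) := by
          rw [Finset.sum_add_distrib, Finset.sum_const, nsmul_eq_mul]
      _ = ((s.card:ℕ):ℝ) * (2*(N:ℝ) * ∑ x ∈ s, V x.1)
            + ((s.card:ℕ):ℝ) * (2*(N:ℝ)*((N:ℝ) * hQ N f)) := by
          rw [← Finset.mul_sum, ← Finset.mul_sum]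
      _ = 2*(N:ℝ)^4 * gq N f := by rw [hsumV, hcard, gq]; ring
  rw [hcard] at hpair
  have hfin : 2*(N:ℝ)^2 * (∑ x ∈ s, normSq (f x.1 x.2 - μ)) ≤ 2*(N:ℝ)^4 * gq N f := by
    calc 2*(N:ℝ)^2 * (∑ x ∈ s, normSq (f x.1 x.2 - μ)) = _ := by rw [← hpair]
      _ ≤ 2*(N:ℝ)^4 * gq N f := hle
  have htgt : ∑ a ∈ range N, ∑ b ∈ range N, normSq (f a b - μ)
      = ∑ x ∈ s, normSq (f x.1 x.2 - μ) := by
    rw [hs, Finset.sum_product]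
  rw [htgt]
  have hN2 : (0:ℝ) < (N:ℝ)^2 := by positivity
  nlinarith [hfin]

end GridPoincare

noncomputable section FlowDefs

/-- Size of diagonal `d` in the `N×N` grid (valid for `d ≤ 2N-2`). -/
def sr (N d : ℕ) : ℝ := if d < N then (d:ℝ)+1 else 2*(N:ℝ)-1-(d:ℝ)

/-- Number of grid points strictly beyond diagonal `d`. -/
def Tr (N d : ℕ) : ℝ := ∑ e ∈ Ico (d+1) (2*N-1), sr N e

/-- Numerator of the flow weight. -/
def wnum (N a d : ℕ) : ℝ := if d+1 < N then (a:ℝ)+1 else (N:ℝ)-1-(a:ℝ)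

/-- Weight of the horizontal edge `(a,b) → (a+1,b)` in the corner-to-uniform flow. -/
def wH (N a b : ℕ) : ℝ := Tr N (a+b) / (N:ℝ)^2 * wnum N a (a+b) / (sr N (a+b) * sr N (a+b+1))

/-- Weight of the vertical edge `(a,b) → (a,b+1)`. -/
def wV (N a b : ℕ) : ℝ := Tr N (a+b) / (N:ℝ)^2 * wnum N b (a+b) / (sr N (a+b) * sr N (a+b+1))

end FlowDefs

section FlowLemmas

variable {N : ℕ}

lemma sr_exp {d : ℕ} (h : d < N) : sr N d = (d:ℝ)+1 := if_pos h

lemma sr_contr (hN : 2 ≤ N) {d : ℕ} (h1 : N-1 ≤ d) (h2 : d ≤ 2*N-2) :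
    sr N d = 2*(N:ℝ)-1-(d:ℝ) := by
  rw [sr]
  by_cases h : d < N
  · rw [if_pos h]
    have hd : d = N-1 := by omega
    subst hd
    have h1N : (1:ℕ) ≤ N := by omega
    push_cast [Nat.cast_sub h1N]
    ring
  · rw [if_neg h]

lemma sr_pos (hN : 2 ≤ N) {d : ℕ} (h2 : d ≤ 2*N-2) : 0 < sr N d := by
  rw [sr]
  by_cases h : d < N
  · rw [if_pos h]; positivity
  · rw [if_neg h]
    have : (d:ℝ) ≤ 2*(N:ℝ)-2 := by
      have : (d:ℕ) ≤ 2*N-2 := h2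
      have h4 : ((2*N-2 : ℕ):ℝ) = 2*(N:ℝ)-2 := by
        push_cast [Nat.cast_sub (by omega : 2 ≤ 2*N)]; ring
      calc (d:ℝ) ≤ ((2*N-2:ℕ):ℝ) := by exact_mod_cast h2
        _ = 2*(N:ℝ)-2 := h4
    linarith

lemma sr_nonneg (hN : 2 ≤ N) {d : ℕ} (h2 : d ≤ 2*N-2) : 0 ≤ sr N d :=
  le_of_lt (sr_pos hN h2)

lemma gauss_sum (n : ℕ) : ∑ k ∈ range n, (k:ℝ) = (n:ℝ)*((n:ℝ)-1)/2 := by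
  induction n with
  | zero => simp
  | succ m ih => rw [Finset.sum_range_succ, ih]; push_cast; ring

lemma sum_sr (hN : 2 ≤ N) : ∑ e ∈ range (2*N-1), sr N e = (N:ℝ)^2 := by
  have hsplit : ∑ e ∈ range (2*N-1), sr N e
      = ∑ e ∈ Ico 0 N, sr N e + ∑ e ∈ Ico N (2*N-1), sr N e := by
    rw [Finset.range_eq_Ico, ← Finset.sum_Ico_consecutive _ (by omega : 0 ≤ N) (by omega : N ≤ 2*N-1)]
  have h1 : ∑ e ∈ Ico 0 N, sr N e = (N:ℝ)*((N:ℝ)+1)/2 := by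
    rw [← Finset.range_eq_Ico]
    have : ∀ e ∈ range N, sr N e = (e:ℝ)+1 := fun e he => if_pos (Finset.mem_range.mp he)
    rw [Finset.sum_congr rfl this, Finset.sum_add_distrib, gauss_sum, Finset.sum_const,
      Finset.card_range, nsmul_eq_mul]
    ring
  have h2 : ∑ e ∈ Ico N (2*N-1), sr N e = (N:ℝ)*((N:ℝ)-1)/2 := by
    rw [Finset.sum_Ico_eq_sum_range]
    have hc : 2*N-1-N = N-1 := by omega
    rw [hc]
    have : ∀ k ∈ range (N-1), sr N (N+k) = (N:ℝ)-1-(k:ℝ) := by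
      intro k hk
      rw [Finset.mem_range] at hk
      rw [sr, if_neg (by omega)]
      push_cast
      ring
    rw [Finset.sum_congr rfl this, Finset.sum_sub_distrib, gauss_sum, Finset.sum_const,
      Finset.card_range, nsmul_eq_mul]
    have hc2 : ((N-1:ℕ):ℝ) = (N:ℝ)-1 := by push_cast [Nat.cast_sub (by omega : 1 ≤ N)]; ring
    rw [hc2]
    ring
  rw [hsplit, h1, h2]; ring

lemma Tr_nonneg (hN : 2 ≤ N) (d : ℕ) : 0 ≤ Tr N d := by
  apply Finset.sum_nonneg
  intro e he
  rw [Finset.mem_Ico] at he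
  exact sr_nonneg hN (by omega)

lemma Tr_le (hN : 2 ≤ N) (d : ℕ) : Tr N d ≤ (N:ℝ)^2 := by
  rw [← sum_sr hN, Tr]
  apply Finset.sum_le_sum_of_subset_of_nonneg
  · intro e he
    rw [Finset.mem_Ico] at he; rw [Finset.mem_range]; omega
  · intro e he _
    rw [Finset.mem_range] at he
    exact sr_nonneg hN (by omega)

lemma Tr_succ (hN : 2 ≤ N) {d : ℕ} (h : d+1 < 2*N-1) :
    Tr N d = sr N (d+1) + Tr N (d+1) := by
  rw [Tr, Tr, Finset.sum_eq_sum_Ico_succ_bot h]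

lemma Tr_top (hN : 2 ≤ N) {d : ℕ} (h : 2*N-2 ≤ d) : Tr N d = 0 := by
  rw [Tr, Finset.Ico_eq_empty (by omega), Finset.sum_empty]

lemma Tr_zero (hN : 2 ≤ N) : Tr N 0 = (N:ℝ)^2 - 1 := by
  have h := sum_sr hN
  rw [Finset.range_eq_Ico, Finset.sum_eq_sum_Ico_succ_bot (by omega : 0 < 2*N-1)] at h
  have hsr0 : sr N 0 = 1 := by rw [sr, if_pos (by omega)]; norm_num
  rw [hsr0] at h
  rw [Tr]
  linarith

end FlowLemmas

section Divergence

variable {N : ℕ}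

lemma wH_top (hN : 2 ≤ N) (b : ℕ) : wH N (N-1) b = 0 := by
  rw [wH, wnum, if_neg (by omega)]
  have : (N:ℝ)-1-((N-1:ℕ):ℝ) = 0 := by
    push_cast [Nat.cast_sub (by omega : 1 ≤ N)]; ring
  rw [this, mul_zero, zero_div]

lemma wV_top (hN : 2 ≤ N) (a : ℕ) : wV N a (N-1) = 0 := by
  rw [wV, wnum, if_neg (by omega)]
  have : (N:ℝ)-1-((N-1:ℕ):ℝ) = 0 := by
    push_cast [Nat.cast_sub (by omega : 1 ≤ N)]; ring
  rw [this, mul_zero, zero_div]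

lemma outflow (hN : 2 ≤ N) {a b : ℕ} (ha : a < N) (hb : b < N) (hd : a+b ≤ 2*N-3) :
    wH N a b + wV N a b = Tr N (a+b) / ((N:ℝ)^2 * sr N (a+b)) := by
  have hNr : (N:ℝ) ≠ 0 := Nat.cast_ne_zero.mpr (by omega)
  by_cases hexp : a+b+1 < N
  · have hs1 : sr N (a+b) = (a:ℝ)+(b:ℝ)+1 := by
      rw [sr_exp (by omega : a+b < N)]; push_cast; ring
    have hs2 : sr N (a+b+1) = (a:ℝ)+(b:ℝ)+2 := by
      rw [sr_exp hexp]; push_cast; ring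
    simp only [wH, wV, wnum, if_pos hexp, hs1, hs2]
    have h1 : (a:ℝ)+(b:ℝ)+1 ≠ 0 := by positivity
    have h2 : (a:ℝ)+(b:ℝ)+2 ≠ 0 := by positivity
    field_simp
    ring
  · have hs1 : sr N (a+b) = 2*(N:ℝ)-1-((a:ℝ)+(b:ℝ)) := by
      rw [sr_contr hN (by omega) (by omega)]; push_cast; ring
    have hs2 : sr N (a+b+1) = 2*(N:ℝ)-2-((a:ℝ)+(b:ℝ)) := by
      rw [sr_contr hN (by omega) (by omega)]; push_cast; ring
    simp only [wH, wV, wnum, if_neg hexp, hs1, hs2]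
    have hab : (a:ℝ)+(b:ℝ) ≤ 2*(N:ℝ)-3 := by
      have := hd
      have h4 : ((2*N-3 : ℕ):ℝ) = 2*(N:ℝ)-3 := by
        push_cast [Nat.cast_sub (by omega : 3 ≤ 2*N)]; ring
      calc (a:ℝ)+(b:ℝ) = ((a+b:ℕ):ℝ) := by push_cast; ring
        _ ≤ ((2*N-3:ℕ):ℝ) := by exact_mod_cast hd
        _ = 2*(N:ℝ)-3 := h4
    have h1 : 2*(N:ℝ)-1-((a:ℝ)+(b:ℝ)) ≠ 0 := by
      intro h; linarith [h]
    have h2 : 2*(N:ℝ)-2-((a:ℝ)+(b:ℝ)) ≠ 0 := by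
      intro h; linarith [h]
    rw [← add_div, div_eq_div_iff (mul_ne_zero h1 h2) (mul_ne_zero (pow_ne_zero 2 hNr) h1)]
    field_simp
    ring

lemma inflow (hN : 2 ≤ N) {a b : ℕ} (ha : a < N) (hb : b < N) (hd1 : 1 ≤ a+b) :
    (if a = 0 then 0 else wH N (a-1) b) + (if b = 0 then 0 else wV N a (b-1))
      = Tr N (a+b-1) / ((N:ℝ)^2 * sr N (a+b)) := by
  have hNr : (N:ℝ) ≠ 0 := Nat.cast_ne_zero.mpr (by omega)
  by_cases ha0 : a = 0
  · subst ha0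
    obtain ⟨b', rfl⟩ : ∃ b', b = b'+1 := ⟨b-1, by omega⟩
    rw [if_pos rfl, if_neg (by omega)]
    have hs1 : sr N b' = (b':ℝ)+1 := sr_exp (by omega)
    have hs2 : sr N (b'+1) = (b':ℝ)+2 := by
      rw [sr_exp (by omega : b'+1 < N)]; push_cast; ring
    simp only [wV, wnum, zero_add, Nat.add_sub_cancel, if_pos (show b'+1 < N by omega), hs1, hs2]
    have h1 : (b':ℝ)+1 ≠ 0 := by positivity
    have h2 : (b':ℝ)+2 ≠ 0 := by positivity
    field_simp
  · by_cases hb0 : b = 0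
    · subst hb0
      obtain ⟨a', rfl⟩ : ∃ a', a = a'+1 := ⟨a-1, by omega⟩
      rw [if_neg ha0, if_pos rfl]
      have hs1 : sr N a' = (a':ℝ)+1 := sr_exp (by omega)
      have hs2 : sr N (a'+1) = (a':ℝ)+2 := by
        rw [sr_exp (by omega : a'+1 < N)]; push_cast; ring
      simp only [wH, wnum, add_zero, Nat.add_zero, Nat.add_sub_cancel,
        if_pos (show a'+1 < N by omega), hs1, hs2]
      have h1 : (a':ℝ)+1 ≠ 0 := by positivity
      have h2 : (a':ℝ)+2 ≠ 0 := by positivity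
      field_simp
    · obtain ⟨a', rfl⟩ : ∃ a', a = a'+1 := ⟨a-1, by omega⟩
      obtain ⟨b', rfl⟩ : ∃ b', b = b'+1 := ⟨b-1, by omega⟩
      rw [if_neg ha0, if_neg hb0]
      simp only [Nat.add_sub_cancel]
      have hidx1 : a'+(b'+1) = a'+b'+1 := by omega
      have hidx2 : (a'+1)+b' = a'+b'+1 := by omega
      have hidx3 : (a'+1)+(b'+1)-1 = a'+b'+1 := by omega
      have hidx4 : (a'+1)+(b'+1) = a'+b'+2 := by omega
      rw [wH, wV, hidx1, hidx2, hidx3, hidx4]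
      by_cases hreg : a'+b'+2 < N
      · have hs1 : sr N (a'+b'+1) = (a':ℝ)+(b':ℝ)+2 := by
          rw [sr_exp (by omega : a'+b'+1 < N)]; push_cast; ring
        have hs2 : sr N (a'+b'+1+1) = (a':ℝ)+(b':ℝ)+3 := by
          rw [sr_exp (by omega : a'+b'+1+1 < N)]; push_cast; ring
        have hs2' : sr N (a'+b'+2) = (a':ℝ)+(b':ℝ)+3 := by
          rw [sr_exp (by omega : a'+b'+2 < N)]; push_cast; ring
        simp only [wnum, if_pos (show a'+b'+1+1 < N by omega), hs1, hs2, hs2']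
        have h1 : (a':ℝ)+(b':ℝ)+2 ≠ 0 := by positivity
        have h2 : (a':ℝ)+(b':ℝ)+3 ≠ 0 := by positivity
        field_simp
        ring
      · have hub : a'+b'+2 ≤ 2*N-2 := by omega
        have hs1 : sr N (a'+b'+1) = 2*(N:ℝ)-2-((a':ℝ)+(b':ℝ)) := by
          rw [sr_contr hN (by omega) (by omega)]; push_cast; ring
        have hs2 : sr N (a'+b'+1+1) = 2*(N:ℝ)-3-((a':ℝ)+(b':ℝ)) := by
          rw [sr_contr hN (by omega) (by omega)]; push_cast; ring
        have hs2' : sr N (a'+b'+2) = 2*(N:ℝ)-3-((a':ℝ)+(b':ℝ)) := by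
          rw [sr_contr hN (by omega) (by omega)]; push_cast; ring
        simp only [wnum, if_neg (show ¬(a'+b'+1+1 < N) by omega), hs1, hs2, hs2']
        have hub' : (a':ℝ)+(b':ℝ) ≤ 2*(N:ℝ)-4 := by
          have h4 : ((2*N-4 : ℕ):ℝ) = 2*(N:ℝ)-4 := by
            push_cast [Nat.cast_sub (by omega : 4 ≤ 2*N)]; ring
          calc (a':ℝ)+(b':ℝ) = ((a'+b':ℕ):ℝ) := by push_cast; ring
            _ ≤ ((2*N-4:ℕ):ℝ) := by exact_mod_cast (by omega : a'+b' ≤ 2*N-4)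
            _ = 2*(N:ℝ)-4 := h4
        have h1 : 2*(N:ℝ)-2-((a':ℝ)+(b':ℝ)) ≠ 0 := by intro h; linarith
        have h2 : 2*(N:ℝ)-3-((a':ℝ)+(b':ℝ)) ≠ 0 := by intro h; linarith
        rw [← add_div, div_eq_div_iff (mul_ne_zero h1 h2) (mul_ne_zero (pow_ne_zero 2 hNr) h2)]
        field_simp
        ring

/-- Divergence identity of the corner-to-uniform unit flow. -/
lemma div_eq (hN : 2 ≤ N) {a b : ℕ} (ha : a < N) (hb : b < N) :
    wH N a b + wV N a b
      - ((if a = 0 then 0 else wH N (a-1) b) + (if b = 0 then 0 else wV N a (b-1)))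
      = (if a = 0 ∧ b = 0 then 1 else 0) - 1/(N:ℝ)^2 := by
  have hNr : (N:ℝ) ≠ 0 := Nat.cast_ne_zero.mpr (by omega)
  by_cases h00 : a = 0 ∧ b = 0
  · obtain ⟨rfl, rfl⟩ := h00
    rw [if_pos rfl, if_pos rfl, if_pos ⟨rfl, rfl⟩]
    rw [outflow hN ha hb (by omega)]
    have hsr0 : sr N (0+0) = 1 := by rw [sr, if_pos (by omega)]; norm_num
    have hTr0 : Tr N (0+0) = (N:ℝ)^2-1 := Tr_zero hN
    rw [hsr0, hTr0]
    field_simp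
    ring
  · rw [if_neg h00]
    by_cases htop : a+b = 2*N-2
    · have haN : a = N-1 := by omega
      have hbN : b = N-1 := by omega
      have hw0 : wH N a b = 0 := by rw [haN]; exact wH_top hN b
      have hv0 : wV N a b = 0 := by rw [hbN]; exact wV_top hN a
      rw [hw0, hv0, inflow hN ha hb (by omega)]
      have h1 : Tr N (a+b-1) = 1 := by
        have e1 : a+b-1+1 = 2*N-2 := by omega
        rw [Tr_succ hN (by omega : a+b-1+1 < 2*N-1), e1,
          Tr_top hN (by omega : 2*N-2 ≤ 2*N-2)]
        have : sr N (2*N-2) = 1 := by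
          rw [sr_contr hN (by omega) (by omega)]
          push_cast [Nat.cast_sub (by omega : 2 ≤ 2*N)]
          ring
        rw [this]; ring
      have h2 : sr N (a+b) = 1 := by
        rw [htop, sr_contr hN (by omega) (by omega)]
        push_cast [Nat.cast_sub (by omega : 2 ≤ 2*N)]
        ring
      rw [h1, h2]
      field_simp
      ring
    · -- interior case : 1 ≤ a+b ≤ 2N-3
      have hd1 : 1 ≤ a+b := by omega
      have hd3 : a+b ≤ 2*N-3 := by omega
      rw [outflow hN ha hb hd3, inflow hN ha hb hd1]
      have hTr : Tr N (a+b-1) = sr N (a+b) + Tr N (a+b) := by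
        have e1 : a+b-1+1 = a+b := by omega
        rw [Tr_succ hN (by omega : a+b-1+1 < 2*N-1), e1]
      rw [hTr]
      have hsr : sr N (a+b) ≠ 0 := ne_of_gt (sr_pos hN (by omega))
      field_simp
      ring

end Divergence

section KeyIdentity

lemma shift_sum (N : ℕ) (w : ℕ → ℝ) (g : ℕ → ℂ) (hw : w (N-1) = 0) (hN : 1 ≤ N) :
    ∑ a ∈ range N, (w a : ℂ) * g (a+1)
      = ∑ a ∈ range N, (if a = 0 then (0:ℂ) else (w (a-1) : ℂ)) * g a := by
  obtain ⟨M, rfl⟩ : ∃ M, N = M+1 := ⟨N-1, by omega⟩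
  rw [Finset.sum_range_succ, Finset.sum_range_succ']
  have hM : w M = 0 := by simpa using hw
  simp [hM]

lemma key_id (N : ℕ) (hN : 2 ≤ N) (f : ℕ → ℕ → ℂ) :
    (∑ a ∈ range N, ∑ b ∈ range N, (wH N a b : ℂ) * (f a b - f (a+1) b))
      + (∑ a ∈ range N, ∑ b ∈ range N, (wV N a b : ℂ) * (f a b - f a (b+1)))
      = f 0 0 - gmean N f := by
  have hH : ∑ a ∈ range N, ∑ b ∈ range N, (wH N a b : ℂ) * (f a b - f (a+1) b)
      = ∑ a ∈ range N, ∑ b ∈ range N,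
          ((wH N a b : ℂ) - (if a = 0 then 0 else (wH N (a-1) b : ℂ))) * f a b := by
    have h1 : ∀ b ∈ range N, ∑ a ∈ range N, (wH N a b : ℂ) * f (a+1) b
        = ∑ a ∈ range N, (if a = 0 then 0 else (wH N (a-1) b : ℂ)) * f a b := by
      intro b _
      exact shift_sum N (fun a => wH N a b) (fun a => f a b) (wH_top hN b) (by omega)
    calc ∑ a ∈ range N, ∑ b ∈ range N, (wH N a b : ℂ) * (f a b - f (a+1) b)
        = (∑ a ∈ range N, ∑ b ∈ range N, (wH N a b : ℂ) * f a b)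
          - ∑ a ∈ range N, ∑ b ∈ range N, (wH N a b : ℂ) * f (a+1) b := by
          rw [← Finset.sum_sub_distrib]
          apply Finset.sum_congr rfl; intro a _
          rw [← Finset.sum_sub_distrib]
          apply Finset.sum_congr rfl; intro b _
          ring
      _ = (∑ a ∈ range N, ∑ b ∈ range N, (wH N a b : ℂ) * f a b)
          - ∑ a ∈ range N, ∑ b ∈ range N, (if a = 0 then 0 else (wH N (a-1) b : ℂ)) * f a b := by
          rw [Finset.sum_comm (s := range N) (t := range N)
            (f := fun a b => (wH N a b : ℂ) * f (a+1) b)]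
          rw [Finset.sum_congr rfl h1]
          rw [Finset.sum_comm (s := range N) (t := range N)
            (f := fun b a => (if a = 0 then 0 else (wH N (a-1) b : ℂ)) * f a b)]
      _ = ∑ a ∈ range N, ∑ b ∈ range N,
            ((wH N a b : ℂ) - (if a = 0 then 0 else (wH N (a-1) b : ℂ))) * f a b := by
          rw [← Finset.sum_sub_distrib]
          apply Finset.sum_congr rfl; intro a _
          rw [← Finset.sum_sub_distrib]
          apply Finset.sum_congr rfl; intro b _
          ring
  have hV : ∑ a ∈ range N, ∑ b ∈ range N, (wV N a b : ℂ) * (f a b - f a (b+1))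
      = ∑ a ∈ range N, ∑ b ∈ range N,
          ((wV N a b : ℂ) - (if b = 0 then 0 else (wV N a (b-1) : ℂ))) * f a b := by
    apply Finset.sum_congr rfl; intro a _
    calc ∑ b ∈ range N, (wV N a b : ℂ) * (f a b - f a (b+1))
        = (∑ b ∈ range N, (wV N a b : ℂ) * f a b)
           - ∑ b ∈ range N, (wV N a b : ℂ) * f a (b+1) := by
          rw [← Finset.sum_sub_distrib]; apply Finset.sum_congr rfl; intro b _; ring
      _ = (∑ b ∈ range N, (wV N a b : ℂ) * f a b)
           - ∑ b ∈ range N, (if b = 0 then 0 else (wV N a (b-1) : ℂ)) * f a b := by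
          rw [shift_sum N (fun b => wV N a b) (fun b => f a b) (wV_top hN a) (by omega)]
      _ = ∑ b ∈ range N,
            ((wV N a b : ℂ) - (if b = 0 then 0 else (wV N a (b-1) : ℂ))) * f a b := by
          rw [← Finset.sum_sub_distrib]; apply Finset.sum_congr rfl; intro b _; ring
  rw [hH, hV, ← Finset.sum_add_distrib]
  have hmerge : ∀ a ∈ range N,
      ((∑ b ∈ range N, ((wH N a b : ℂ) - (if a = 0 then 0 else (wH N (a-1) b : ℂ))) * f a b)
       + ∑ b ∈ range N, ((wV N a b : ℂ) - (if b = 0 then 0 else (wV N a (b-1) : ℂ))) * f a b)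
      = ∑ b ∈ range N, ((if a = 0 ∧ b = 0 then f a b else 0) - f a b / (N:ℂ)^2) := by
    intro a ha
    rw [← Finset.sum_add_distrib]
    apply Finset.sum_congr rfl; intro b hb
    have hd := div_eq hN (Finset.mem_range.mp ha) (Finset.mem_range.mp hb)
    have hcast : ((wH N a b : ℂ) - (if a = 0 then 0 else (wH N (a-1) b : ℂ))) * f a b
        + ((wV N a b : ℂ) - (if b = 0 then 0 else (wV N a (b-1) : ℂ))) * f a b
        = ((wH N a b + wV N a b
            - ((if a = 0 then 0 else wH N (a-1) b) + (if b = 0 then 0 else wV N a (b-1))) : ℝ) : ℂ)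
          * f a b := by
      push_cast [apply_ite Complex.ofReal]
      ring
    rw [hcast, hd]
    push_cast [apply_ite Complex.ofReal]
    by_cases h : a = 0 ∧ b = 0
    · simp only [if_pos h]; ring
    · simp only [if_neg h]; ring
  rw [Finset.sum_congr rfl hmerge]
  have hsplit : ∑ a ∈ range N, ∑ b ∈ range N, ((if a = 0 ∧ b = 0 then f a b else 0) - f a b / (N:ℂ)^2)
      = (∑ a ∈ range N, ∑ b ∈ range N, (if a = 0 ∧ b = 0 then f a b else 0))
        - ∑ a ∈ range N, ∑ b ∈ range N, f a b / (N:ℂ)^2 := by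
    rw [← Finset.sum_sub_distrib]
    apply Finset.sum_congr rfl; intro a _
    rw [← Finset.sum_sub_distrib]
  rw [hsplit]
  have hdelta : ∑ a ∈ range N, ∑ b ∈ range N, (if a = 0 ∧ b = 0 then f a b else 0) = f 0 0 := by
    have inner : ∀ a ∈ range N, ∑ b ∈ range N, (if a = 0 ∧ b = 0 then f a b else 0)
        = if a = 0 then f a 0 else 0 := by
      intro a _
      by_cases h : a = 0
      · subst h
        simp only [true_and, if_pos]
        rw [Finset.sum_ite_eq' (range N) 0 (fun b => f 0 b)]
        rw [if_pos (Finset.mem_range.mpr (by omega))]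
      · simp [h]
    rw [Finset.sum_congr rfl inner]
    rw [Finset.sum_ite_eq' (range N) 0 (fun a => f a 0)]
    rw [if_pos (Finset.mem_range.mpr (by omega))]
  have hmean : ∑ a ∈ range N, ∑ b ∈ range N, f a b / (N:ℂ)^2 = gmean N f := by
    rw [gmean, gsum, Finset.sum_div]
    apply Finset.sum_congr rfl; intro a _
    rw [Finset.sum_div]
  rw [hdelta, hmean]

end KeyIdentity

noncomputable section EnergyDefs

def capd (N d : ℕ) : ℝ := if d+1 < N then 1/((d:ℝ)+2) else 1/(2*(N:ℝ)-1-(d:ℝ))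

end EnergyDefs

section EnergyBound

variable {N : ℕ}

lemma sr_nonneg' (hN : 2 ≤ N) {d : ℕ} (h : d ≤ 2*N-1) : 0 ≤ sr N d := by
  rcases Nat.lt_or_ge d (2*N-1) with h' | h'
  · exact sr_nonneg hN (by omega)
  · have hd : d = 2*N-1 := by omega
    subst hd
    rw [sr, if_neg (by omega)]
    have : ((2*N-1:ℕ):ℝ) = 2*(N:ℝ)-1 := by
      push_cast [Nat.cast_sub (by omega : 1 ≤ 2*N)]; ring
    rw [this]
    linarith

lemma wnum_nonneg (hN : 2 ≤ N) {a d : ℕ} (ha : a < N) : 0 ≤ wnum N a d := by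
  rw [wnum]
  by_cases h : d+1 < N
  · rw [if_pos h]; positivity
  · rw [if_neg h]
    have : (a:ℝ) ≤ (N:ℝ)-1 := by
      have : ((a:ℕ):ℝ) ≤ ((N-1:ℕ):ℝ) := by exact_mod_cast (by omega : a ≤ N-1)
      calc (a:ℝ) ≤ ((N-1:ℕ):ℝ) := this
        _ = (N:ℝ)-1 := by push_cast [Nat.cast_sub (by omega : 1 ≤ N)]; ring
    linarith

lemma wH_nonneg (hN : 2 ≤ N) {a b : ℕ} (ha : a < N) (hb : b < N) : 0 ≤ wH N a b := by
  rw [wH]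
  apply div_nonneg
  · apply mul_nonneg
    · apply div_nonneg (Tr_nonneg hN _) (by positivity)
    · exact wnum_nonneg hN ha
  · exact mul_nonneg (sr_nonneg' hN (by omega)) (sr_nonneg' hN (by omega))

lemma wV_eq_wH (N a b : ℕ) : wV N a b = wH N b a := by
  rw [wH, wV, Nat.add_comm b a]

lemma capd_nonneg (hN : 2 ≤ N) {d : ℕ} (hd : d ≤ 2*N-2) : 0 ≤ capd N d := by
  rw [capd]
  by_cases h : d+1 < N
  · rw [if_pos h]; positivity
  · rw [if_neg h]
    have : (d:ℝ) ≤ 2*(N:ℝ)-2 := by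
      calc (d:ℝ) ≤ ((2*N-2:ℕ):ℝ) := by exact_mod_cast hd
        _ = 2*(N:ℝ)-2 := by push_cast [Nat.cast_sub (by omega : 2 ≤ 2*N)]; ring
    have h2 : (0:ℝ) < 2*(N:ℝ)-1-(d:ℝ) := by linarith
    positivity

lemma wH_le_capd (hN : 2 ≤ N) {a b : ℕ} (ha : a < N) (hb : b < N) :
    wH N a b ≤ capd N (a+b) := by
  have hNr : (0:ℝ) < (N:ℝ)^2 := by positivity
  have hY0 : 0 ≤ Tr N (a+b) / (N:ℝ)^2 := div_nonneg (Tr_nonneg hN _) (le_of_lt hNr)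
  have hY1 : Tr N (a+b) / (N:ℝ)^2 ≤ 1 := by
    rw [div_le_one hNr]; exact Tr_le hN _
  by_cases hexp : a+b+1 < N
  · have hs1 : sr N (a+b) = (a:ℝ)+(b:ℝ)+1 := by
      rw [sr_exp (by omega : a+b < N)]; push_cast; ring
    have hs2 : sr N (a+b+1) = (a:ℝ)+(b:ℝ)+2 := by
      rw [sr_exp hexp]; push_cast; ring
    rw [wH, wnum, capd, if_pos hexp, if_pos hexp, hs1, hs2]
    have hcast : ((a+b:ℕ):ℝ) = (a:ℝ)+(b:ℝ) := by push_cast; ring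
    rw [hcast]
    rw [div_le_div_iff₀ (by positivity) (by positivity)]
    have hprod : Tr N (a+b) / (N:ℝ)^2 * ((a:ℝ)+1) ≤ (a:ℝ)+1 :=
      mul_le_of_le_one_left (by positivity) hY1
    nlinarith [hprod, sq_nonneg ((a:ℝ)+(b:ℝ))]
  · by_cases htop : a+b = 2*N-2
    · have ha' : a = N-1 := by omega
      rw [ha', wH_top hN b]
      exact capd_nonneg hN (by omega)
    · have hd3 : a+b ≤ 2*N-3 := by omega
      have hs1 : sr N (a+b) = 2*(N:ℝ)-1-((a:ℝ)+(b:ℝ)) := by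
        rw [sr_contr hN (by omega) (by omega)]; push_cast; ring
      have hs2 : sr N (a+b+1) = 2*(N:ℝ)-2-((a:ℝ)+(b:ℝ)) := by
        rw [sr_contr hN (by omega) (by omega)]; push_cast; ring
      have hab : (a:ℝ)+(b:ℝ) ≤ 2*(N:ℝ)-3 := by
        calc (a:ℝ)+(b:ℝ) = ((a+b:ℕ):ℝ) := by push_cast; ring
          _ ≤ ((2*N-3:ℕ):ℝ) := by exact_mod_cast hd3
          _ = 2*(N:ℝ)-3 := by push_cast [Nat.cast_sub (by omega : 3 ≤ 2*N)]; ring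
      have haN : (a:ℝ) ≤ (N:ℝ)-1 := by
        calc (a:ℝ) ≤ ((N-1:ℕ):ℝ) := by exact_mod_cast (by omega : a ≤ N-1)
          _ = (N:ℝ)-1 := by push_cast [Nat.cast_sub (by omega : 1 ≤ N)]; ring
      have hbN : (b:ℝ) ≤ (N:ℝ)-1 := by
        calc (b:ℝ) ≤ ((N-1:ℕ):ℝ) := by exact_mod_cast (by omega : b ≤ N-1)
          _ = (N:ℝ)-1 := by push_cast [Nat.cast_sub (by omega : 1 ≤ N)]; ring
      rw [wH, wnum, capd, if_neg hexp, if_neg hexp, hs1, hs2]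
      have hcast : ((a+b:ℕ):ℝ) = (a:ℝ)+(b:ℝ) := by push_cast; ring
      rw [hcast]
      have hden1 : (0:ℝ) < 2*(N:ℝ)-1-((a:ℝ)+(b:ℝ)) := by linarith
      have hden2 : (0:ℝ) < 2*(N:ℝ)-2-((a:ℝ)+(b:ℝ)) := by linarith
      rw [div_le_div_iff₀ (by positivity) (by positivity)]
      have hnum1 : (0:ℝ) ≤ (N:ℝ)-1-(a:ℝ) := by linarith
      have hnum2 : (N:ℝ)-1-(a:ℝ) ≤ 2*(N:ℝ)-2-((a:ℝ)+(b:ℝ)) := by linarith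
      have hprod : Tr N (a+b) / (N:ℝ)^2 * ((N:ℝ)-1-(a:ℝ)) ≤ (N:ℝ)-1-(a:ℝ) :=
        mul_le_of_le_one_left hnum1 hY1
      nlinarith [hprod]

lemma wV_le_capd (hN : 2 ≤ N) {a b : ℕ} (ha : a < N) (hb : b < N) :
    wV N a b ≤ capd N (a+b) := by
  rw [wV_eq_wH, Nat.add_comm a b]
  exact wH_le_capd hN hb ha

/-- Total flow energy is at most `6(1+log N)`. -/
lemma weight_energy (hN : 2 ≤ N) :
    ∑ a ∈ range N, ∑ b ∈ range N, ((wH N a b)^2 + (wV N a b)^2) ≤ 6*(1+Real.log N) := by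
  -- pointwise cap
  have hcap : ∀ a ∈ range N, ∀ b ∈ range N,
      (wH N a b)^2 + (wV N a b)^2 ≤ 2 * (capd N (a+b))^2 := by
    intro a ha b hb
    rw [Finset.mem_range] at ha hb
    have h1 := wH_le_capd hN ha hb
    have h2 := wV_le_capd hN ha hb
    have h3 := wH_nonneg hN ha hb
    have h4 : 0 ≤ wV N a b := by rw [wV_eq_wH]; exact wH_nonneg hN hb ha
    nlinarith [h1, h2, h3, h4]
  -- split into expanding and contracting parts
  set E : ℕ → ℕ → ℝ := fun a b =>
    if a+b+1 < N then 2/(((a:ℝ)+(b:ℝ)+1)*((a:ℝ)+(b:ℝ)+2)) else 0 with hE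
  set C : ℕ → ℕ → ℝ := fun a b =>
    if a+b+1 < N then 0 else 2/((2*(N:ℝ)-1-(a:ℝ)-(b:ℝ))^2) with hC
  have hsplit : ∀ a ∈ range N, ∀ b ∈ range N, 2 * (capd N (a+b))^2 ≤ E a b + C a b := by
    intro a ha b hb
    rw [Finset.mem_range] at ha hb
    rw [capd, hE, hC]
    simp only []
    have hcast : ((a+b:ℕ):ℝ) = (a:ℝ)+(b:ℝ) := by push_cast; ring
    by_cases h : a+b+1 < N
    · rw [if_pos h, if_pos h, if_pos h, hcast]
      have h1 : (0:ℝ) < (a:ℝ)+(b:ℝ)+1 := by positivity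
      have h2 : (0:ℝ) < (a:ℝ)+(b:ℝ)+2 := by positivity
      rw [add_zero, div_pow, one_pow, mul_one_div, div_le_div_iff₀ (by positivity) (by positivity)]
      nlinarith
    · rw [if_neg h, if_neg h, if_neg h, hcast, zero_add, div_pow, one_pow, mul_one_div]
      have : 2*(N:ℝ)-1-((a:ℝ)+(b:ℝ)) = 2*(N:ℝ)-1-(a:ℝ)-(b:ℝ) := by ring
      rw [this]
  -- expanding part
  have hEsum : ∑ a ∈ range N, ∑ b ∈ range N, E a b ≤ 2*(1+Real.log N) := by
    have hEb : ∀ a ∈ range N, ∑ b ∈ range N, E a b ≤ 2 * (1/((a:ℝ)+1)) := by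
      intro a _
      have step : ∀ b ∈ range N, E a b ≤ 2 * (1/(((a:ℝ)+(b:ℝ)+1)*((a:ℝ)+(b:ℝ)+2))) := by
        intro b _
        rw [hE]
        simp only []
        by_cases h : a+b+1 < N
        · rw [if_pos h]
          rw [div_eq_mul_one_div 2]
        · rw [if_neg h]
          positivity
      calc ∑ b ∈ range N, E a b
          ≤ ∑ b ∈ range N, 2 * (1/(((a:ℝ)+(b:ℝ)+1)*((a:ℝ)+(b:ℝ)+2))) :=
            Finset.sum_le_sum step
        _ = 2 * ∑ b ∈ range N, 1/(((a:ℝ)+(b:ℝ)+1)*((a:ℝ)+(b:ℝ)+2)) := by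
            rw [Finset.mul_sum]
        _ ≤ 2 * (1/((a:ℝ)+1)) := by
            have := tele_sum (a:ℝ) (by positivity) N
            linarith
    calc ∑ a ∈ range N, ∑ b ∈ range N, E a b ≤ ∑ a ∈ range N, 2 * (1/((a:ℝ)+1)) :=
          Finset.sum_le_sum hEb
      _ = 2 * ∑ a ∈ range N, (1:ℝ)/((a:ℝ)+1) := by rw [Finset.mul_sum]
      _ ≤ 2*(1+Real.log N) := by
          have := harmonic_le_log N
          linarith
  -- contracting part, via reflection
  have hCsum : ∑ a ∈ range N, ∑ b ∈ range N, C a b ≤ 4*(1+Real.log N) := by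
    have hrefl : ∑ a ∈ range N, ∑ b ∈ range N, C a b
        = ∑ a ∈ range N, ∑ b ∈ range N, C (N-1-a) (N-1-b) := by
      rw [eq_comm]
      calc ∑ a ∈ range N, ∑ b ∈ range N, C (N-1-a) (N-1-b)
          = ∑ a ∈ range N, ∑ b ∈ range N, C (N-1-a) b := by
            apply Finset.sum_congr rfl; intro a _
            exact Finset.sum_range_reflect (fun b => C (N-1-a) b) N
        _ = ∑ a ∈ range N, ∑ b ∈ range N, C a b :=
            Finset.sum_range_reflect (fun a => ∑ b ∈ range N, C a b) N
    rw [hrefl]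
    have hCb : ∀ a ∈ range N, ∀ b ∈ range N,
        C (N-1-a) (N-1-b) ≤ 4 * (1/(((a:ℝ)+(b:ℝ)+1)*((a:ℝ)+(b:ℝ)+2))) := by
      intro a ha b hb
      rw [Finset.mem_range] at ha hb
      rw [hC]
      simp only []
      have hcasta : ((N-1-a:ℕ):ℝ) = (N:ℝ)-1-(a:ℝ) := by
        push_cast [Nat.cast_sub (by omega : a ≤ N-1), Nat.cast_sub (by omega : 1 ≤ N)]; ring
      have hcastb : ((N-1-b:ℕ):ℝ) = (N:ℝ)-1-(b:ℝ) := by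
        push_cast [Nat.cast_sub (by omega : b ≤ N-1), Nat.cast_sub (by omega : 1 ≤ N)]; ring
      have h1 : (0:ℝ) < (a:ℝ)+(b:ℝ)+1 := by positivity
      have h2 : (0:ℝ) < (a:ℝ)+(b:ℝ)+2 := by positivity
      by_cases h : (N-1-a)+(N-1-b)+1 < N
      · rw [if_pos h]; positivity
      · rw [if_neg h, hcasta, hcastb]
        have hval : 2*(N:ℝ)-1-((N:ℝ)-1-(a:ℝ))-((N:ℝ)-1-(b:ℝ)) = (a:ℝ)+(b:ℝ)+1 := by ring
        rw [hval, mul_one_div, div_le_div_iff₀ (by positivity) (by positivity)]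
        nlinarith
    have hCb2 : ∀ a ∈ range N, ∑ b ∈ range N, C (N-1-a) (N-1-b) ≤ 4 * (1/((a:ℝ)+1)) := by
      intro a ha
      calc ∑ b ∈ range N, C (N-1-a) (N-1-b)
          ≤ ∑ b ∈ range N, 4 * (1/(((a:ℝ)+(b:ℝ)+1)*((a:ℝ)+(b:ℝ)+2))) :=
            Finset.sum_le_sum (fun b hb => hCb a ha b hb)
        _ = 4 * ∑ b ∈ range N, 1/(((a:ℝ)+(b:ℝ)+1)*((a:ℝ)+(b:ℝ)+2)) := by rw [Finset.mul_sum]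
        _ ≤ 4 * (1/((a:ℝ)+1)) := by
            have := tele_sum (a:ℝ) (by positivity) N
            linarith
    calc ∑ a ∈ range N, ∑ b ∈ range N, C (N-1-a) (N-1-b)
        ≤ ∑ a ∈ range N, 4 * (1/((a:ℝ)+1)) := Finset.sum_le_sum hCb2
      _ = 4 * ∑ a ∈ range N, (1:ℝ)/((a:ℝ)+1) := by rw [Finset.mul_sum]
      _ ≤ 4*(1+Real.log N) := by
          have := harmonic_le_log N
          linarith
  calc ∑ a ∈ range N, ∑ b ∈ range N, ((wH N a b)^2 + (wV N a b)^2)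
      ≤ ∑ a ∈ range N, ∑ b ∈ range N, (E a b + C a b) := by
        apply Finset.sum_le_sum; intro a ha
        apply Finset.sum_le_sum; intro b hb
        exact le_trans (hcap a ha b hb) (hsplit a ha b hb)
    _ = (∑ a ∈ range N, ∑ b ∈ range N, E a b) + ∑ a ∈ range N, ∑ b ∈ range N, C a b := by
        rw [← Finset.sum_add_distrib]
        apply Finset.sum_congr rfl; intro a _
        rw [← Finset.sum_add_distrib]
    _ ≤ 6*(1+Real.log N) := by linarith
end EnergyBound

section Corner

/-- Corner-to-mean bound: the heart of the `log N` spectral estimate. -/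
lemma corner1 (N : ℕ) (hN : 2 ≤ N) (f : ℕ → ℕ → ℂ) :
    normSq (f 0 0 - gmean N f) ≤ 12*(1+Real.log N) * gq N f := by
  obtain ⟨M, hM⟩ : ∃ M, N = M+1 := ⟨N-1, by omega⟩
  set zH : ℂ := ∑ a ∈ range (N-1), ∑ b ∈ range N, (wH N a b : ℂ) * (f a b - f (a+1) b) with hzH
  set zV : ℂ := ∑ a ∈ range N, ∑ b ∈ range (N-1), (wV N a b : ℂ) * (f a b - f a (b+1)) with hzV
  -- the restricted sums agree with the full sums
  have hfullH : ∑ a ∈ range N, ∑ b ∈ range N, (wH N a b : ℂ) * (f a b - f (a+1) b) = zH := by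
    rw [hzH, hM]
    rw [Finset.sum_range_succ]
    have htop : ∑ b ∈ range (M+1), (wH (M+1) M b : ℂ) * (f M b - f (M+1) b) = 0 := by
      apply Finset.sum_eq_zero; intro b _
      have : wH (M+1) M b = 0 := by
        have := wH_top (N := M+1) (by omega) b
        simpa using this
      rw [this]; simp
    rw [htop, add_zero]
    simp
  have hfullV : ∑ a ∈ range N, ∑ b ∈ range N, (wV N a b : ℂ) * (f a b - f a (b+1)) = zV := by
    rw [hzV, hM]
    apply Finset.sum_congr rfl; intro a _
    rw [Finset.sum_range_succ]
    have : wV (M+1) a M = 0 := by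
      have := wV_top (N := M+1) (by omega) a
      simpa using this
    rw [this]
    simp
  have hid : zH + zV = f 0 0 - gmean N f := by
    rw [← hfullH, ← hfullV]
    exact key_id N hN f
  -- Cauchy–Schwarz on each piece
  have hCSH : normSq zH
      ≤ (∑ a ∈ range (N-1), ∑ b ∈ range N, (wH N a b)^2) * hQ N f := by
    rw [hzH]
    rw [← Finset.sum_product' (range (N-1)) (range N)
      (fun a b => (wH N a b : ℂ) * (f a b - f (a+1) b))]
    calc normSq (∑ x ∈ range (N-1) ×ˢ range N, (wH N x.1 x.2 : ℂ) * (f x.1 x.2 - f (x.1+1) x.2))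
        ≤ (∑ x ∈ range (N-1) ×ˢ range N, (wH N x.1 x.2)^2)
          * (∑ x ∈ range (N-1) ×ˢ range N, normSq (f x.1 x.2 - f (x.1+1) x.2)) :=
          normSq_sum_smul_le _ _ _
      _ = (∑ a ∈ range (N-1), ∑ b ∈ range N, (wH N a b)^2) * hQ N f := by
          congr 1
          · exact Finset.sum_product' (range (N-1)) (range N) (fun a b => (wH N a b)^2)
          · rw [Finset.sum_product' (range (N-1)) (range N)
              (fun a b => normSq (f a b - f (a+1) b)), hQ]
            apply Finset.sum_congr rfl; intro a _
            apply Finset.sum_congr rfl; intro b _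
            exact normSq_comm _ _
  have hCSV : normSq zV
      ≤ (∑ a ∈ range N, ∑ b ∈ range (N-1), (wV N a b)^2) * vQ N f := by
    rw [hzV]
    rw [← Finset.sum_product' (range N) (range (N-1))
      (fun a b => (wV N a b : ℂ) * (f a b - f a (b+1)))]
    calc normSq (∑ x ∈ range N ×ˢ range (N-1), (wV N x.1 x.2 : ℂ) * (f x.1 x.2 - f x.1 (x.2+1)))
        ≤ (∑ x ∈ range N ×ˢ range (N-1), (wV N x.1 x.2)^2)
          * (∑ x ∈ range N ×ˢ range (N-1), normSq (f x.1 x.2 - f x.1 (x.2+1))) :=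
          normSq_sum_smul_le _ _ _
      _ = (∑ a ∈ range N, ∑ b ∈ range (N-1), (wV N a b)^2) * vQ N f := by
          congr 1
          · exact Finset.sum_product' (range N) (range (N-1)) (fun a b => (wV N a b)^2)
          · rw [Finset.sum_product' (range N) (range (N-1))
              (fun a b => normSq (f a b - f a (b+1))), vQ]
            apply Finset.sum_congr rfl; intro a _
            apply Finset.sum_congr rfl; intro b _
            exact normSq_comm _ _
  -- bound the weight sums by the total energy
  set W : ℝ := 6*(1+Real.log N) with hW
  have hWnn : 0 ≤ W := by
    rw [hW]
    have : (0:ℝ) ≤ Real.log N := Real.log_nonneg (by exact_mod_cast (by omega : 1 ≤ N))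
    linarith
  have hWH : ∑ a ∈ range (N-1), ∑ b ∈ range N, (wH N a b)^2 ≤ W := by
    rw [hW]
    calc ∑ a ∈ range (N-1), ∑ b ∈ range N, (wH N a b)^2
        ≤ ∑ a ∈ range N, ∑ b ∈ range N, (wH N a b)^2 := by
          apply Finset.sum_le_sum_of_subset_of_nonneg
          · intro a ha; rw [Finset.mem_range] at *; omega
          · intro a _ _; apply Finset.sum_nonneg; intro b _; positivity
      _ ≤ ∑ a ∈ range N, ∑ b ∈ range N, ((wH N a b)^2 + (wV N a b)^2) := by
          apply Finset.sum_le_sum; intro a _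
          apply Finset.sum_le_sum; intro b _
          nlinarith [sq_nonneg (wV N a b)]
      _ ≤ 6*(1+Real.log N) := weight_energy hN
  have hWV : ∑ a ∈ range N, ∑ b ∈ range (N-1), (wV N a b)^2 ≤ W := by
    rw [hW]
    calc ∑ a ∈ range N, ∑ b ∈ range (N-1), (wV N a b)^2
        ≤ ∑ a ∈ range N, ∑ b ∈ range N, (wV N a b)^2 := by
          apply Finset.sum_le_sum; intro a _
          apply Finset.sum_le_sum_of_subset_of_nonneg
          · intro b hb; rw [Finset.mem_range] at *; omega
          · intro b _ _; positivity
      _ ≤ ∑ a ∈ range N, ∑ b ∈ range N, ((wH N a b)^2 + (wV N a b)^2) := by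
          apply Finset.sum_le_sum; intro a _
          apply Finset.sum_le_sum; intro b _
          nlinarith [sq_nonneg (wH N a b)]
      _ ≤ 6*(1+Real.log N) := weight_energy hN
  have hhQ := hQ_nonneg N f
  have hvQ := vQ_nonneg N f
  have hWHnn : (0:ℝ) ≤ ∑ a ∈ range (N-1), ∑ b ∈ range N, (wH N a b)^2 := by
    apply Finset.sum_nonneg; intro a _; apply Finset.sum_nonneg; intro b _; positivity
  have hWVnn : (0:ℝ) ≤ ∑ a ∈ range N, ∑ b ∈ range (N-1), (wV N a b)^2 := by
    apply Finset.sum_nonneg; intro a _; apply Finset.sum_nonneg; intro b _; positivity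
  calc normSq (f 0 0 - gmean N f) = normSq (zH + zV) := by rw [hid]
    _ ≤ 2 * normSq zH + 2 * normSq zV := normSq_add_le _ _
    _ ≤ 2 * ((∑ a ∈ range (N-1), ∑ b ∈ range N, (wH N a b)^2) * hQ N f)
        + 2 * ((∑ a ∈ range N, ∑ b ∈ range (N-1), (wV N a b)^2) * vQ N f) := by
        linarith
    _ ≤ 2 * (W * hQ N f) + 2 * (W * vQ N f) := by
        have h1 : (∑ a ∈ range (N-1), ∑ b ∈ range N, (wH N a b)^2) * hQ N f ≤ W * hQ N f :=
          mul_le_mul_of_nonneg_right hWH hhQ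
        have h2 : (∑ a ∈ range N, ∑ b ∈ range (N-1), (wV N a b)^2) * vQ N f ≤ W * vQ N f :=
          mul_le_mul_of_nonneg_right hWV hvQ
        linarith
    _ = 2*W*gq N f := by rw [gq]; ring
    _ = 12*(1+Real.log N) * gq N f := by rw [hW]; ring

/-- Far-corner version, by reflection. -/
lemma corner2 (N : ℕ) (hN : 2 ≤ N) (f : ℕ → ℕ → ℂ) :
    normSq (f (N-1) (N-1) - gmean N f) ≤ 12*(1+Real.log N) * gq N f := by
  set g : ℕ → ℕ → ℂ := fun a b => f (N-1-a) (N-1-b) with hg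
  have hmean : gmean N g = gmean N f := by
    rw [gmean, gmean, gsum, gsum]
    congr 1
    calc ∑ a ∈ range N, ∑ b ∈ range N, g a b
        = ∑ a ∈ range N, ∑ b ∈ range N, f (N-1-a) b := by
          apply Finset.sum_congr rfl; intro a _
          exact Finset.sum_range_reflect (fun b => f (N-1-a) b) N
      _ = ∑ a ∈ range N, ∑ b ∈ range N, f a b :=
          Finset.sum_range_reflect (fun a => ∑ b ∈ range N, f a b) N
  have hhQ : hQ N g = hQ N f := by
    rw [hQ, hQ]
    calc ∑ a ∈ range (N-1), ∑ b ∈ range N, normSq (g (a+1) b - g a b)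
        = ∑ a ∈ range (N-1), ∑ b ∈ range N, normSq (f (N-1-(a+1)) b - f (N-1-a) b) := by
          apply Finset.sum_congr rfl; intro a _
          exact Finset.sum_range_reflect (fun b => normSq (f (N-1-(a+1)) b - f (N-1-a) b)) N
      _ = ∑ a ∈ range (N-1), ∑ b ∈ range N, normSq (f (a+1) b - f a b) := by
          rw [← Finset.sum_range_reflect (fun a => ∑ b ∈ range N, normSq (f (a+1) b - f a b)) (N-1)]
          apply Finset.sum_congr rfl; intro a ha
          rw [Finset.mem_range] at ha
          apply Finset.sum_congr rfl; intro b _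
          have e1 : N-1-1-a+1 = N-1-a := by omega
          have e2 : N-1-1-a = N-1-(a+1) := by omega
          rw [e1, e2]
          exact normSq_comm _ _
  have hvQ : vQ N g = vQ N f := by
    rw [vQ, vQ]
    calc ∑ a ∈ range N, ∑ b ∈ range (N-1), normSq (g a (b+1) - g a b)
        = ∑ a ∈ range N, ∑ b ∈ range (N-1), normSq (f a (N-1-(b+1)) - f a (N-1-b)) := by
          rw [← Finset.sum_range_reflect
            (fun a => ∑ b ∈ range (N-1), normSq (f a (N-1-(b+1)) - f a (N-1-b))) N]
      _ = ∑ a ∈ range N, ∑ b ∈ range (N-1), normSq (f a (b+1) - f a b) := by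
          apply Finset.sum_congr rfl; intro a _
          rw [← Finset.sum_range_reflect (fun b => normSq (f a (b+1) - f a b)) (N-1)]
          apply Finset.sum_congr rfl; intro b hb
          rw [Finset.mem_range] at hb
          have e1 : N-1-1-b+1 = N-1-b := by omega
          have e2 : N-1-1-b = N-1-(b+1) := by omega
          rw [e1, e2]
          exact normSq_comm _ _
  have hg00 : g 0 0 = f (N-1) (N-1) := by simp [hg]
  have := corner1 N hN g
  rw [hg00, hmean, gq, hhQ, hvQ, ← gq] at this
  exact this

end Corner

section Cycle

variable {p : ℕ} [NeZero p]

lemma cycle_tel (ν : ZMod p → ℂ) (r t : ZMod p) :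
    normSq (ν t - ν r) ≤ (p:ℝ) * ∑ u : ZMod p, normSq (ν (u+1) - ν u) := by
  set k := (t - r).val with hk
  have hcast : ((k:ℕ) : ZMod p) = t - r := ZMod.natCast_rightInverse (t - r)
  have htel : ν t - ν r = ∑ j ∈ range k, (ν (r + (j:ZMod p) + 1) - ν (r + (j:ZMod p))) := by
    have h := Finset.sum_range_sub (fun j : ℕ => ν (r + (j:ZMod p))) k
    have h2 : ∀ j : ℕ, ν (r + ((j+1 : ℕ):ZMod p)) = ν (r + (j:ZMod p) + 1) := by
      intro j; push_cast; ring_nf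
    calc ν t - ν r = ν (r + ((k:ℕ):ZMod p)) - ν (r + ((0:ℕ):ZMod p)) := by
          rw [hcast]; norm_num
      _ = ∑ j ∈ range k, (ν (r + ((j+1:ℕ):ZMod p)) - ν (r + (j:ZMod p))) := (by rw [h])
      _ = ∑ j ∈ range k, (ν (r + (j:ZMod p) + 1) - ν (r + (j:ZMod p))) := by
          apply Finset.sum_congr rfl; intro j _; rw [h2 j]
  rw [htel]
  have hkp : k ≤ p := le_of_lt (ZMod.val_lt (t - r))
  calc normSq (∑ j ∈ range k, (ν (r + (j:ZMod p) + 1) - ν (r + (j:ZMod p))))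
      ≤ ((range k).card : ℝ) * ∑ j ∈ range k, normSq (ν (r + (j:ZMod p) + 1) - ν (r + (j:ZMod p))) :=
        normSq_sum_le_card _ _
    _ ≤ (p:ℝ) * ∑ u : ZMod p, normSq (ν (u+1) - ν u) := by
        apply mul_le_mul
        · rw [Finset.card_range]; exact_mod_cast hkp
        · -- injective image argument
          have hinj : Set.InjOn (fun j : ℕ => r + (j:ZMod p)) (range k) := by
            intro j1 h1 j2 h2 he
            rw [Finset.coe_range, Set.mem_Iio] at h1 h2
            have : ((j1:ℕ) : ZMod p) = ((j2:ℕ) : ZMod p) := by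
              exact add_left_cancel he
            rw [ZMod.natCast_eq_natCast_iff'] at this
            rwa [Nat.mod_eq_of_lt (by omega), Nat.mod_eq_of_lt (by omega)] at this
          calc ∑ j ∈ range k, normSq (ν (r + (j:ZMod p) + 1) - ν (r + (j:ZMod p)))
              = ∑ u ∈ (range k).image (fun j : ℕ => r + (j:ZMod p)), normSq (ν (u+1) - ν u) := by
                rw [Finset.sum_image (fun x hx y hy => hinj hx hy)]
            _ ≤ ∑ u : ZMod p, normSq (ν (u+1) - ν u) := by
                apply Finset.sum_le_sum_of_subset_of_nonneg (Finset.subset_univ _)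
                intro u _ _; exact normSq_nonneg _
        · apply Finset.sum_nonneg; intro j _; exact normSq_nonneg _
        · positivity

/-- Cycle Poincaré inequality. -/
lemma cycle_poincare (ν : ZMod p → ℂ) (h0 : ∑ r : ZMod p, ν r = 0) :
    ∑ r : ZMod p, normSq (ν r) ≤ (p:ℝ)^2/2 * ∑ r : ZMod p, normSq (ν (r+1) - ν r) := by
  have hpair := sum_pair_normSq (Finset.univ : Finset (ZMod p)) ν h0
  have hcard : ((Finset.univ : Finset (ZMod p)).card : ℝ) = (p:ℝ) := by
    rw [Finset.card_univ, ZMod.card]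
  rw [hcard] at hpair
  have hbound : ∑ x : ZMod p, ∑ y : ZMod p, normSq (ν x - ν y)
      ≤ (p:ℝ)^2 * ((p:ℝ) * ∑ u : ZMod p, normSq (ν (u+1) - ν u)) := by
    calc ∑ x : ZMod p, ∑ y : ZMod p, normSq (ν x - ν y)
        ≤ ∑ _x : ZMod p, ∑ _y : ZMod p, (p:ℝ) * ∑ u : ZMod p, normSq (ν (u+1) - ν u) := by
          apply Finset.sum_le_sum; intro x _
          apply Finset.sum_le_sum; intro y _
          exact cycle_tel ν y x
      _ = (p:ℝ)^2 * ((p:ℝ) * ∑ u : ZMod p, normSq (ν (u+1) - ν u)) := by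
          rw [Finset.sum_const, Finset.sum_const, Finset.card_univ, ZMod.card, nsmul_eq_mul,
            nsmul_eq_mul]
          ring
  have hp : (0:ℝ) < (p:ℝ) := by
    have : 0 < p := Nat.pos_of_ne_zero (NeZero.ne p)
    exact_mod_cast this
  nlinarith [hpair, hbound]

end Cycle

noncomputable section PathEnt

/-- Nat-level path Laplacian entry. -/
def pent (N i j : ℕ) : ℂ :=
  if i = j then ((if i = 0 then 0 else 1) + (if i = N-1 then 0 else 1))
  else if i+1 = j ∨ j+1 = i then -1 else 0

end PathEnt

section OneD

lemma pent_decomp (N i j : ℕ) :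
    pent N i j = (if j = i then ((if i = 0 then (0:ℂ) else 1) + (if i = N-1 then 0 else 1)) else 0)
      + (if j = i+1 then -1 else 0) + (if i = j+1 then -1 else 0) := by
  rw [pent]
  by_cases h1 : i = j
  · subst h1
    rw [if_pos rfl, if_pos rfl]
    rw [if_neg (show ¬(i = i+1) by omega)]
    ring
  · rw [if_neg h1]
    by_cases h2 : i+1 = j
    · rw [if_pos (Or.inl h2), if_neg (show ¬(j = i) by omega),
        if_pos (show j = i+1 by omega), if_neg (show ¬(i = j+1) by omega)]
      ring
    · by_cases h3 : j+1 = i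
      · rw [if_pos (Or.inr h3), if_neg (show ¬(j = i) by omega),
          if_neg (show ¬(j = i+1) by omega), if_pos (show i = j+1 by omega)]
        ring
      · rw [if_neg (fun h => h.elim h2 h3), if_neg (fun hh => h1 hh.symm),
          if_neg (show ¬(j = i+1) by omega), if_neg (show ¬(i = j+1) by omega)]
        ring

lemma oneD_inner (N : ℕ) (hN : 2 ≤ N) (G : ℕ → ℂ) {i : ℕ} (hi : i < N) :
    ∑ j ∈ range N, pent N i j * G j
      = ((if i = 0 then (0:ℂ) else 1) + (if i = N-1 then 0 else 1)) * G i
        - (if i+1 < N then G (i+1) else 0) - (if i = 0 then 0 else G (i-1)) := by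
  have hsplit : ∀ j, pent N i j * G j
      = (if j = i then ((if i = 0 then (0:ℂ) else 1) + (if i = N-1 then 0 else 1)) * G j else 0)
        + (if j = i+1 then -G j else 0) + (if i = j+1 then -G j else 0) := by
    intro j
    rw [pent_decomp]
    simp only [add_mul, ite_mul, zero_mul, neg_one_mul]
  rw [Finset.sum_congr rfl (fun j _ => hsplit j)]
  rw [Finset.sum_add_distrib, Finset.sum_add_distrib]
  have t1 : ∑ j ∈ range N, (if j = i then ((if i = 0 then (0:ℂ) else 1) + (if i = N-1 then 0 else 1)) * G j else 0)
      = ((if i = 0 then (0:ℂ) else 1) + (if i = N-1 then 0 else 1)) * G i := by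
    rw [Finset.sum_ite_eq' (range N) i, if_pos (Finset.mem_range.mpr hi)]
  have t2 : ∑ j ∈ range N, (if j = i+1 then -G j else 0) = -(if i+1 < N then G (i+1) else 0) := by
    rw [Finset.sum_ite_eq' (range N) (i+1) (fun j => -G j)]
    by_cases h : i+1 < N
    · rw [if_pos (Finset.mem_range.mpr h), if_pos h]
    · rw [if_neg (fun hc => h (Finset.mem_range.mp hc)), if_neg h, neg_zero]
  have t3 : ∑ j ∈ range N, (if i = j+1 then -G j else 0) = -(if i = 0 then 0 else G (i-1)) := by
    rcases Nat.eq_zero_or_pos i with h | h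
    · subst h
      rw [if_pos rfl, neg_zero]
      apply Finset.sum_eq_zero; intro j _
      rw [if_neg (by omega)]
    · obtain ⟨m, rfl⟩ : ∃ m, i = m+1 := ⟨i-1, by omega⟩
      have hiff : ∀ j, (if m+1 = j+1 then -G j else 0) = (if j = m then -G j else 0) := by
        intro j
        by_cases h : j = m
        · rw [if_pos (by omega), if_pos h]
        · rw [if_neg (by omega), if_neg h]
      calc ∑ j ∈ range N, (if m+1 = j+1 then -G j else 0)
          = ∑ j ∈ range N, (if j = m then -G j else 0) :=
            Finset.sum_congr rfl (fun j _ => hiff j)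
        _ = -(if m+1 = 0 then 0 else G (m+1-1)) := by
            rw [Finset.sum_ite_eq' (range N) m (fun j => -G j),
              if_pos (Finset.mem_range.mpr (by omega)), if_neg (by omega)]
            simp
  rw [t1, t2, t3]
  ring

/-- 1D path energy identity. -/
lemma oneD_energy (N : ℕ) (hN : 2 ≤ N) (G : ℕ → ℂ) :
    ∑ i ∈ range N, (starRingEnd ℂ) (G i) * (∑ j ∈ range N, pent N i j * G j)
      = ((∑ i ∈ range (N-1), normSq (G (i+1) - G i) : ℝ) : ℂ) := by
  obtain ⟨M, rfl⟩ : ∃ M, N = M+1 := ⟨N-1, by omega⟩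
  have hMM : M+1-1 = M := by omega
  have halg : ∀ i ∈ range (M+1),
      (starRingEnd ℂ) (G i) * (∑ j ∈ range (M+1), pent (M+1) i j * G j)
      = ((if i = 0 then (0:ℂ) else 1) * ((starRingEnd ℂ) (G i) * G i)
          + (if i = M then (0:ℂ) else 1) * ((starRingEnd ℂ) (G i) * G i))
        - (starRingEnd ℂ) (G i) * (if i+1 < M+1 then G (i+1) else 0)
        - (starRingEnd ℂ) (G i) * (if i = 0 then 0 else G (i-1)) := by
    intro i hi
    rw [oneD_inner (M+1) hN G (Finset.mem_range.mp hi), hMM]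
    ring
  rw [Finset.sum_congr rfl halg]
  rw [Finset.sum_sub_distrib, Finset.sum_sub_distrib, Finset.sum_add_distrib]
  have A1 : ∑ i ∈ range (M+1), (if i = 0 then (0:ℂ) else 1) * ((starRingEnd ℂ) (G i) * G i)
      = ∑ i ∈ range M, (starRingEnd ℂ) (G (i+1)) * G (i+1) := by
    rw [Finset.sum_range_succ']
    simp
  have A2 : ∑ i ∈ range (M+1), (if i = M then (0:ℂ) else 1) * ((starRingEnd ℂ) (G i) * G i)
      = ∑ i ∈ range M, (starRingEnd ℂ) (G i) * G i := by
    rw [Finset.sum_range_succ, if_pos rfl, zero_mul, add_zero]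
    apply Finset.sum_congr rfl; intro i hi
    rw [Finset.mem_range] at hi
    rw [if_neg (by omega), one_mul]
  have B1 : ∑ i ∈ range (M+1), (starRingEnd ℂ) (G i) * (if i+1 < M+1 then G (i+1) else 0)
      = ∑ i ∈ range M, (starRingEnd ℂ) (G i) * G (i+1) := by
    rw [Finset.sum_range_succ, if_neg (by omega), mul_zero, add_zero]
    apply Finset.sum_congr rfl; intro i hi
    rw [Finset.mem_range] at hi
    rw [if_pos (by omega)]
  have C1 : ∑ i ∈ range (M+1), (starRingEnd ℂ) (G i) * (if i = 0 then 0 else G (i-1))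
      = ∑ i ∈ range M, (starRingEnd ℂ) (G (i+1)) * G i := by
    rw [Finset.sum_range_succ']
    simp
  rw [A1, A2, B1, C1, hMM]
  rw [← Finset.sum_add_distrib, ← Finset.sum_sub_distrib, ← Finset.sum_sub_distrib]
  push_cast
  apply Finset.sum_congr rfl; intro i _
  have hc : ((normSq (G (i+1) - G i) : ℝ) : ℂ) = (G (i+1) - G i) * (starRingEnd ℂ) (G (i+1) - G i) :=
    (Complex.mul_conj _).symm
  rw [hc, map_sub]
  ring

end OneD

section MatrixEnergy

variable {p N : ℕ}

lemma dot_expand [NeZero p] (M : Matrix (Idx p N) (Idx p N) ℂ) (ψ : Idx p N → ℂ) :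
    star ψ ⬝ᵥ (M *ᵥ ψ) = ∑ x : Idx p N, (starRingEnd ℂ) (ψ x) * ∑ y : Idx p N, M x y * ψ y := by
  simp [dotProduct, Matrix.mulVec, Complex.star_def]

lemma Amat_apply (x y : Idx p N) :
    Amat p N x y = if x.1 = y.1 ∧ x.2.2 = y.2.2 then pent N (x.2.1:ℕ) (y.2.1:ℕ) else 0 := by
  rw [Amat, Matrix.of_apply]
  by_cases h : x.1 = y.1 ∧ x.2.2 = y.2.2
  · rw [if_pos h, if_pos h, pent]
    by_cases h2 : x.2.1 = y.2.1
    · rw [if_pos h2, if_pos (show ((x.2.1:ℕ) = (y.2.1:ℕ)) from congrArg Fin.val h2), degA]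
    · rw [if_neg h2, if_neg (fun hv => h2 (Fin.ext hv))]
  · rw [if_neg h, if_neg h]

lemma Bmat_apply (x y : Idx p N) :
    Bmat p N x y = if x.1 = y.1 ∧ x.2.1 = y.2.1 then pent N (x.2.2:ℕ) (y.2.2:ℕ) else 0 := by
  rw [Bmat, Matrix.of_apply]
  by_cases h : x.1 = y.1 ∧ x.2.1 = y.2.1
  · rw [if_pos h, if_pos h, pent]
    by_cases h2 : x.2.2 = y.2.2
    · rw [if_pos h2, if_pos (show ((x.2.2:ℕ) = (y.2.2:ℕ)) from congrArg Fin.val h2), degA]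
    · rw [if_neg h2, if_neg (fun hv => h2 (Fin.ext hv))]
  · rw [if_neg h, if_neg h]

lemma A_energy [NeZero p] (hN : 2 ≤ N) (ψ : Idx p N → ℂ) (Ψ : ZMod p → ℕ → ℕ → ℂ)
    (hΨ : ∀ (r : ZMod p) (a b : Fin N), ψ (r, a, b) = Ψ r a.val b.val) :
    star ψ ⬝ᵥ (Amat p N *ᵥ ψ)
      = ((∑ r : ZMod p, ∑ b ∈ range N, ∑ i ∈ range (N-1),
          normSq (Ψ r (i+1) b - Ψ r i b) : ℝ) : ℂ) := by
  rw [dot_expand]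
  have hinner : ∀ x : Idx p N, (∑ y : Idx p N, Amat p N x y * ψ y)
      = ∑ a' : Fin N, pent N (x.2.1:ℕ) (a':ℕ) * Ψ x.1 (a':ℕ) (x.2.2:ℕ) := by
    intro x
    rw [Fintype.sum_prod_type]
    rw [Fintype.sum_eq_single x.1 (fun r' hr' => Finset.sum_eq_zero (fun z _ => by
      rw [Amat_apply, if_neg (fun hc => hr' hc.1.symm), zero_mul]))]
    rw [Fintype.sum_prod_type]
    apply Finset.sum_congr rfl; intro a' _
    have key : ∀ b' : Fin N, Amat p N x (x.1, a', b') * ψ (x.1, a', b')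
        = if x.2.2 = b' then pent N (x.2.1:ℕ) (a':ℕ) * ψ (x.1, a', b') else 0 := by
      intro b'
      rw [Amat_apply]
      by_cases h : x.2.2 = b'
      · rw [if_pos ⟨rfl, h⟩, if_pos h]
      · rw [if_neg (fun hc => h hc.2), if_neg h, zero_mul]
    rw [Finset.sum_congr rfl (fun b' _ => key b')]
    rw [Fintype.sum_ite_eq x.2.2 (fun b' => pent N (x.2.1:ℕ) (a':ℕ) * ψ (x.1, a', b'))]
    rw [hΨ]
  simp only [hinner]
  rw [Fintype.sum_prod_type]
  have houter : ∀ r : ZMod p,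
      (∑ z : Fin N × Fin N, (starRingEnd ℂ) (ψ (r, z))
        * ∑ a' : Fin N, pent N ((r,z).2.1:ℕ) (a':ℕ) * Ψ (r,z).1 (a':ℕ) ((r,z).2.2:ℕ))
      = ((∑ b ∈ range N, ∑ i ∈ range (N-1), normSq (Ψ r (i+1) b - Ψ r i b) : ℝ) : ℂ) := by
    intro r
    rw [Fintype.sum_prod_type]
    rw [Finset.sum_comm]
    have hperb : ∀ b : Fin N,
        (∑ a : Fin N, (starRingEnd ℂ) (ψ (r, a, b))
          * ∑ a' : Fin N, pent N (a:ℕ) (a':ℕ) * Ψ r (a':ℕ) (b:ℕ))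
        = ((∑ i ∈ range (N-1), normSq (Ψ r (i+1) (b:ℕ) - Ψ r i (b:ℕ)) : ℝ) : ℂ) := by
      intro b
      have hin : ∀ a : Fin N, (∑ a' : Fin N, pent N (a:ℕ) (a':ℕ) * Ψ r (a':ℕ) (b:ℕ))
          = ∑ j ∈ range N, pent N (a:ℕ) j * Ψ r j (b:ℕ) :=
        fun a => Fin.sum_univ_eq_sum_range (fun j => pent N (a:ℕ) j * Ψ r j (b:ℕ)) N
      calc ∑ a : Fin N, (starRingEnd ℂ) (ψ (r, a, b))
            * ∑ a' : Fin N, pent N (a:ℕ) (a':ℕ) * Ψ r (a':ℕ) (b:ℕ)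
          = ∑ a : Fin N, (starRingEnd ℂ) (Ψ r (a:ℕ) (b:ℕ))
            * ∑ j ∈ range N, pent N (a:ℕ) j * Ψ r j (b:ℕ) := by
            apply Finset.sum_congr rfl; intro a _
            rw [hin a, hΨ]
        _ = ∑ i ∈ range N, (starRingEnd ℂ) (Ψ r i (b:ℕ))
            * ∑ j ∈ range N, pent N i j * Ψ r j (b:ℕ) :=
            Fin.sum_univ_eq_sum_range
              (fun i => (starRingEnd ℂ) (Ψ r i (b:ℕ)) * ∑ j ∈ range N, pent N i j * Ψ r j (b:ℕ)) N
        _ = ((∑ i ∈ range (N-1), normSq (Ψ r (i+1) (b:ℕ) - Ψ r i (b:ℕ)) : ℝ) : ℂ) :=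
            oneD_energy N hN (fun i => Ψ r i (b:ℕ))
    calc ∑ b : Fin N, ∑ a : Fin N, (starRingEnd ℂ) (ψ (r, a, b))
          * ∑ a' : Fin N, pent N (a:ℕ) (a':ℕ) * Ψ r (a':ℕ) (b:ℕ)
        = ∑ b : Fin N, ((∑ i ∈ range (N-1), normSq (Ψ r (i+1) (b:ℕ) - Ψ r i (b:ℕ)) : ℝ) : ℂ) :=
          Finset.sum_congr rfl (fun b _ => hperb b)
      _ = ∑ b ∈ range N, ((∑ i ∈ range (N-1), normSq (Ψ r (i+1) b - Ψ r i b) : ℝ) : ℂ) :=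
          Fin.sum_univ_eq_sum_range
            (fun b => ((∑ i ∈ range (N-1), normSq (Ψ r (i+1) b - Ψ r i b) : ℝ) : ℂ)) N
      _ = ((∑ b ∈ range N, ∑ i ∈ range (N-1), normSq (Ψ r (i+1) b - Ψ r i b) : ℝ) : ℂ) := by
          push_cast
          rfl
  rw [Finset.sum_congr rfl (fun r _ => houter r)]
  push_cast
  rfl

lemma B_energy [NeZero p] (hN : 2 ≤ N) (ψ : Idx p N → ℂ) (Ψ : ZMod p → ℕ → ℕ → ℂ)
    (hΨ : ∀ (r : ZMod p) (a b : Fin N), ψ (r, a, b) = Ψ r a.val b.val) :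
    star ψ ⬝ᵥ (Bmat p N *ᵥ ψ)
      = ((∑ r : ZMod p, ∑ a ∈ range N, ∑ i ∈ range (N-1),
          normSq (Ψ r a (i+1) - Ψ r a i) : ℝ) : ℂ) := by
  rw [dot_expand]
  have hinner : ∀ x : Idx p N, (∑ y : Idx p N, Bmat p N x y * ψ y)
      = ∑ b' : Fin N, pent N (x.2.2:ℕ) (b':ℕ) * Ψ x.1 (x.2.1:ℕ) (b':ℕ) := by
    intro x
    rw [Fintype.sum_prod_type]
    rw [Fintype.sum_eq_single x.1 (fun r' hr' => Finset.sum_eq_zero (fun z _ => by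
      rw [Bmat_apply, if_neg (fun hc => hr' hc.1.symm), zero_mul]))]
    rw [Fintype.sum_prod_type]
    rw [Fintype.sum_eq_single x.2.1 (fun a' ha' => Finset.sum_eq_zero (fun b' _ => by
      rw [Bmat_apply, if_neg (fun hc => ha' hc.2.symm), zero_mul]))]
    apply Finset.sum_congr rfl; intro b' _
    rw [Bmat_apply, if_pos ⟨rfl, rfl⟩, hΨ]
  simp only [hinner]
  rw [Fintype.sum_prod_type]
  have houter : ∀ r : ZMod p,
      (∑ z : Fin N × Fin N, (starRingEnd ℂ) (ψ (r, z))
        * ∑ b' : Fin N, pent N ((r,z).2.2:ℕ) (b':ℕ) * Ψ (r,z).1 ((r,z).2.1:ℕ) (b':ℕ))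
      = ((∑ a ∈ range N, ∑ i ∈ range (N-1), normSq (Ψ r a (i+1) - Ψ r a i) : ℝ) : ℂ) := by
    intro r
    rw [Fintype.sum_prod_type]
    have hpera : ∀ a : Fin N,
        (∑ b : Fin N, (starRingEnd ℂ) (ψ (r, a, b))
          * ∑ b' : Fin N, pent N (b:ℕ) (b':ℕ) * Ψ r (a:ℕ) (b':ℕ))
        = ((∑ i ∈ range (N-1), normSq (Ψ r (a:ℕ) (i+1) - Ψ r (a:ℕ) i) : ℝ) : ℂ) := by
      intro a
      have hin : ∀ b : Fin N, (∑ b' : Fin N, pent N (b:ℕ) (b':ℕ) * Ψ r (a:ℕ) (b':ℕ))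
          = ∑ j ∈ range N, pent N (b:ℕ) j * Ψ r (a:ℕ) j :=
        fun b => Fin.sum_univ_eq_sum_range (fun j => pent N (b:ℕ) j * Ψ r (a:ℕ) j) N
      calc ∑ b : Fin N, (starRingEnd ℂ) (ψ (r, a, b))
            * ∑ b' : Fin N, pent N (b:ℕ) (b':ℕ) * Ψ r (a:ℕ) (b':ℕ)
          = ∑ b : Fin N, (starRingEnd ℂ) (Ψ r (a:ℕ) (b:ℕ))
            * ∑ j ∈ range N, pent N (b:ℕ) j * Ψ r (a:ℕ) j := by
            apply Finset.sum_congr rfl; intro b _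
            rw [hin b, hΨ]
        _ = ∑ i ∈ range N, (starRingEnd ℂ) (Ψ r (a:ℕ) i)
            * ∑ j ∈ range N, pent N i j * Ψ r (a:ℕ) j :=
            Fin.sum_univ_eq_sum_range
              (fun i => (starRingEnd ℂ) (Ψ r (a:ℕ) i) * ∑ j ∈ range N, pent N i j * Ψ r (a:ℕ) j) N
        _ = ((∑ i ∈ range (N-1), normSq (Ψ r (a:ℕ) (i+1) - Ψ r (a:ℕ) i) : ℝ) : ℂ) :=
            oneD_energy N hN (fun i => Ψ r (a:ℕ) i)
    calc ∑ a : Fin N, ∑ b : Fin N, (starRingEnd ℂ) (ψ (r, a, b))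
          * ∑ b' : Fin N, pent N (b:ℕ) (b':ℕ) * Ψ r (a:ℕ) (b':ℕ)
        = ∑ a : Fin N, ((∑ i ∈ range (N-1), normSq (Ψ r (a:ℕ) (i+1) - Ψ r (a:ℕ) i) : ℝ) : ℂ) :=
          Finset.sum_congr rfl (fun a _ => hpera a)
      _ = ∑ a ∈ range N, ((∑ i ∈ range (N-1), normSq (Ψ r a (i+1) - Ψ r a i) : ℝ) : ℂ) :=
          Fin.sum_univ_eq_sum_range
            (fun a => ((∑ i ∈ range (N-1), normSq (Ψ r a (i+1) - Ψ r a i) : ℝ) : ℂ)) N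
      _ = ((∑ a ∈ range N, ∑ i ∈ range (N-1), normSq (Ψ r a (i+1) - Ψ r a i) : ℝ) : ℂ) := by
          push_cast
          rfl
  rw [Finset.sum_congr rfl (fun r _ => houter r)]
  push_cast
  rfl

lemma C_energy [NeZero p] (hN : 2 ≤ N) (ψ : Idx p N → ℂ) :
    star ψ ⬝ᵥ (Cmat p N *ᵥ ψ)
      = ((∑ s : ZMod p, normSq (ψ (s, ⟨N-1, by omega⟩, ⟨N-1, by omega⟩)
          - ψ (s+1, ⟨0, by omega⟩, ⟨0, by omega⟩)) : ℝ) : ℂ) := by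
  set topN : Fin N := ⟨N-1, by omega⟩ with htopN
  set botN : Fin N := ⟨0, by omega⟩ with hbotN
  rw [dot_expand]
  have hC : ∀ x y : Idx p N, Cmat p N x y
      = ∑ s : ZMod p, cvec p N s x * (starRingEnd ℂ) (cvec p N s y) := by
    intro x y
    rw [Cmat]
    rw [Matrix.sum_apply]
    apply Finset.sum_congr rfl; intro s _
    rw [Matrix.vecMulVec_apply]
    rfl
  have hswap : ∑ x : Idx p N, (starRingEnd ℂ) (ψ x) * ∑ y : Idx p N, Cmat p N x y * ψ y
      = ∑ s : ZMod p, (∑ x : Idx p N, (starRingEnd ℂ) (ψ x) * cvec p N s x)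
          * (∑ y : Idx p N, (starRingEnd ℂ) (cvec p N s y) * ψ y) := by
    calc ∑ x : Idx p N, (starRingEnd ℂ) (ψ x) * ∑ y : Idx p N, Cmat p N x y * ψ y
        = ∑ x : Idx p N, ∑ y : Idx p N, (starRingEnd ℂ) (ψ x) * (Cmat p N x y * ψ y) := by
          apply Finset.sum_congr rfl; intro x _
          rw [Finset.mul_sum]
      _ = ∑ x : Idx p N, ∑ y : Idx p N, ∑ s : ZMod p,
            (starRingEnd ℂ) (ψ x) * cvec p N s x * ((starRingEnd ℂ) (cvec p N s y) * ψ y) := by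
          apply Finset.sum_congr rfl; intro x _
          apply Finset.sum_congr rfl; intro y _
          rw [hC, Finset.sum_mul, Finset.mul_sum]
          apply Finset.sum_congr rfl; intro s _
          ring
      _ = ∑ s : ZMod p, ∑ x : Idx p N, ∑ y : Idx p N,
            (starRingEnd ℂ) (ψ x) * cvec p N s x * ((starRingEnd ℂ) (cvec p N s y) * ψ y) := by
          rw [Finset.sum_congr rfl
            (fun x (_ : x ∈ Finset.univ) => Finset.sum_comm (s := Finset.univ) (t := Finset.univ)
              (f := fun y s => (starRingEnd ℂ) (ψ x) * cvec p N s x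
                * ((starRingEnd ℂ) (cvec p N s y) * ψ y)))]
          exact Finset.sum_comm
      _ = ∑ s : ZMod p, (∑ x : Idx p N, (starRingEnd ℂ) (ψ x) * cvec p N s x)
          * (∑ y : Idx p N, (starRingEnd ℂ) (cvec p N s y) * ψ y) := by
          apply Finset.sum_congr rfl; intro s _
          rw [Finset.sum_mul]
          apply Finset.sum_congr rfl; intro x _
          rw [Finset.mul_sum]
  rw [hswap]
  have hz : ∀ s : ZMod p, (∑ y : Idx p N, (starRingEnd ℂ) (cvec p N s y) * ψ y)
      = ψ (s, topN, topN) - ψ (s+1, botN, botN) := by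
    intro s
    have hcv : ∀ y : Idx p N, (starRingEnd ℂ) (cvec p N s y) * ψ y
        = (if y = (s, topN, topN) then ψ y else 0) - (if y = (s+1, botN, botN) then ψ y else 0) := by
      intro y
      rw [cvec]
      have hc1 : (y.1 = s ∧ (y.2.1:ℕ) = N-1 ∧ (y.2.2:ℕ) = N-1) ↔ y = (s, topN, topN) := by
        constructor
        · rintro ⟨h1, h2, h3⟩
          obtain ⟨y1, y2, y3⟩ := y
          simp only at h1 h2 h3
          rw [h1, htopN]
          exact congrArg (Prod.mk s) (congrArg₂ Prod.mk (Fin.ext h2) (Fin.ext h3))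
        · rintro rfl
          exact ⟨rfl, rfl, rfl⟩
      have hc2 : (y.1 = s + 1 ∧ (y.2.1:ℕ) = 0 ∧ (y.2.2:ℕ) = 0) ↔ y = (s+1, botN, botN) := by
        constructor
        · rintro ⟨h1, h2, h3⟩
          obtain ⟨y1, y2, y3⟩ := y
          simp only at h1 h2 h3
          rw [h1, hbotN]
          exact congrArg (Prod.mk (s+1)) (congrArg₂ Prod.mk (Fin.ext h2) (Fin.ext h3))
        · rintro rfl
          exact ⟨rfl, rfl, rfl⟩
      rw [map_sub]
      rw [apply_ite (starRingEnd ℂ), apply_ite (starRingEnd ℂ)]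
      simp only [_root_.map_one, _root_.map_zero]
      rw [if_congr hc1 rfl rfl, if_congr hc2 rfl rfl]
      by_cases h1 : y = (s, topN, topN)
      · have h2 : ¬(y = (s+1, botN, botN)) := by
          rw [h1]
          intro hc
          have hval := congrArg (fun z : Idx p N => (z.2.1 : ℕ)) hc
          simp only [htopN, hbotN] at hval
          omega
        simp only [if_pos h1, if_neg h2]
        ring
      · by_cases h2 : y = (s+1, botN, botN)
        · simp only [if_neg h1, if_pos h2]
          ring
        · simp only [if_neg h1, if_neg h2]
          ring
    rw [Finset.sum_congr rfl (fun y _ => hcv y), Finset.sum_sub_distrib]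
    rw [Finset.sum_ite_eq' Finset.univ ((s, topN, topN) : Idx p N) ψ]
    rw [Finset.sum_ite_eq' Finset.univ ((s+1, botN, botN) : Idx p N) ψ]
    simp
  have hzc : ∀ s : ZMod p, (∑ x : Idx p N, (starRingEnd ℂ) (ψ x) * cvec p N s x)
      = (starRingEnd ℂ) (ψ (s, topN, topN) - ψ (s+1, botN, botN)) := by
    intro s
    rw [← hz s, _root_.map_sum]
    apply Finset.sum_congr rfl; intro y _
    rw [_root_.map_mul, Complex.conj_conj]
    ring
  calc ∑ s : ZMod p, (∑ x : Idx p N, (starRingEnd ℂ) (ψ x) * cvec p N s x)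
        * (∑ y : Idx p N, (starRingEnd ℂ) (cvec p N s y) * ψ y)
      = ∑ s : ZMod p, ((normSq (ψ (s, topN, topN) - ψ (s+1, botN, botN)) : ℝ) : ℂ) := by
        apply Finset.sum_congr rfl; intro s _
        rw [hzc s, hz s, ← Complex.mul_conj]
        ring
    _ = ((∑ s : ZMod p, normSq (ψ (s, topN, topN) - ψ (s+1, botN, botN)) : ℝ) : ℂ) := by
        push_cast
        rfl

end MatrixEnergy
/-- there is a universal c > 0 such that for all p ≥ 1, N ≥ 2, every vector
ψ orthogonal to the all-ones vector satisfies
⟨ψ, H_{p,N} ψ⟩ ≥ c‖ψ‖²/(p²N² log N). -/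
theorem stmt3 : ∃ c : ℝ, 0 < c ∧
    ∀ (p N : ℕ) [NeZero p], 2 ≤ N → ∀ ψ : Idx p N → ℂ, (∑ x, ψ x) = 0 →
      c * (∑ x, ‖ψ x‖^2) / ((p : ℝ)^2 * (N : ℝ)^2 * Real.log N)
        ≤ (star ψ ⬝ᵥ (Hpn p N *ᵥ ψ)).re := by
  refine ⟨1/120, by norm_num, ?_⟩
  intro p N _ hN ψ hψ0
  have hp0 : 0 < p := Nat.pos_of_ne_zero (NeZero.ne p)
  set Ψ : ZMod p → ℕ → ℕ → ℂ :=
    fun r a b => if h : a < N ∧ b < N then ψ (r, ⟨a, h.1⟩, ⟨b, h.2⟩) else 0 with hΨdef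
  have hΨ : ∀ (r : ZMod p) (a b : Fin N), ψ (r, a, b) = Ψ r a.val b.val := by
    intro r a b
    rw [hΨdef]
    simp only [dif_pos (And.intro a.isLt b.isLt), Fin.eta]
  -- energy identity
  have hA := A_energy hN ψ Ψ hΨ
  have hB := B_energy hN ψ Ψ hΨ
  have hC := C_energy hN ψ
  have hC' : star ψ ⬝ᵥ (Cmat p N *ᵥ ψ)
      = ((∑ s : ZMod p, normSq (Ψ s (N-1) (N-1) - Ψ (s+1) 0 0) : ℝ) : ℂ) := by
    rw [hC]
    congr 1
    apply Finset.sum_congr rfl; intro s _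
    rw [hΨ, hΨ]
  have hHψ : star ψ ⬝ᵥ (Hpn p N *ᵥ ψ)
      = (star ψ ⬝ᵥ (Amat p N *ᵥ ψ)) + (star ψ ⬝ᵥ (Bmat p N *ᵥ ψ))
        + (star ψ ⬝ᵥ (Cmat p N *ᵥ ψ)) := by
    rw [Hpn, Matrix.add_mulVec, Matrix.add_mulVec, dotProduct_add, dotProduct_add]
  set QG : ℝ := ∑ r : ZMod p, gq N (Ψ r) with hQG
  set QC : ℝ := ∑ s : ZMod p, normSq (Ψ s (N-1) (N-1) - Ψ (s+1) 0 0) with hQCs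
  have hre : (star ψ ⬝ᵥ (Hpn p N *ᵥ ψ)).re = QG + QC := by
    rw [hHψ, hA, hB, hC']
    rw [Complex.add_re, Complex.add_re, Complex.ofReal_re, Complex.ofReal_re, Complex.ofReal_re]
    rw [hQG, hQCs]
    congr 1
    rw [← Finset.sum_add_distrib]
    apply Finset.sum_congr rfl; intro r _
    rw [gq, hQ, vQ]
    congr 1
    exact Finset.sum_comm
  -- norm decomposition
  have hcard : (((range N ×ˢ range N).card : ℕ) : ℝ) = (N:ℝ)^2 := by
    rw [Finset.card_product, Finset.card_range]; push_cast; ring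
  set μ : ZMod p → ℂ := fun r => gmean N (Ψ r) with hμdef
  have hS : (∑ x : Idx p N, ‖ψ x‖^2)
      = ∑ r : ZMod p, ∑ x ∈ range N ×ˢ range N, normSq (Ψ r x.1 x.2) := by
    rw [Fintype.sum_prod_type]
    apply Finset.sum_congr rfl; intro r _
    rw [Fintype.sum_prod_type]
    rw [Finset.sum_product' (range N) (range N) (fun a b => normSq (Ψ r a b))]
    calc ∑ a : Fin N, ∑ b : Fin N, ‖ψ (r, a, b)‖^2
        = ∑ a : Fin N, ∑ b : Fin N, normSq (Ψ r (a:ℕ) (b:ℕ)) := by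
          apply Finset.sum_congr rfl; intro a _
          apply Finset.sum_congr rfl; intro b _
          rw [hΨ, Complex.sq_norm]
      _ = ∑ a : Fin N, ∑ b ∈ range N, normSq (Ψ r (a:ℕ) b) := by
          apply Finset.sum_congr rfl; intro a _
          exact Fin.sum_univ_eq_sum_range (fun b => normSq (Ψ r (a:ℕ) b)) N
      _ = ∑ a ∈ range N, ∑ b ∈ range N, normSq (Ψ r a b) :=
          Fin.sum_univ_eq_sum_range (fun a => ∑ b ∈ range N, normSq (Ψ r a b)) N
  have hdec : ∀ r : ZMod p, ∑ x ∈ range N ×ˢ range N, normSq (Ψ r x.1 x.2)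
      = (∑ x ∈ range N ×ˢ range N, normSq (Ψ r x.1 x.2 - μ r)) + (N:ℝ)^2 * normSq (μ r) := by
    intro r
    have := sum_normSq_eq (range N ×ˢ range N) (fun x => Ψ r x.1 x.2) (μ r)
      (gsum_card N (by omega) (Ψ r))
    rw [hcard] at this
    exact this
  -- Poincaré per ring
  have hpoin : ∀ r : ZMod p, ∑ x ∈ range N ×ˢ range N, normSq (Ψ r x.1 x.2 - μ r)
      ≤ (N:ℝ)^2 * gq N (Ψ r) := by
    intro r
    have := gvar_le N hN (Ψ r)
    rw [← Finset.sum_product' (range N) (range N)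
      (fun a b => normSq (Ψ r a b - gmean N (Ψ r)))] at this
    exact this
  -- corner bounds
  set K : ℝ := 12*(1+Real.log N) with hK
  have hlogN : (0:ℝ) < Real.log N := Real.log_pos (by exact_mod_cast hN)
  have hK1 : 1 ≤ K := by rw [hK]; nlinarith
  -- cycle bound
  have hμ0 : ∑ r : ZMod p, μ r = 0 := by
    have htot : ∑ r : ZMod p, gsum N (Ψ r) = 0 := by
      rw [← hψ0, Fintype.sum_prod_type]
      apply Finset.sum_congr rfl; intro r _
      rw [gsum]
      calc ∑ a ∈ range N, ∑ b ∈ range N, Ψ r a b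
          = ∑ a : Fin N, ∑ b ∈ range N, Ψ r (a:ℕ) b :=
            (Fin.sum_univ_eq_sum_range (fun a => ∑ b ∈ range N, Ψ r a b) N).symm
        _ = ∑ a : Fin N, ∑ b : Fin N, Ψ r (a:ℕ) (b:ℕ) := by
            apply Finset.sum_congr rfl; intro a _
            exact (Fin.sum_univ_eq_sum_range (fun b => Ψ r (a:ℕ) b) N).symm
        _ = ∑ x : Fin N × Fin N, ψ (r, x) := by
            rw [Fintype.sum_prod_type]
            apply Finset.sum_congr rfl; intro a _
            apply Finset.sum_congr rfl; intro b _
            rw [hΨ]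
    rw [hμdef]
    simp only [gmean]
    rw [← Finset.sum_div, htot, zero_div]
  have hcycle := cycle_poincare μ hμ0
  have hdelta : ∀ r : ZMod p, normSq (μ (r+1) - μ r)
      ≤ 3*(K * gq N (Ψ r)) + 3*normSq (Ψ r (N-1) (N-1) - Ψ (r+1) 0 0) + 3*(K * gq N (Ψ (r+1))) := by
    intro r
    have hsum3 : μ (r+1) - μ r
        = -((μ r - Ψ r (N-1) (N-1)) + (Ψ r (N-1) (N-1) - Ψ (r+1) 0 0)
            + (Ψ (r+1) 0 0 - μ (r+1))) := by ring
    rw [hsum3, Complex.normSq_neg]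
    have h3 := normSq_add3_le (μ r - Ψ r (N-1) (N-1)) (Ψ r (N-1) (N-1) - Ψ (r+1) 0 0)
      (Ψ (r+1) 0 0 - μ (r+1))
    have hc2 : normSq (μ r - Ψ r (N-1) (N-1)) ≤ K * gq N (Ψ r) := by
      rw [normSq_comm]
      rw [hK]
      exact corner2 N hN (Ψ r)
    have hc1 : normSq (Ψ (r+1) 0 0 - μ (r+1)) ≤ K * gq N (Ψ (r+1)) := by
      rw [hK]
      exact corner1 N hN (Ψ (r+1))
    linarith
  have hshift : ∑ r : ZMod p, gq N (Ψ (r+1)) = QG := by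
    rw [hQG]
    exact Fintype.sum_equiv (Equiv.addRight (1 : ZMod p))
      (fun r => gq N (Ψ (r+1))) (fun r => gq N (Ψ r)) (fun r => rfl)
  have hdeltasum : ∑ r : ZMod p, normSq (μ (r+1) - μ r) ≤ 6*K*(QG + QC) := by
    calc ∑ r : ZMod p, normSq (μ (r+1) - μ r)
        ≤ ∑ r : ZMod p, (3*(K * gq N (Ψ r)) + 3*normSq (Ψ r (N-1) (N-1) - Ψ (r+1) 0 0)
            + 3*(K * gq N (Ψ (r+1)))) := Finset.sum_le_sum (fun r _ => hdelta r)
      _ = 3*K*QG + 3*QC + 3*K*QG := by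
          have e1 : ∑ r : ZMod p, 3*(K * gq N (Ψ r)) = 3*K*QG := by
            rw [hQG, Finset.mul_sum]
            exact Finset.sum_congr rfl (fun r _ => by ring)
          have e2 : ∑ r : ZMod p, 3*normSq (Ψ r (N-1) (N-1) - Ψ (r+1) 0 0) = 3*QC := by
            rw [hQCs, Finset.mul_sum]
          have e3 : ∑ r : ZMod p, 3*(K * gq N (Ψ (r+1))) = 3*K*QG := by
            rw [← hshift, Finset.mul_sum]
            exact Finset.sum_congr rfl (fun r _ => by ring)
          rw [Finset.sum_add_distrib, Finset.sum_add_distrib, e1, e2, e3]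
      _ ≤ 6*K*(QG + QC) := by
          have hQCnn : 0 ≤ QC := by
            rw [hQCs]; apply Finset.sum_nonneg; intro s _; exact normSq_nonneg _
          nlinarith
  -- assemble
  have hQGnn : 0 ≤ QG := by
    rw [hQG]; apply Finset.sum_nonneg; intro r _; exact gq_nonneg N (Ψ r)
  have hQCnn : 0 ≤ QC := by
    rw [hQCs]; apply Finset.sum_nonneg; intro s _; exact normSq_nonneg _
  set E : ℝ := QG + QC with hE
  have hSbound : (∑ x : Idx p N, ‖ψ x‖^2) ≤ 4*(N:ℝ)^2*(p:ℝ)^2*K*E := by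
    have hμsum : ∑ r : ZMod p, normSq (μ r) ≤ (p:ℝ)^2/2 * (6*K*E) := by
      calc ∑ r : ZMod p, normSq (μ r)
          ≤ (p:ℝ)^2/2 * ∑ r : ZMod p, normSq (μ (r+1) - μ r) := hcycle
        _ ≤ (p:ℝ)^2/2 * (6*K*E) := by
            apply mul_le_mul_of_nonneg_left _ (by positivity)
            rw [hE]; exact hdeltasum
    calc (∑ x : Idx p N, ‖ψ x‖^2)
        = ∑ r : ZMod p, ∑ x ∈ range N ×ˢ range N, normSq (Ψ r x.1 x.2) := hS
      _ = (∑ r : ZMod p, ∑ x ∈ range N ×ˢ range N, normSq (Ψ r x.1 x.2 - μ r))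
          + (N:ℝ)^2 * ∑ r : ZMod p, normSq (μ r) := by
          rw [Finset.sum_congr rfl (fun r _ => hdec r), Finset.sum_add_distrib, ← Finset.mul_sum]
      _ ≤ (N:ℝ)^2 * QG + (N:ℝ)^2 * ((p:ℝ)^2/2 * (6*K*E)) := by
          have h1 : (∑ r : ZMod p, ∑ x ∈ range N ×ˢ range N, normSq (Ψ r x.1 x.2 - μ r))
              ≤ (N:ℝ)^2 * QG := by
            rw [hQG, Finset.mul_sum]
            exact Finset.sum_le_sum (fun r _ => hpoin r)
          have h2 : (N:ℝ)^2 * ∑ r : ZMod p, normSq (μ r)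
              ≤ (N:ℝ)^2 * ((p:ℝ)^2/2 * (6*K*E)) :=
            mul_le_mul_of_nonneg_left hμsum (by positivity)
          linarith
      _ ≤ 4*(N:ℝ)^2*(p:ℝ)^2*K*E := by
          have hp1 : (1:ℝ) ≤ (p:ℝ) := by exact_mod_cast hp0
          have hEQG : QG ≤ E := by rw [hE]; linarith
          have hEnn : 0 ≤ E := by rw [hE]; linarith
          have hN0 : (0:ℝ) < (N:ℝ)^2 := by positivity
          have hKE : 0 ≤ K*E := mul_nonneg (by linarith) hEnn
          have hpsq : 1 ≤ (p:ℝ)^2 := by nlinarith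
          have hmain : (N:ℝ)^2*QG ≤ (N:ℝ)^2*((p:ℝ)^2*(K*E)) := by
            apply mul_le_mul_of_nonneg_left _ hN0.le
            calc QG ≤ E := hEQG
              _ ≤ K*E := le_mul_of_one_le_left hEnn hK1
              _ ≤ (p:ℝ)^2*(K*E) := le_mul_of_one_le_left hKE hpsq
          have hr : (N:ℝ)^2 * ((p:ℝ)^2/2*(6*K*E)) = 3*((N:ℝ)^2*((p:ℝ)^2*(K*E))) := by ring
          have hr2 : 4*(N:ℝ)^2*(p:ℝ)^2*K*E = 4*((N:ℝ)^2*((p:ℝ)^2*(K*E))) := by ring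
          rw [hr, hr2]
          linarith
  -- final numeric step
  have hKlog : K ≤ 30 * Real.log N := by
    have hl2 : Real.log 2 ≤ Real.log N := by
      apply Real.log_le_log (by norm_num)
      exact_mod_cast hN
    have hd9 := Real.log_two_gt_d9
    rw [hK]
    nlinarith
  have hdenpos : (0:ℝ) < (p:ℝ)^2 * (N:ℝ)^2 * Real.log N := by
    have : (0:ℝ) < (p:ℝ) := by exact_mod_cast hp0
    have : (0:ℝ) < (N:ℝ) := by positivity
    positivity
  rw [hre, div_le_iff₀ hdenpos]
  have hEnn : 0 ≤ QG + QC := by linarith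
  have hfin : (∑ x : Idx p N, ‖ψ x‖^2) ≤ 120 * ((p:ℝ)^2 * (N:ℝ)^2 * Real.log N) * (QG + QC) := by
    calc (∑ x : Idx p N, ‖ψ x‖^2) ≤ 4*(N:ℝ)^2*(p:ℝ)^2*K*E := hSbound
      _ = 4*(N:ℝ)^2*(p:ℝ)^2*(K*E) := by ring
      _ ≤ 4*(N:ℝ)^2*(p:ℝ)^2*((30*Real.log N)*E) := by
          have h4 : (0:ℝ) ≤ 4*(N:ℝ)^2*(p:ℝ)^2 := by positivity
          have hEnn' : 0 ≤ E := by rw [hE]; linarith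
          exact mul_le_mul_of_nonneg_left
            (mul_le_mul_of_nonneg_right hKlog hEnn') h4
      _ = 4*(N:ℝ)^2*(p:ℝ)^2*(30*Real.log N)*E := by ring
      _ = 120 * ((p:ℝ)^2 * (N:ℝ)^2 * Real.log N) * (QG + QC) := by rw [hE]; ring
  linarith
end Prelim
end

section
/- Let V be a finite-dimensional complex inner product space and let A₁, A₂ be positive semidefinite self-adjoint operators on V with null spaces L₁ = ker A₁ and L₂ = ker A₂. Suppose L₁ ∩ L₂ = {0}, every nonzero eigenvalue of A₁ and of A₂ is at least v > 0, and |⟨u, w⟩| ≤ κ for all unit vectors u ∈ L₁ and w ∈ L₂ (for some κ ∈ [0,1]). Then for every ψ ∈ V, ⟨ψ, (A₁ + A₂)ψ⟩ ≥ v·(1 − κ)/2·‖ψ‖²; equivalently A₁ + A₂ ≥ v·sin²(θ/2) where cos θ = κ is the cosine of the angle between L₁ and L₂. -/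
open scoped InnerProductSpace

lemma aux_quad {V : Type*} [NormedAddCommGroup V] [InnerProductSpace ℂ V]
    [FiniteDimensional ℂ V] (A : V →ₗ[ℂ] V) (hsa : LinearMap.IsSymmetric A)
    {v : ℝ}
    (heig : ∀ (μ : ℝ) (x : V), x ≠ 0 → A x = (μ : ℂ) • x → μ ≠ 0 → v ≤ μ)
    (ψ : V) :
    v * ‖ψ - (Submodule.orthogonalProjectionOnto (LinearMap.ker A) ψ : V)‖^2 ≤ (⟪ψ, A ψ⟫_ℂ).re := by
  set K := LinearMap.ker A with hK
  set u : V := ↑(Submodule.orthogonalProjectionOnto K ψ) with hu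
  set b : V := ψ - u with hb
  have hbK : b ∈ Kᗮ := Submodule.sub_starProjection_mem_orthogonal ψ
  have huK : u ∈ K := SetLike.coe_mem _
  have hAu : A u = 0 := huK
  have hψ : ψ = u + b := by simp [hb]
  have hinner : ⟪ψ, A ψ⟫_ℂ = ⟪b, A b⟫_ℂ := by
    rw [hψ, map_add, hAu, zero_add, inner_add_left]
    have : ⟪u, A b⟫_ℂ = 0 := by rw [← hsa u b, hAu, inner_zero_left]
    rw [this, zero_add]
  rw [hinner]
  set e := hsa.eigenvectorBasis (n := Module.finrank ℂ V) rfl with he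
  set μ := hsa.eigenvalues (n := Module.finrank ℂ V) rfl with hμ
  have hterm : ∀ i, ⟪b, e i⟫_ℂ * ⟪e i, A b⟫_ℂ = ((μ i * ‖⟪e i, b⟫_ℂ‖^2 : ℝ) : ℂ) := by
    intro i
    have h1 : ⟪e i, A b⟫_ℂ = (μ i : ℂ) * ⟪e i, b⟫_ℂ := by
      rw [← hsa (e i) b, hsa.apply_eigenvectorBasis rfl i, inner_smul_left,
        RCLike.conj_ofReal]
      rfl
    have h2 : ⟪b, e i⟫_ℂ = (starRingEnd ℂ) ⟪e i, b⟫_ℂ := (inner_conj_symm _ _).symm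
    rw [h1, h2, mul_comm ((μ i : ℂ)) _, ← mul_assoc, RCLike.conj_mul]
    push_cast
    rw [mul_comm]
    simp
  have hsum : (⟪b, A b⟫_ℂ).re = ∑ i, μ i * ‖⟪e i, b⟫_ℂ‖^2 := by
    rw [← e.sum_inner_mul_inner b (A b)]
    have : ∑ i, ⟪b, e i⟫_ℂ * ⟪e i, A b⟫_ℂ
        = ((∑ i, μ i * ‖⟪e i, b⟫_ℂ‖^2 : ℝ) : ℂ) := by
      push_cast
      exact Finset.sum_congr rfl fun i _ => by rw [hterm i]; push_cast; ring
    rw [this]; exact Complex.ofReal_re _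
  have hnorm : ‖b‖^2 = ∑ i, ‖⟪e i, b⟫_ℂ‖^2 := by
    have h0 := e.sum_inner_mul_inner b b
    have : ∑ i, ⟪b, e i⟫_ℂ * ⟪e i, b⟫_ℂ
        = ((∑ i, ‖⟪e i, b⟫_ℂ‖^2 : ℝ) : ℂ) := by
      push_cast
      refine Finset.sum_congr rfl fun i _ => ?_
      have h2 : ⟪b, e i⟫_ℂ = (starRingEnd ℂ) ⟪e i, b⟫_ℂ := (inner_conj_symm _ _).symm
      rw [h2, RCLike.conj_mul]
      norm_cast
    rw [← inner_self_eq_norm_sq (𝕜 := ℂ) b, ← h0, this]; exact Complex.ofReal_re _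
  rw [hsum, hnorm, Finset.mul_sum]
  refine Finset.sum_le_sum fun i _ => ?_
  by_cases hμi : μ i = 0
  · have heiK : e i ∈ K := by
      rw [hK, LinearMap.mem_ker]
      have h3 := hsa.apply_eigenvectorBasis rfl i
      rw [← he, ← hμ, hμi] at h3
      simpa using h3
    have : ⟪e i, b⟫_ℂ = 0 := hbK (e i) heiK
    simp [this]
  · have hv' : v ≤ μ i := by
      refine heig (μ i) (e i) ?_ ?_ hμi
      · have h4 := e.orthonormal.1 i
        intro h0; rw [h0] at h4; simp at h4
      · exact hsa.apply_eigenvectorBasis rfl i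
    exact mul_le_mul_of_nonneg_right hv' (by positivity)

set_option maxHeartbeats 1000000 in
/-- the lemma of Kitaev used in the paper: if A₁, A₂ are positive
semidefinite self-adjoint operators on a finite-dimensional complex inner product space
whose null spaces intersect trivially, whose nonzero eigenvalues are all at least v > 0,
and such that |⟨u,w⟩| ≤ κ for all unit vectors u ∈ ker A₁, w ∈ ker A₂ (κ = cos θ being
the cosine of the angle between the null spaces), then
⟨ψ, (A₁+A₂)ψ⟩ ≥ v·(1−κ)/2·‖ψ‖² = v·sin²(θ/2)·‖ψ‖² for every ψ. -/
theorem stmt5 {V : Type*} [NormedAddCommGroup V] [InnerProductSpace ℂ V]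
    [FiniteDimensional ℂ V] (A₁ A₂ : V →ₗ[ℂ] V) (v κ : ℝ)
    (h₁sa : ∀ x y : V, ⟪A₁ x, y⟫_ℂ = ⟪x, A₁ y⟫_ℂ)
    (h₂sa : ∀ x y : V, ⟪A₂ x, y⟫_ℂ = ⟪x, A₂ y⟫_ℂ)
    (h₁pos : ∀ x : V, 0 ≤ (⟪x, A₁ x⟫_ℂ).re)
    (h₂pos : ∀ x : V, 0 ≤ (⟪x, A₂ x⟫_ℂ).re)
    (hv : 0 < v)
    (h₁eig : ∀ (μ : ℝ) (x : V), x ≠ 0 → A₁ x = (μ : ℂ) • x → μ ≠ 0 → v ≤ μ)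
    (h₂eig : ∀ (μ : ℝ) (x : V), x ≠ 0 → A₂ x = (μ : ℂ) • x → μ ≠ 0 → v ≤ μ)
    (hker : LinearMap.ker A₁ ⊓ LinearMap.ker A₂ = ⊥)
    (hκ0 : 0 ≤ κ) (hκ1 : κ ≤ 1)
    (hangle : ∀ u ∈ LinearMap.ker A₁, ∀ w ∈ LinearMap.ker A₂,
      ‖u‖ = 1 → ‖w‖ = 1 → ‖⟪u, w⟫_ℂ‖ ≤ κ) :
    ∀ ψ : V, v * (1 - κ) / 2 * ‖ψ‖^2 ≤ (⟪ψ, (A₁ + A₂) ψ⟫_ℂ).re := by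
  intro ψ
  have hangle' : ∀ u ∈ LinearMap.ker A₁, ∀ w ∈ LinearMap.ker A₂,
      ‖⟪u, w⟫_ℂ‖ ≤ κ * ‖u‖ * ‖w‖ := by
    intro u hu w hw
    rcases eq_or_ne u 0 with rfl | hu0
    · simp [hκ0]
    rcases eq_or_ne w 0 with rfl | hw0
    · simp
    have hnu : (0:ℝ) < ‖u‖ := norm_pos_iff.mpr hu0
    have hnw : (0:ℝ) < ‖w‖ := norm_pos_iff.mpr hw0
    have key := hangle (((‖u‖⁻¹ : ℝ) : ℂ) • u) (Submodule.smul_mem _ _ hu)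
      (((‖w‖⁻¹ : ℝ) : ℂ) • w) (Submodule.smul_mem _ _ hw) ?_ ?_
    · rw [inner_smul_left, inner_smul_right, norm_mul, norm_mul,
        RCLike.norm_conj, Complex.norm_real, Complex.norm_real,
        norm_inv, norm_inv, norm_norm, norm_norm,
        inv_mul_le_iff₀ hnu, inv_mul_le_iff₀ hnw] at key
      calc ‖⟪u, w⟫_ℂ‖ ≤ ‖w‖ * (‖u‖ * κ) := key
        _ = κ * ‖u‖ * ‖w‖ := by ring
    · rw [norm_smul, Complex.norm_real, norm_inv, norm_norm, inv_mul_cancel₀ hnu.ne']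
    · rw [norm_smul, Complex.norm_real, norm_inv, norm_norm, inv_mul_cancel₀ hnw.ne']
  set K₁ := LinearMap.ker A₁ with hK₁
  set K₂ := LinearMap.ker A₂ with hK₂
  set u₁ : V := ↑(Submodule.orthogonalProjectionOnto K₁ ψ) with hu₁
  set u₂ : V := ↑(Submodule.orthogonalProjectionOnto K₂ ψ) with hu₂
  have hu₁K : u₁ ∈ K₁ := SetLike.coe_mem _
  have hu₂K : u₂ ∈ K₂ := SetLike.coe_mem _
  have pyth : ∀ (u : V), ⟪ψ - u, u⟫_ℂ = 0 →
      ‖ψ‖^2 = ‖u‖^2 + ‖ψ - u‖^2 ∧ (⟪ψ, u⟫_ℂ).re = ‖u‖^2 := by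
    intro u h0
    have hψu : ψ = (ψ - u) + u := by abel
    constructor
    · nth_rewrite 1 [hψu]
      rw [norm_add_sq (𝕜 := ℂ), h0]
      simp only [map_zero, mul_zero, add_zero]
      ring
    · nth_rewrite 1 [hψu]
      rw [inner_add_left, h0, zero_add]
      exact inner_self_eq_norm_sq (𝕜 := ℂ) u
  obtain ⟨pyth₁, hre₁⟩ := pyth u₁ (Submodule.starProjection_inner_eq_zero ψ u₁ hu₁K)
  obtain ⟨pyth₂, hre₂⟩ := pyth u₂ (Submodule.starProjection_inner_eq_zero ψ u₂ hu₂K)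
  -- bound on s = ‖u₁‖² + ‖u₂‖²
  have hcross : (⟪u₁, u₂⟫_ℂ).re ≤ κ * ‖u₁‖ * ‖u₂‖ :=
    le_trans (Complex.re_le_norm _) (hangle' u₁ hu₁K u₂ hu₂K)
  have hsum_norm : ‖u₁ + u₂‖^2 ≤ (1 + κ) * (‖u₁‖^2 + ‖u₂‖^2) := by
    have hcross' : RCLike.re ⟪u₁, u₂⟫_ℂ ≤ κ * ‖u₁‖ * ‖u₂‖ := hcross
    rw [norm_add_sq (𝕜 := ℂ)]
    nlinarith [hcross', sq_nonneg (‖u₁‖ - ‖u₂‖), hκ0]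
  have hs_le : ‖u₁‖^2 + ‖u₂‖^2 ≤ ‖ψ‖ * ‖u₁ + u₂‖ := by
    have h1 : (⟪ψ, u₁ + u₂⟫_ℂ).re = ‖u₁‖^2 + ‖u₂‖^2 := by
      rw [inner_add_right, Complex.add_re, hre₁, hre₂]
    calc ‖u₁‖^2 + ‖u₂‖^2 = (⟪ψ, u₁ + u₂⟫_ℂ).re := h1.symm
      _ ≤ ‖⟪ψ, u₁ + u₂⟫_ℂ‖ := Complex.re_le_norm _
      _ ≤ ‖ψ‖ * ‖u₁ + u₂‖ := norm_inner_le_norm _ _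
  have hs_bound : ‖u₁‖^2 + ‖u₂‖^2 ≤ (1 + κ) * ‖ψ‖^2 := by
    set s := ‖u₁‖^2 + ‖u₂‖^2 with hs
    rcases le_or_gt s 0 with h | h
    · nlinarith [sq_nonneg ‖ψ‖, hκ0, mul_nonneg (by linarith : (0:ℝ) ≤ 1+κ) (sq_nonneg ‖ψ‖)]
    · have h2 : s^2 ≤ ‖ψ‖^2 * ((1+κ) * s) := by
        nlinarith [hs_le, hsum_norm, norm_nonneg (u₁ + u₂), norm_nonneg ψ,
          mul_le_mul hs_le hs_le h.le (by positivity : (0:ℝ) ≤ ‖ψ‖ * ‖u₁ + u₂‖)]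
      nlinarith [h]
  -- main quadratic bounds
  have hq₁ := aux_quad A₁ h₁sa h₁eig ψ
  have hq₂ := aux_quad A₂ h₂sa h₂eig ψ
  rw [← hu₁] at hq₁
  rw [← hu₂] at hq₂
  have hAsum : (⟪ψ, (A₁ + A₂) ψ⟫_ℂ).re = (⟪ψ, A₁ ψ⟫_ℂ).re + (⟪ψ, A₂ ψ⟫_ℂ).re := by
    rw [LinearMap.add_apply, inner_add_right, Complex.add_re]
  rw [hAsum]
  have e₁ : ‖ψ - u₁‖^2 = ‖ψ‖^2 - ‖u₁‖^2 := by linarith [pyth₁]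
  have e₂ : ‖ψ - u₂‖^2 = ‖ψ‖^2 - ‖u₂‖^2 := by linarith [pyth₂]
  have hvs : v * (‖u₁‖^2 + ‖u₂‖^2) ≤ v * ((1 + κ) * ‖ψ‖^2) :=
    mul_le_mul_of_nonneg_left hs_bound hv.le
  have hnn : 0 ≤ v * ((1 - κ) * ‖ψ‖^2) :=
    mul_nonneg hv.le (mul_nonneg (by linarith) (sq_nonneg _))
  calc v * (1 - κ) / 2 * ‖ψ‖^2
      ≤ v * ((1 - κ) * ‖ψ‖^2) := by nlinarith [hnn]
    _ ≤ v * (2 * ‖ψ‖^2 - (‖u₁‖^2 + ‖u₂‖^2)) := by nlinarith [hvs]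
    _ = v * ‖ψ - u₁‖^2 + v * ‖ψ - u₂‖^2 := by rw [e₁, e₂]; ring
    _ ≤ (⟪ψ, A₁ ψ⟫_ℂ).re + (⟪ψ, A₂ ψ⟫_ℂ).re := add_le_add hq₁ hq₂
end

section
/- For all integers N and a with 2 ≤ a and 2a ≤ N, one has ( ∏_{j=0}^{a−1} (N − 2j) ) / a! ≤ binom(N, a)·( 1 − 1/(N−1) ); consequently the number of a-element subsets of ℤ/Nℤ with no two cyclically adjacent elements is at most binom(N,a)·(1 − 1/(N−1)). -/
open Finset

-- number of a-subsets of ZMod N containing both i and i+1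
lemma count_pair (N a : ℕ) [NeZero N] (hN : 4 ≤ N) (ha : 2 ≤ a) (i : ZMod N) :
    ((Finset.univ.filter
        (fun S : Finset (ZMod N) => S.card = a ∧ i ∈ S ∧ i + 1 ∈ S)).card)
      = (N - 2).choose (a - 2) := by
  haveI : Fact (1 < N) := ⟨by omega⟩
  have hne : i ≠ i + 1 := by
    intro h
    exact one_ne_zero (α := ZMod N) (add_left_cancel (a := i) (by rw [add_zero]; exact h)).symm
  have hcard2 : ((Finset.univ.erase i).erase (i + 1)).card = N - 2 := by
    rw [card_erase_of_mem (mem_erase.mpr ⟨Ne.symm hne, mem_univ _⟩), card_erase_of_mem (mem_univ _)]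
    simp only [Finset.card_univ, ZMod.card]
    omega
  rw [← hcard2, ← Finset.card_powersetCard]
  refine Finset.card_bij' (fun S _ => (S.erase i).erase (i + 1))
    (fun U _ => insert i (insert (i + 1) U)) ?_ ?_ ?_ ?_
  · intro S hS
    simp only [mem_filter, mem_univ, true_and] at hS
    obtain ⟨hSc, hiS, hi1S⟩ := hS
    rw [Finset.mem_powersetCard]
    constructor
    · intro x hx
      simp only [mem_erase] at hx ⊢
      exact ⟨hx.1, hx.2.1, mem_univ _⟩
    · rw [card_erase_of_mem (mem_erase.mpr ⟨Ne.symm hne, hi1S⟩), card_erase_of_mem hiS, hSc]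
      omega
  · intro U hU
    rw [Finset.mem_powersetCard] at hU
    obtain ⟨hUs, hUc⟩ := hU
    have hiU : i ∉ U := fun h => by simpa using (mem_erase.mp (hUs h)).2
    have hi1U : i + 1 ∉ U := fun h => by simpa using (mem_erase.mp (hUs h)).1
    simp only [mem_filter, mem_univ, true_and]
    refine ⟨?_, mem_insert_self _ _, mem_insert_of_mem (mem_insert_self _ _)⟩
    rw [card_insert_of_notMem (by simp [hne, hiU]), card_insert_of_notMem hi1U, hUc]
    omega
  · intro S hS
    simp only [mem_filter, mem_univ, true_and] at hS
    obtain ⟨_, hiS, hi1S⟩ := hS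
    rw [insert_erase (mem_erase.mpr ⟨Ne.symm hne, hi1S⟩), insert_erase hiS]
  · intro U hU
    rw [Finset.mem_powersetCard] at hU
    have hiU : i ∉ U := fun h => by simpa using (mem_erase.mp (hU.1 h)).2
    have hi1U : i + 1 ∉ U := fun h => by simpa using (mem_erase.mp (hU.1 h)).1
    rw [erase_insert (by simp [hne, hiU]), erase_insert hi1U]

/-- For 2 ≤ a and 2a ≤ N,
N(N−2)⋯(N−2a+2)/a! ≤ binom(N,a)·(1 − 1/(N−1)); consequently the number of a-element
subsets of ℤ/Nℤ with no two cyclically adjacent elements is at most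
binom(N,a)·(1 − 1/(N−1)). -/
theorem stmt16 (N a : ℕ) [NeZero N] (ha : 2 ≤ a) (hN : 2 * a ≤ N) :
    (∏ j ∈ Finset.range a, ((N : ℝ) - 2 * j)) / (Nat.factorial a)
        ≤ (N.choose a : ℝ) * (1 - 1 / ((N : ℝ) - 1)) ∧
      ((Finset.univ.filter
          (fun S : Finset (ZMod N) => S.card = a ∧ ∀ i ∈ S, i + 1 ∉ S)).card : ℝ)
        ≤ (N.choose a : ℝ) * (1 - 1 / ((N : ℝ) - 1)) := by
  have hN4 : 4 ≤ N := by omega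
  have hN1 : (0 : ℝ) < (N : ℝ) - 1 := by
    have : (4 : ℝ) ≤ N := by exact_mod_cast hN4
    linarith
  -- choose as product
  have hchoose : (N.choose a : ℝ) * (Nat.factorial a : ℝ)
      = ∏ j ∈ Finset.range a, ((N : ℝ) - j) := by
    have h1 : (a.factorial * N.choose a : ℕ) = ∏ j ∈ Finset.range a, (N - j) := by
      rw [← Nat.descFactorial_eq_factorial_mul_choose, Nat.descFactorial_eq_prod_range]
    calc (N.choose a : ℝ) * (Nat.factorial a : ℝ)
        = ((a.factorial * N.choose a : ℕ) : ℝ) := by push_cast; ring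
      _ = ∏ j ∈ Finset.range a, (((N - j : ℕ)) : ℝ) := by rw [h1]; exact Nat.cast_prod _ _
      _ = ∏ j ∈ Finset.range a, ((N : ℝ) - j) := Finset.prod_congr rfl (fun j hj => by
            rw [Nat.cast_sub (by have := Finset.mem_range.mp hj; omega)])
  obtain ⟨k, rfl⟩ : ∃ k, a = k + 2 := ⟨a - 2, by omega⟩
  -- Part 1
  have part1 : (∏ j ∈ Finset.range (k + 2), ((N : ℝ) - 2 * j)) / (Nat.factorial (k + 2))
      ≤ (N.choose (k + 2) : ℝ) * (1 - 1 / ((N : ℝ) - 1)) := by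
    have key : ∏ j ∈ Finset.range k, ((N : ℝ) - 2 * (j + 2))
        ≤ ∏ j ∈ Finset.range k, ((N : ℝ) - (j + 2)) := by
      apply Finset.prod_le_prod
      · intro j hj
        have hj' : (j : ℝ) + 1 ≤ k := by exact_mod_cast Finset.mem_range.mp hj
        have hN' : (2 * ((k : ℝ) + 2)) ≤ N := by exact_mod_cast hN
        linarith
      · intro j hj
        have : (0 : ℝ) ≤ j := by positivity
        linarith
    have eL : ∏ j ∈ Finset.range (k + 2), ((N : ℝ) - 2 * j)
        = (∏ j ∈ Finset.range k, ((N : ℝ) - 2 * (j + 2))) * ((N : ℝ) - 2) * N := by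
      rw [Finset.prod_range_succ', Finset.prod_range_succ']
      have e : ∏ j ∈ Finset.range k, ((N : ℝ) - 2 * ↑(j + 1 + 1))
          = ∏ j ∈ Finset.range k, ((N : ℝ) - 2 * ((j : ℝ) + 2)) :=
        Finset.prod_congr rfl (fun j _ => by push_cast; ring)
      rw [e]
      push_cast
      ring
    have eR : ∏ j ∈ Finset.range (k + 2), ((N : ℝ) - j)
        = (∏ j ∈ Finset.range k, ((N : ℝ) - (j + 2))) * ((N : ℝ) - 1) * N := by
      rw [Finset.prod_range_succ', Finset.prod_range_succ']
      have e : ∏ j ∈ Finset.range k, ((N : ℝ) - ↑(j + 1 + 1))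
          = ∏ j ∈ Finset.range k, ((N : ℝ) - ((j : ℝ) + 2)) :=
        Finset.prod_congr rfl (fun j _ => by push_cast; ring)
      rw [e]
      push_cast
      ring
    have hnn : (0 : ℝ) ≤ ∏ j ∈ Finset.range k, ((N : ℝ) - 2 * (j + 2)) := by
      apply Finset.prod_nonneg
      intro j hj
      have hj' : (j : ℝ) + 1 ≤ k := by exact_mod_cast Finset.mem_range.mp hj
      have hN' : (2 * ((k : ℝ) + 2)) ≤ N := by exact_mod_cast hN
      linarith
    have hfac : ((N : ℝ) - 1) * (1 - 1 / ((N : ℝ) - 1)) = (N : ℝ) - 2 := by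
      field_simp
      ring
    have hprod : (∏ j ∈ Finset.range (k + 2), ((N : ℝ) - 2 * j))
        ≤ (∏ j ∈ Finset.range (k + 2), ((N : ℝ) - j)) * (1 - 1 / ((N : ℝ) - 1)) := by
      rw [eL, eR]
      calc (∏ j ∈ Finset.range k, ((N : ℝ) - 2 * (j + 2))) * ((N : ℝ) - 2) * N
          ≤ (∏ j ∈ Finset.range k, ((N : ℝ) - (j + 2))) * ((N : ℝ) - 2) * N := by
            apply mul_le_mul_of_nonneg_right (mul_le_mul_of_nonneg_right key (by
              have : (4 : ℝ) ≤ N := by exact_mod_cast hN4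
              linarith))
            positivity
        _ = (∏ j ∈ Finset.range k, ((N : ℝ) - (j + 2))) * ((N : ℝ) - 1) * N
            * (1 - 1 / ((N : ℝ) - 1)) := by
            field_simp
            ring
    rw [div_le_iff₀ (by positivity : (0:ℝ) < (Nat.factorial (k+2) : ℝ))]
    calc (∏ j ∈ Finset.range (k + 2), ((N : ℝ) - 2 * j))
        ≤ (∏ j ∈ Finset.range (k + 2), ((N : ℝ) - j)) * (1 - 1 / ((N : ℝ) - 1)) := hprod
      _ = (N.choose (k + 2) : ℝ) * (1 - 1 / ((N : ℝ) - 1)) * (Nat.factorial (k + 2)) := by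
          rw [← hchoose]; ring
  refine ⟨part1, ?_⟩
  -- Part 2
  set a := k + 2 with ha_def
  haveI : Fact (1 < N) := ⟨by omega⟩
  set T : Finset (Finset (ZMod N)) := Finset.univ.filter (fun S => S.card = a) with hT
  have hTcard : T.card = N.choose a := by
    rw [hT, ← Finset.powerset_univ, ← Finset.powersetCard_eq_filter, Finset.card_powersetCard,
        Finset.card_univ, ZMod.card]
  set Good := Finset.univ.filter
      (fun S : Finset (ZMod N) => S.card = a ∧ ∀ i ∈ S, i + 1 ∉ S) with hGood
  set Bad := Finset.univ.filter
      (fun S : Finset (ZMod N) => S.card = a ∧ ¬ (∀ i ∈ S, i + 1 ∉ S)) with hBad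
  have hsplit : Good.card + Bad.card = N.choose a := by
    rw [hGood, hBad, ← Finset.filter_filter, ← Finset.filter_filter, ← hT, ← hTcard]
    exact Finset.card_filter_add_card_filter_not (fun S => (∀ i ∈ S, i + 1 ∉ S))
  -- double counting
  have hdc : N * (N - 2).choose (a - 2) ≤ a * Bad.card := by
    have hsum : ∑ i : ZMod N, ((T.filter (fun S => i ∈ S ∧ i + 1 ∈ S)).card)
        = ∑ S ∈ T, ((Finset.univ.filter (fun i : ZMod N => i ∈ S ∧ i + 1 ∈ S)).card) := by
      simp_rw [Finset.card_filter]
      exact Finset.sum_comm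
    have hlhs : ∑ i : ZMod N, ((T.filter (fun S => i ∈ S ∧ i + 1 ∈ S)).card)
        = N * (N - 2).choose (a - 2) := by
      have he : ∀ i : ZMod N, (T.filter (fun S => i ∈ S ∧ i + 1 ∈ S)).card
          = (N - 2).choose (a - 2) := by
        intro i
        rw [hT, Finset.filter_filter]
        exact count_pair N a hN4 ha i
      simp [he, Finset.sum_const, Finset.card_univ, ZMod.card]
    have hrhs : ∑ S ∈ T, ((Finset.univ.filter (fun i : ZMod N => i ∈ S ∧ i + 1 ∈ S)).card)
        ≤ a * Bad.card := by
      have hz : ∀ S ∈ T, S ∉ Bad →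
          ((Finset.univ.filter (fun i : ZMod N => i ∈ S ∧ i + 1 ∈ S)).card) = 0 := by
        intro S hS hSB
        rw [hT, Finset.mem_filter] at hS
        rw [hBad, Finset.mem_filter] at hSB
        push_neg at hSB
        have hgood : ∀ i ∈ S, i + 1 ∉ S := hSB (Finset.mem_univ S) hS.2
        rw [Finset.card_eq_zero, Finset.filter_eq_empty_iff]
        intro i _
        rintro ⟨h1, h2⟩
        exact hgood i h1 h2
      have hsub : Bad ⊆ T := by
        rw [hBad, hT]
        intro S hS
        rw [Finset.mem_filter] at *
        exact ⟨hS.1, hS.2.1⟩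
      rw [← Finset.sum_subset hsub (fun S h1 h2 => hz S h1 h2)]
      calc ∑ S ∈ Bad, ((Finset.univ.filter (fun i : ZMod N => i ∈ S ∧ i + 1 ∈ S)).card)
          ≤ ∑ S ∈ Bad, a := by
            apply Finset.sum_le_sum
            intro S hS
            rw [hBad, Finset.mem_filter] at hS
            calc (Finset.univ.filter (fun i : ZMod N => i ∈ S ∧ i + 1 ∈ S)).card
                ≤ S.card := Finset.card_le_card (fun i hi => (Finset.mem_filter.mp hi).2.1)
              _ = a := hS.2.1
        _ = a * Bad.card := by rw [Finset.sum_const, smul_eq_mul, mul_comm]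
    omega
  -- identity
  have hid : N.choose a * a * (a - 1) = N * (N - 1) * (N - 2).choose (a - 2) := by
    have h1 : N * (N - 1).choose (a - 1) = N.choose a * a := by
      have := Nat.add_one_mul_choose_eq (N - 1) (a - 1)
      have e1 : N - 1 + 1 = N := by omega
      have e2 : a - 1 + 1 = a := by omega
      rwa [e1, e2] at this
    have h2 : (N - 1) * (N - 2).choose (a - 2) = (N - 1).choose (a - 1) * (a - 1) := by
      have := Nat.add_one_mul_choose_eq (N - 2) (a - 2)
      have e1 : N - 2 + 1 = N - 1 := by omega
      have e2 : a - 2 + 1 = a - 1 := by omega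
      rwa [e1, e2] at this
    calc N.choose a * a * (a - 1) = N * (N - 1).choose (a - 1) * (a - 1) := by rw [h1]
      _ = N * ((N - 1) * (N - 2).choose (a - 2)) := by rw [h2]; ring
      _ = N * (N - 1) * (N - 2).choose (a - 2) := by ring
  -- conclude C ≤ (N-1) * Bad
  have hkey : N.choose a ≤ (N - 1) * Bad.card := by
    have h3 : N.choose a * a * (a - 1) ≤ (N - 1) * (a * Bad.card) :=
      hid ▸ by
        calc N * (N - 1) * (N - 2).choose (a - 2)
            = (N - 1) * (N * (N - 2).choose (a - 2)) := by ring
          _ ≤ (N - 1) * (a * Bad.card) := Nat.mul_le_mul_left _ hdc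
    have ha1 : 1 ≤ a - 1 := by omega
    have h4 : N.choose a * a ≤ (N - 1) * Bad.card * a := by
      nlinarith [Nat.mul_le_mul_left (N.choose a * a) ha1]
    exact Nat.le_of_mul_le_mul_right h4 (by omega)
  -- finish in ℝ
  have hGR : (Good.card : ℝ) = (N.choose a : ℝ) - (Bad.card : ℝ) := by
    have := congrArg (fun n : ℕ => (n : ℝ)) hsplit
    push_cast at this
    linarith
  rw [hGR]
  have hBR : (N.choose a : ℝ) ≤ ((N : ℝ) - 1) * (Bad.card : ℝ) := by
    have := congrArg (fun n : ℕ => (n : ℝ)) (rfl : (N-1) * Bad.card = (N-1) * Bad.card)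
    have hc : ((N - 1 : ℕ) : ℝ) = (N : ℝ) - 1 := by
      push_cast [Nat.cast_sub (by omega : 1 ≤ N)]; ring
    calc (N.choose a : ℝ) ≤ (((N - 1) * Bad.card : ℕ) : ℝ) := by exact_mod_cast hkey
      _ = ((N : ℝ) - 1) * (Bad.card : ℝ) := by push_cast [hc]; ring
  have : (N.choose a : ℝ) / ((N : ℝ) - 1) ≤ (Bad.card : ℝ) := by
    rw [div_le_iff₀ hN1]
    linarith [hBR]
  have expand : (N.choose a : ℝ) * (1 - 1 / ((N : ℝ) - 1))
      = (N.choose a : ℝ) - (N.choose a : ℝ) / ((N : ℝ) - 1) := by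
    field_simp
  rw [expand]
  linarith
end

section
/- There exists a universal constant c > 0 such that for all sufficiently large N and every integer a with 2 ≤ a ≤ N, every unit vector ψ in the span of the single-ring basis configurations having exactly a sites with value x satisfies ⟨ψ, (H_L + H_V^L) ψ⟩ ≥ c/N³, where the couplings are V1 = N^{-4} and V2 = 1; i.e., on every sector with two or more holes, all eigenvalues of H_L + H_V^L are Ω(1/N³). -/
open Matrix Finset

noncomputable section

/-- A configuration of one ring of N three-state spins.  Sites 1,…,N (mod N) are
encoded by ℤ/Nℤ (site k ↔ k−1 : ZMod N, so site 1 ↔ 0 and site N ↔ −1), and the spin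
states |0⟩, |1⟩, |x⟩ by 0, 1, 2 : Fin 3. -/
abbrev Cfg (N : ℕ) := ZMod N → Fin 3

/-- The hole state |x⟩. -/
def xv : Fin 3 := 2

variable (N : ℕ) [NeZero N]

/-- S_i: swap of the spins at sites i and i+1. -/
def S1 (i : ZMod N) : Matrix (Cfg N) (Cfg N) ℂ :=
  Matrix.of fun σ τ => if σ = τ ∘ (Equiv.swap i (i + 1)) then 1 else 0

/-- P_{x,i}: projection onto configurations with |x⟩ at site i. -/
def Px1 (i : ZMod N) : Matrix (Cfg N) (Cfg N) ℂ :=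
  Matrix.of fun σ τ => if σ = τ ∧ σ i = xv then 1 else 0

/-- F_i = S_i ∘ P_{x,i}. -/
def F1 (i : ZMod N) : Matrix (Cfg N) (Cfg N) ℂ := S1 N i * Px1 N i

/-- H_L = Σ_{i=1}^{N−1} (P_{x,i} + P_{x,i+1} − F_i − F_i†): open-chain hopping of the
holes (no term between sites N and 1). -/
def HL1 : Matrix (Cfg N) (Cfg N) ℂ :=
  ∑ j ∈ Finset.range (N - 1),
    (Px1 N (j : ZMod N) + Px1 N ((j : ZMod N) + 1)
      - F1 N (j : ZMod N) - (F1 N (j : ZMod N))ᴴ)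

/-- H_V^L = V1·I − V1·Σ_{i=1}^N P_{x,i} + V2·Σ_{i=1}^N P_{x,i}P_{x,i+1} (cyclic
adjacency), with V1 = N^{−4} and V2 = 1. -/
def HV1 : Matrix (Cfg N) (Cfg N) ℂ :=
  ((N : ℂ)^4)⁻¹ • (1 : Matrix (Cfg N) (Cfg N) ℂ)
    - ((N : ℂ)^4)⁻¹ • (∑ i : ZMod N, Px1 N i)
    + (1 : ℂ) • (∑ i : ZMod N, Px1 N i * Px1 N (i + 1))

end

noncomputable section
namespace Stmt17Aux
variable {N : ℕ} [NeZero N]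

/-- swap the values at sites i and i+1 -/
def sw (i : ZMod N) (τ : Cfg N) : Cfg N := τ ∘ (Equiv.swap i (i + 1))

lemma sw_sw (i : ZMod N) (τ : Cfg N) : sw i (sw i τ) = τ := by
  funext x
  simp [sw, Function.comp, Equiv.swap_apply_self]

/-- sw as an equiv -/
def swE (i : ZMod N) : Cfg N ≃ Cfg N where
  toFun := sw i
  invFun := sw i
  left_inv := sw_sw i
  right_inv := sw_sw i


lemma Px1_mulVec (i : ZMod N) (ψ : Cfg N → ℂ) :
    Px1 N i *ᵥ ψ = fun σ => if σ i = xv then ψ σ else 0 := by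
  funext σ
  simp only [Px1, mulVec, dotProduct, of_apply]
  rw [Finset.sum_congr rfl (fun τ _ => show _ = if σ = τ then (if σ i = xv then ψ τ else 0) else 0
    by by_cases h1 : σ = τ <;> by_cases h2 : σ i = xv <;> simp [h1, h2]),
    Finset.sum_ite_eq]
  simp

lemma F1_apply (i : ZMod N) (σ τ : Cfg N) :
    F1 N i σ τ = if (σ = sw i τ ∧ τ i = xv) then 1 else 0 := by
  simp only [F1, mul_apply, S1, Px1, of_apply]
  rw [Finset.sum_congr rfl (fun μ _ => show _ =
      if τ = μ then (if σ = sw i τ ∧ τ i = xv then (1:ℂ) else 0) else 0 by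
    by_cases h1 : τ = μ
    · subst h1; by_cases h2 : σ = sw i τ <;> by_cases h3 : τ i = xv <;> simp [h2, h3, sw]
    · simp [h1, Ne.symm h1]),
    Finset.sum_ite_eq]
  simp

lemma F1_mulVec (i : ZMod N) (ψ : Cfg N → ℂ) :
    F1 N i *ᵥ ψ = fun σ => if σ (i+1) = xv then ψ (sw i σ) else 0 := by
  funext σ
  simp only [mulVec, dotProduct, F1_apply]
  rw [← Equiv.sum_comp (swE i) (fun τ => (if (σ = sw i τ ∧ τ i = xv) then (1:ℂ) else 0) * ψ τ)]
  have key : ∀ τ : Cfg N, (if (σ = sw i (swE i τ) ∧ (swE i τ) i = xv) then (1:ℂ) else 0) * ψ (swE i τ)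
      = if σ = τ then (if σ (i+1) = xv then ψ (sw i σ) else 0) else 0 := by
    intro τ
    have h1 : sw i (swE i τ) = τ := sw_sw i τ
    have h2 : (swE i τ) i = τ (i+1) := by simp [swE, sw, Equiv.swap_apply_left]
    rw [h1, h2]
    by_cases h3 : σ = τ
    · subst h3; by_cases h4 : σ (i+1) = xv <;> simp [h4, swE]
    · simp [h3]
  rw [Finset.sum_congr rfl (fun τ _ => key τ), Finset.sum_ite_eq]
  simp

lemma F1H_mulVec (i : ZMod N) (ψ : Cfg N → ℂ) :
    (F1 N i)ᴴ *ᵥ ψ = fun σ => if σ i = xv then ψ (sw i σ) else 0 := by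
  funext σ
  simp only [mulVec, dotProduct, conjTranspose_apply, F1_apply]
  have key : ∀ τ : Cfg N, (star (if (τ = sw i σ ∧ σ i = xv) then (1:ℂ) else 0)) * ψ τ
      = if sw i σ = τ then (if σ i = xv then ψ (sw i σ) else 0) else 0 := by
    intro τ
    by_cases h1 : τ = sw i σ
    · subst h1; by_cases h2 : σ i = xv <;> simp [h2]
    · simp [h1, Ne.symm h1]
  rw [Finset.sum_congr rfl (fun τ _ => key τ), Finset.sum_ite_eq]
  simp


lemma sw_at (i : ZMod N) (σ : Cfg N) : (sw i σ) i = σ (i+1) := by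
  simp [sw, Equiv.swap_apply_left]

lemma PxPx_mulVec (i : ZMod N) (ψ : Cfg N → ℂ) :
    (Px1 N i * Px1 N (i+1)) *ᵥ ψ = fun σ => if σ i = xv ∧ σ (i+1) = xv then ψ σ else 0 := by
  funext σ
  rw [← Matrix.mulVec_mulVec, Px1_mulVec]
  by_cases h1 : σ i = xv
  · simp only [h1, if_true, true_and, Px1_mulVec]
  · simp [h1]

lemma star_mul_self_c (z : ℂ) : star z * z = ((‖z‖^2 : ℝ) : ℂ) := by
  rw [Complex.star_def, mul_comm, Complex.mul_conj]
  simp [Complex.normSq_eq_norm_sq]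

/-- the (real) hopping edge weight -/
def dE (ψ : Cfg N → ℂ) (i : ZMod N) (τ : Cfg N) : ℝ :=
  if τ (i+1) = xv then ‖ψ τ - ψ (sw i τ)‖^2 else 0

lemma dE_nonneg (ψ : Cfg N → ℂ) (i : ZMod N) (τ : Cfg N) : 0 ≤ dE ψ i τ := by
  unfold dE; positivity

lemma quad_hop (i : ZMod N) (ψ : Cfg N → ℂ) :
    (star ψ ⬝ᵥ ((Px1 N i + Px1 N (i+1) - F1 N i - (F1 N i)ᴴ) *ᵥ ψ)).re = ∑ τ, dE ψ i τ := by
  have expand : star ψ ⬝ᵥ ((Px1 N i + Px1 N (i+1) - F1 N i - (F1 N i)ᴴ) *ᵥ ψ)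
      = (∑ σ, star (ψ σ) * ((if σ i = xv then ψ σ else 0) - (if σ i = xv then ψ (sw i σ) else 0)))
      + (∑ σ, star (ψ σ) * ((if σ (i+1) = xv then ψ σ else 0)
          - (if σ (i+1) = xv then ψ (sw i σ) else 0))) := by
    rw [Matrix.sub_mulVec, Matrix.sub_mulVec, Matrix.add_mulVec, Px1_mulVec, Px1_mulVec,
      F1_mulVec, F1H_mulVec]
    simp only [dotProduct, Pi.sub_apply, Pi.add_apply, Pi.star_apply]
    rw [← Finset.sum_add_distrib]
    exact Finset.sum_congr rfl (fun σ _ => by ring)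
  rw [expand,
    ← Equiv.sum_comp (swE i) (fun σ => star (ψ σ) *
        ((if σ i = xv then ψ σ else 0) - (if σ i = xv then ψ (sw i σ) else 0))),
    ← Finset.sum_add_distrib]
  have key : ∀ σ : Cfg N, (star (ψ (swE i σ)) *
        ((if (swE i σ) i = xv then ψ (swE i σ) else 0)
          - (if (swE i σ) i = xv then ψ (sw i (swE i σ)) else 0)))
      + (star (ψ σ) * ((if σ (i+1) = xv then ψ σ else 0)
          - (if σ (i+1) = xv then ψ (sw i σ) else 0)))
      = ((dE ψ i σ : ℝ) : ℂ) := by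
    intro σ
    have e1 : swE i σ = sw i σ := rfl
    have e2 : (sw i σ) i = σ (i+1) := sw_at i σ
    have e3 : sw i (sw i σ) = σ := sw_sw i σ
    rw [e1, e2, e3]
    by_cases h : σ (i+1) = xv
    · have : ((dE ψ i σ : ℝ) : ℂ) = star (ψ σ - ψ (sw i σ)) * (ψ σ - ψ (sw i σ)) := by
        rw [star_mul_self_c]; unfold dE; rw [if_pos h]
      rw [this]
      simp only [if_pos h, star_sub]
      ring
    · simp [dE, h]
  rw [Finset.sum_congr rfl (fun σ _ => key σ)]
  rw [Complex.re_sum]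
  simp


lemma sum_mulVec' {ι : Type*} (s : Finset ι) (A : ι → Matrix (Cfg N) (Cfg N) ℂ)
    (v : Cfg N → ℂ) : (∑ i ∈ s, A i) *ᵥ v = ∑ i ∈ s, A i *ᵥ v := by
  funext x
  simp only [mulVec, dotProduct, Finset.sum_apply, Matrix.sum_apply, Finset.sum_mul]
  exact Finset.sum_comm

lemma dot_sum' {ι : Type*} (s : Finset ι) (v : ι → Cfg N → ℂ) (ψ : Cfg N → ℂ) :
    star ψ ⬝ᵥ (∑ i ∈ s, v i) = ∑ i ∈ s, star ψ ⬝ᵥ v i := by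
  simp only [dotProduct, Finset.sum_apply, Finset.mul_sum]
  exact Finset.sum_comm

lemma dot_diag (ψ : Cfg N → ℂ) (P : Cfg N → Prop) [DecidablePred P] :
    (star ψ ⬝ᵥ (fun σ => if P σ then ψ σ else 0)).re = ∑ σ, if P σ then ‖ψ σ‖^2 else 0 := by
  simp only [dotProduct, Pi.star_apply, Complex.re_sum]
  refine Finset.sum_congr rfl fun σ _ => ?_
  by_cases h : P σ
  · simp only [h, if_true]
    rw [star_mul_self_c, Complex.ofReal_re]
  · simp [h]

lemma quad_Px (i : ZMod N) (ψ : Cfg N → ℂ) :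
    (star ψ ⬝ᵥ (Px1 N i *ᵥ ψ)).re = ∑ σ, if σ i = xv then ‖ψ σ‖^2 else 0 := by
  rw [Px1_mulVec]; exact dot_diag ψ _

lemma quad_PxPx (i : ZMod N) (ψ : Cfg N → ℂ) :
    (star ψ ⬝ᵥ ((Px1 N i * Px1 N (i+1)) *ᵥ ψ)).re
      = ∑ σ, if σ i = xv ∧ σ (i+1) = xv then ‖ψ σ‖^2 else 0 := by
  rw [PxPx_mulVec]; exact dot_diag ψ _

lemma quad_one (ψ : Cfg N → ℂ) :
    (star ψ ⬝ᵥ ((1 : Matrix (Cfg N) (Cfg N) ℂ) *ᵥ ψ)).re = ∑ σ, ‖ψ σ‖^2 := by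
  rw [Matrix.one_mulVec]
  simp only [dotProduct, Pi.star_apply, Complex.re_sum]
  refine Finset.sum_congr rfl fun σ _ => ?_
  rw [star_mul_self_c, Complex.ofReal_re]

lemma sector_sum (ψ : Cfg N → ℂ) (a : ℕ)
    (hsupp : ∀ s : Cfg N, (Finset.univ.filter (fun i => s i = xv)).card ≠ a → ψ s = 0)
    (hnorm : (∑ s, ‖ψ s‖^2) = 1) :
    (∑ i : ZMod N, ∑ σ, if σ i = xv then ‖ψ σ‖^2 else 0) = a := by
  rw [Finset.sum_comm]
  have key : ∀ σ : Cfg N, (∑ i : ZMod N, if σ i = xv then ‖ψ σ‖^2 else 0)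
      = (a : ℝ) * ‖ψ σ‖^2 := by
    intro σ
    rw [← Finset.sum_filter, Finset.sum_const, nsmul_eq_mul]
    by_cases h : (Finset.univ.filter (fun i => σ i = xv)).card = a
    · rw [h]
    · rw [hsupp σ h]; simp
  rw [Finset.sum_congr rfl (fun σ _ => key σ), ← Finset.mul_sum, hnorm, mul_one]

lemma energy_eq (ψ : Cfg N → ℂ) (a : ℕ)
    (hsupp : ∀ s : Cfg N, (Finset.univ.filter (fun i => s i = xv)).card ≠ a → ψ s = 0)
    (hnorm : (∑ s, ‖ψ s‖^2) = 1) :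
    (star ψ ⬝ᵥ ((HL1 N + HV1 N) *ᵥ ψ)).re
      = (∑ j ∈ Finset.range (N-1), ∑ τ, dE ψ (j : ZMod N) τ)
        + (∑ i : ZMod N, ∑ σ, if σ i = xv ∧ σ (i+1) = xv then ‖ψ σ‖^2 else 0)
        + (1 - (a:ℝ)) / (N:ℝ)^4 := by
  rw [Matrix.add_mulVec, dotProduct_add, Complex.add_re]
  have hL : (star ψ ⬝ᵥ (HL1 N *ᵥ ψ)).re
      = ∑ j ∈ Finset.range (N-1), ∑ τ, dE ψ (j : ZMod N) τ := by
    unfold HL1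
    rw [sum_mulVec']
    rw [dot_sum' _ _ _, Complex.re_sum]
    exact Finset.sum_congr rfl fun j _ => quad_hop (j : ZMod N) ψ
  have hc : ((N : ℂ)^4)⁻¹ = ((((N:ℝ)^4)⁻¹ : ℝ) : ℂ) := by push_cast; ring
  have hV : (star ψ ⬝ᵥ (HV1 N *ᵥ ψ)).re
      = (∑ i : ZMod N, ∑ σ, if σ i = xv ∧ σ (i+1) = xv then ‖ψ σ‖^2 else 0)
        + (1 - (a:ℝ)) / (N:ℝ)^4 := by
    unfold HV1
    rw [Matrix.add_mulVec, Matrix.sub_mulVec, dotProduct_add, dotProduct_sub,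
      Matrix.smul_mulVec, Matrix.smul_mulVec, Matrix.smul_mulVec,
      dotProduct_smul, dotProduct_smul, dotProduct_smul]
    rw [Complex.add_re, Complex.sub_re]
    rw [one_smul]
    rw [hc]
    rw [smul_eq_mul, smul_eq_mul, Complex.re_ofReal_mul, Complex.re_ofReal_mul]
    rw [quad_one ψ, hnorm]
    have h2 : (star ψ ⬝ᵥ ((∑ i : ZMod N, Px1 N i) *ᵥ ψ)).re = (a : ℝ) := by
      rw [sum_mulVec', dot_sum' _ _ _, Complex.re_sum,
        Finset.sum_congr rfl (fun i _ => quad_Px i ψ)]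
      exact sector_sum ψ a hsupp hnorm
    have h3 : (star ψ ⬝ᵥ ((∑ i : ZMod N, Px1 N i * Px1 N (i+1)) *ᵥ ψ)).re
        = ∑ i : ZMod N, ∑ σ, if σ i = xv ∧ σ (i+1) = xv then ‖ψ σ‖^2 else 0 := by
      rw [sum_mulVec', dot_sum' _ _ _, Complex.re_sum]
      exact Finset.sum_congr rfl (fun i _ => quad_PxPx i ψ)
    rw [h2, h3]
    ring
  rw [hL, hV]
  ring


/-! ### moving a hole -/

lemma castinj {u v : ℕ} (hu : u < N) (hv : v < N) : ((u : ZMod N) = (v : ZMod N)) ↔ u = v := by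
  constructor
  · intro h
    have := congrArg ZMod.val h
    rwa [ZMod.val_cast_of_lt hu, ZMod.val_cast_of_lt hv] at this
  · intro h; rw [h]

/-- move the hole sitting at site p by k steps to the right -/
def mv (σ : Cfg N) (p : ℕ) : ℕ → Cfg N
  | 0 => σ
  | (k+1) => (mv σ p k) ∘ (Equiv.swap ((p+k : ℕ) : ZMod N) ((p+k+1 : ℕ) : ZMod N))

def Good (σ : Cfg N) (p k : ℕ) : Prop :=
  p + k < N ∧ σ ↑p = xv ∧ ∀ m, p < m → m ≤ p + k → σ ↑m ≠ xv

lemma Good.mono {σ : Cfg N} {p k k' : ℕ} (h : Good σ p k') (hk : k ≤ k') : Good σ p k :=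
  ⟨by have := h.1; omega, h.2.1, fun m h1 h2 => h.2.2 m h1 (by omega)⟩

lemma mv_spec {σ : Cfg N} {p : ℕ} : ∀ {k : ℕ}, Good σ p k →
    (mv σ p k ↑(p+k) = xv)
    ∧ (∀ i, i < N → (i < p ∨ p + k < i) → mv σ p k ↑i = σ ↑i)
    ∧ (∀ i, p ≤ i → i < p + k → mv σ p k ↑i = σ ↑(i+1)) := by
  intro k
  induction k with
  | zero =>
    intro h
    exact ⟨h.2.1, fun i _ _ => rfl, fun i h1 h2 => by omega⟩
  | succ k ih =>
    intro h
    obtain ⟨hN, hp, hhole⟩ := h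
    obtain ⟨ih1, ih2, ih3⟩ := ih (Good.mono ⟨hN, hp, hhole⟩ (Nat.le_succ k))
    have hNk : p + k < N := by omega
    have hNk1 : p + k + 1 < N := by omega
    refine ⟨?_, ?_, ?_⟩
    · show (mv σ p k) (Equiv.swap (↑(p+k)) (↑(p+k+1)) ↑(p+(k+1))) = xv
      have e : (p+(k+1) : ℕ) = p+k+1 := by omega
      rw [e, Equiv.swap_apply_right]
      exact ih1
    · intro i hiN hio
      show (mv σ p k) (Equiv.swap (↑(p+k)) (↑(p+k+1)) ↑i) = σ ↑i
      have hne1 : (i : ZMod N) ≠ ↑(p+k) := fun hh => by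
        rw [castinj hiN hNk] at hh; omega
      have hne2 : (i : ZMod N) ≠ ↑(p+k+1) := fun hh => by
        rw [castinj hiN hNk1] at hh; omega
      rw [Equiv.swap_apply_of_ne_of_ne hne1 hne2]
      exact ih2 i hiN (by omega)
    · intro i hpi hik
      show (mv σ p k) (Equiv.swap (↑(p+k)) (↑(p+k+1)) ↑i) = σ ↑(i+1)
      by_cases hi : i = p + k
      · subst hi
        rw [Equiv.swap_apply_left]
        exact ih2 (p+k+1) hNk1 (Or.inr (by omega))
      · have hiN : i < N := by omega
        have hne1 : (i : ZMod N) ≠ ↑(p+k) := fun hh => by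
          rw [castinj hiN hNk] at hh; omega
        have hne2 : (i : ZMod N) ≠ ↑(p+k+1) := fun hh => by
          rw [castinj hiN hNk1] at hh; omega
        rw [Equiv.swap_apply_of_ne_of_ne hne1 hne2]
        exact ih3 i hpi (by omega)

lemma mv_inj (p : ℕ) : ∀ (k : ℕ) {σ τ : Cfg N}, mv σ p k = mv τ p k → σ = τ := by
  intro k
  induction k with
  | zero => intro σ τ h; exact h
  | succ k ih =>
    intro σ τ h
    apply ih
    funext x
    have h2 := congrFun h ((Equiv.swap ((p+k : ℕ) : ZMod N) ((p+k+1 : ℕ) : ZMod N)) x)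
    simpa [mv, Equiv.swap_apply_self] using h2


/-! ### canonical paths -/

def holes (σ : Cfg N) : Finset ℕ := (Finset.range N).filter (fun i => σ ↑i = xv)

lemma mem_holes {σ : Cfg N} {m : ℕ} : m ∈ holes σ ↔ m < N ∧ σ ↑m = xv := by
  simp [holes]

lemma holes_card (σ : Cfg N) :
    (holes σ).card = (Finset.univ.filter (fun i : ZMod N => σ i = xv)).card := by
  apply Finset.card_bij (fun (j : ℕ) _ => (j : ZMod N))
  · intro j hj
    rw [mem_holes] at hj
    simp [hj.2]
  · intro j1 hj1 j2 hj2 h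
    rw [mem_holes] at hj1 hj2
    exact (castinj hj1.1 hj2.1).mp h
  · intro i hi
    refine ⟨i.val, ?_, ?_⟩
    · rw [mem_holes]
      refine ⟨ZMod.val_lt i, ?_⟩
      rw [ZMod.natCast_rightInverse i]
      simpa using hi
    · exact ZMod.natCast_rightInverse i

def pIdx (σ : Cfg N) : ℕ :=
  if h : (holes σ).Nonempty then (holes σ).min' h else 0

def qIdx (σ : Cfg N) : ℕ :=
  if h : ((holes σ).erase (pIdx σ)).Nonempty then ((holes σ).erase (pIdx σ)).min' h else 0

def Lx (σ : Cfg N) : ℕ := qIdx σ - pIdx σ - 1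

def endpt (σ : Cfg N) : Cfg N := mv σ (pIdx σ) (Lx σ)

section Sector
variable {σ : Cfg N} (h2 : 2 ≤ (holes σ).card)

include h2

lemma holes_ne : (holes σ).Nonempty := Finset.card_pos.mp (by omega)

lemma p_mem : pIdx σ ∈ holes σ := by
  rw [pIdx, dif_pos (holes_ne h2)]
  exact Finset.min'_mem _ _

lemma p_min : ∀ m ∈ holes σ, pIdx σ ≤ m := by
  intro m hm
  rw [pIdx, dif_pos (holes_ne h2)]
  exact Finset.min'_le _ _ hm

lemma erase_ne : ((holes σ).erase (pIdx σ)).Nonempty := by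
  apply Finset.card_pos.mp
  rw [Finset.card_erase_of_mem (p_mem h2)]
  omega

lemma q_mem' : qIdx σ ∈ (holes σ).erase (pIdx σ) := by
  rw [qIdx, dif_pos (erase_ne h2)]
  exact Finset.min'_mem _ _

lemma q_mem : qIdx σ ∈ holes σ := Finset.mem_of_mem_erase (q_mem' h2)

lemma q_min : ∀ m ∈ holes σ, m ≠ pIdx σ → qIdx σ ≤ m := by
  intro m hm hmp
  rw [qIdx, dif_pos (erase_ne h2)]
  exact Finset.min'_le _ _ (Finset.mem_erase.mpr ⟨hmp, hm⟩)

lemma p_lt_q : pIdx σ < qIdx σ := by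
  have h1 := p_min h2 _ (q_mem h2)
  have h2' := (Finset.mem_erase.mp (q_mem' h2)).1
  omega

lemma q_lt : qIdx σ < N := (mem_holes.mp (q_mem h2)).1

lemma pL : pIdx σ + Lx σ = qIdx σ - 1 := by
  have := p_lt_q h2
  rw [Lx]
  omega

lemma good_main : Good σ (pIdx σ) (Lx σ) := by
  refine ⟨?_, (mem_holes.mp (p_mem h2)).2, ?_⟩
  · have := pL h2; have := q_lt h2; have := p_lt_q h2; omega
  · intro m hm1 hm2 hx
    have hpl := pL h2
    have hq := q_lt h2
    have hmem : m ∈ holes σ := mem_holes.mpr ⟨by omega, hx⟩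
    have := q_min h2 m hmem (by omega)
    omega

lemma e_top : endpt σ ↑(qIdx σ - 1) = xv := by
  have := (mv_spec (good_main h2)).1
  rwa [pL h2] at this

lemma e_q : endpt σ ↑(qIdx σ) = xv := by
  have := (mv_spec (good_main h2)).2.1 (qIdx σ) (q_lt h2)
    (by right; rw [pL h2]; have := p_lt_q h2; omega)
  rw [endpt, this]
  exact (mem_holes.mp (q_mem h2)).2

lemma e_below : ∀ i, i < qIdx σ - 1 → endpt σ ↑i ≠ xv := by
  intro i hi hx
  obtain ⟨_, sp2, sp3⟩ := mv_spec (good_main h2)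
  have hpl := pL h2
  have hq := q_lt h2
  have hpq := p_lt_q h2
  by_cases hip : i < pIdx σ
  · rw [endpt, sp2 i (by omega) (Or.inl hip)] at hx
    have := p_min h2 i (mem_holes.mpr ⟨by omega, hx⟩)
    omega
  · rw [endpt, sp3 i (by omega) (by omega)] at hx
    have hmem : i + 1 ∈ holes σ := mem_holes.mpr ⟨by omega, hx⟩
    have := q_min h2 (i+1) hmem (by omega)
    omega

lemma min_endpt : pIdx (endpt σ) = qIdx σ - 1 := by
  have hmem : qIdx σ - 1 ∈ holes (endpt σ) :=
    mem_holes.mpr ⟨by have := q_lt h2; omega, e_top h2⟩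
  have hne : (holes (endpt σ)).Nonempty := ⟨_, hmem⟩
  rw [pIdx, dif_pos hne]
  refine le_antisymm (Finset.min'_le _ _ hmem) ?_
  by_contra hlt
  push_neg at hlt
  have hm := Finset.min'_mem (holes (endpt σ)) hne
  exact e_below h2 _ hlt (mem_holes.mp hm).2

lemma edge_mem {k : ℕ} (hk : k < Lx σ) : pIdx σ + k ∈ Finset.range (N-1) := by
  have := pL h2; have := q_lt h2; have := p_lt_q h2
  rw [Finset.mem_range]
  omega

lemma edge_cond {k : ℕ} (hk : k < Lx σ) :
    mv σ (pIdx σ) (k+1) ↑(pIdx σ + k + 1) = xv := by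
  have hg : Good σ (pIdx σ) (k+1) := (good_main h2).mono (by omega)
  have := (mv_spec hg).1
  rwa [show pIdx σ + (k+1) = pIdx σ + k + 1 from rfl] at this

lemma edge_sw {k : ℕ} (hk : k < Lx σ) :
    sw ((pIdx σ + k : ℕ) : ZMod N) (mv σ (pIdx σ) (k+1)) = mv σ (pIdx σ) k := by
  have hc : (((pIdx σ + k + 1 : ℕ)) : ZMod N) = ((pIdx σ + k : ℕ) : ZMod N) + 1 := by
    push_cast; ring
  funext x
  simp [sw, mv, hc, Equiv.swap_apply_self]

lemma edge_dE (ψ : Cfg N → ℂ) {k : ℕ} (hk : k < Lx σ) :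
    ‖ψ (mv σ (pIdx σ) k) - ψ (mv σ (pIdx σ) (k+1))‖^2
      = dE ψ ((pIdx σ + k : ℕ) : ZMod N) (mv σ (pIdx σ) (k+1)) := by
  have hc : (((pIdx σ + k + 1 : ℕ)) : ZMod N) = ((pIdx σ + k : ℕ) : ZMod N) + 1 := by
    push_cast; ring
  rw [dE, if_pos (by rw [← hc]; exact edge_cond h2 hk), edge_sw h2 hk, norm_sub_rev]

lemma cs_bound (ψ : Cfg N → ℂ) :
    ‖ψ σ‖^2 ≤ (N:ℝ) * ((∑ k ∈ Finset.range (Lx σ),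
        ‖ψ (mv σ (pIdx σ) k) - ψ (mv σ (pIdx σ) (k+1))‖^2) + ‖ψ (endpt σ)‖^2) := by
  set p := pIdx σ with hp
  set L := Lx σ with hLdef
  have tele : ψ σ = (∑ k ∈ Finset.range L, (ψ (mv σ p k) - ψ (mv σ p (k+1)))) + ψ (endpt σ) := by
    rw [Finset.sum_range_sub' (fun k => ψ (mv σ p k)) L]
    show ψ σ = ψ (mv σ p 0) - ψ (mv σ p L) + ψ (mv σ p L)
    rw [show mv σ p 0 = σ from rfl]
    ring
  set g : ℕ → ℝ := fun k =>
    if k = L then ‖ψ (endpt σ)‖ else ‖ψ (mv σ p k) - ψ (mv σ p (k+1))‖ with hg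
  have h1 : ‖ψ σ‖ ≤ ∑ k ∈ Finset.range (L+1), g k := by
    rw [Finset.sum_range_succ, Finset.sum_congr rfl
      (fun k hk => show g k = ‖ψ (mv σ p k) - ψ (mv σ p (k+1))‖ from
        if_neg (by rw [Finset.mem_range] at hk; omega))]
    rw [show g L = ‖ψ (endpt σ)‖ from if_pos rfl]
    calc ‖ψ σ‖ = ‖(∑ k ∈ Finset.range L, (ψ (mv σ p k) - ψ (mv σ p (k+1)))) + ψ (endpt σ)‖ := by
          rw [← tele]
      _ ≤ ‖∑ k ∈ Finset.range L, (ψ (mv σ p k) - ψ (mv σ p (k+1)))‖ + ‖ψ (endpt σ)‖ :=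
          norm_add_le _ _
      _ ≤ (∑ k ∈ Finset.range L, ‖ψ (mv σ p k) - ψ (mv σ p (k+1))‖) + ‖ψ (endpt σ)‖ :=
          add_le_add_left (norm_sum_le _ _) _
  have h2' : ‖ψ σ‖^2 ≤ (∑ k ∈ Finset.range (L+1), g k)^2 := by
    apply pow_le_pow_left₀ (norm_nonneg _) h1
  have hcs : (∑ k ∈ Finset.range (L+1), g k)^2
      ≤ ((L:ℝ)+1) * (∑ k ∈ Finset.range (L+1), (g k)^2) := by
    have := Finset.sum_mul_sq_le_sq_mul_sq (Finset.range (L+1)) (fun _ => (1:ℝ)) g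
    simpa [Finset.card_range, mul_comm] using this
  have hsq : (∑ k ∈ Finset.range (L+1), (g k)^2)
      = (∑ k ∈ Finset.range L, ‖ψ (mv σ p k) - ψ (mv σ p (k+1))‖^2) + ‖ψ (endpt σ)‖^2 := by
    rw [Finset.sum_range_succ, Finset.sum_congr rfl
      (fun k hk => show (g k)^2 = ‖ψ (mv σ p k) - ψ (mv σ p (k+1))‖^2 by
        rw [hg]; dsimp only; rw [if_neg (by rw [Finset.mem_range] at hk; omega)]),
      show g L = ‖ψ (endpt σ)‖ from if_pos rfl]
  have hL : ((L:ℝ)+1) ≤ (N:ℝ) := by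
    have h1' := q_lt h2
    have h2'' := pL h2
    have h3 := p_lt_q h2
    have : L + 1 ≤ N := by omega
    exact_mod_cast this
  have hnn : (0:ℝ) ≤ (∑ k ∈ Finset.range L, ‖ψ (mv σ p k) - ψ (mv σ p (k+1))‖^2)
      + ‖ψ (endpt σ)‖^2 := by positivity
  calc ‖ψ σ‖^2 ≤ (∑ k ∈ Finset.range (L+1), g k)^2 := h2'
    _ ≤ ((L:ℝ)+1) * (∑ k ∈ Finset.range (L+1), (g k)^2) := hcs
    _ = ((L:ℝ)+1) * ((∑ k ∈ Finset.range L, ‖ψ (mv σ p k) - ψ (mv σ p (k+1))‖^2)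
        + ‖ψ (endpt σ)‖^2) := by rw [hsq]
    _ ≤ (N:ℝ) * _ := mul_le_mul_of_nonneg_right hL hnn

end Sector

/-- total adjacent-pair weight of a configuration -/
def badj (ψ : Cfg N → ℂ) (τ : Cfg N) : ℝ :=
  ∑ i : ZMod N, if τ i = xv ∧ τ (i+1) = xv then ‖ψ τ‖^2 else 0

lemma badj_nonneg (ψ : Cfg N → ℂ) (τ : Cfg N) : 0 ≤ badj ψ τ := by
  apply Finset.sum_nonneg
  intro i _
  split <;> positivity

lemma endpt_le_badj {σ : Cfg N} (h2 : 2 ≤ (holes σ).card) (ψ : Cfg N → ℂ) :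
    ‖ψ (endpt σ)‖^2 ≤ badj ψ (endpt σ) := by
  have hq1 : (1:ℕ) ≤ qIdx σ := by have := p_lt_q h2; omega
  have hc : ((qIdx σ - 1 : ℕ) : ZMod N) + 1 = ((qIdx σ : ℕ) : ZMod N) := by
    have : ((qIdx σ - 1 : ℕ) : ZMod N) + 1 = (((qIdx σ - 1) + 1 : ℕ) : ZMod N) := by push_cast; ring
    rw [this]
    congr 1
    omega
  have hcond : endpt σ ((qIdx σ - 1 : ℕ) : ZMod N) = xv
      ∧ endpt σ (((qIdx σ - 1 : ℕ) : ZMod N) + 1) = xv := by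
    refine ⟨e_top h2, ?_⟩
    rw [hc]
    exact e_q h2
  have := Finset.single_le_sum (f := fun i : ZMod N =>
      if endpt σ i = xv ∧ endpt σ (i+1) = xv then ‖ψ (endpt σ)‖^2 else 0)
    (fun i _ => by split <;> positivity)
    (Finset.mem_univ ((qIdx σ - 1 : ℕ) : ZMod N))
  unfold badj
  simpa [hcond.1, hcond.2] using this

lemma inj_end {σ τ : Cfg N} (h2σ : 2 ≤ (holes σ).card) (h2τ : 2 ≤ (holes τ).card)
    (hp : pIdx σ = pIdx τ) (he : endpt σ = endpt τ) : σ = τ := by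
  have hq : qIdx σ = qIdx τ := by
    have h1 := min_endpt h2σ
    have h2 := min_endpt h2τ
    rw [he] at h1
    have := p_lt_q h2σ
    have := p_lt_q h2τ
    omega
  have hL : Lx σ = Lx τ := by rw [Lx, Lx, hp, hq]
  apply mv_inj (pIdx σ) (Lx σ)
  have e1 : mv σ (pIdx σ) (Lx σ) = endpt σ := rfl
  have e2 : mv τ (pIdx σ) (Lx σ) = endpt τ := by rw [hp, hL]; rfl
  rw [e1, e2, he]


lemma key_bound (ψ : Cfg N → ℂ) (a : ℕ) (ha : 2 ≤ a)
    (hsupp : ∀ s : Cfg N, (Finset.univ.filter (fun i => s i = xv)).card ≠ a → ψ s = 0)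
    (hnorm : (∑ s, ‖ψ s‖^2) = 1) :
    1 ≤ (N:ℝ)^2 * ((∑ j ∈ Finset.range (N-1), ∑ τ, dE ψ (j : ZMod N) τ)
      + (∑ i : ZMod N, ∑ σ, if σ i = xv ∧ σ (i+1) = xv then ‖ψ σ‖^2 else 0)) := by
  classical
  set D : ℝ := ∑ j ∈ Finset.range (N-1), ∑ τ, dE ψ (j : ZMod N) τ with hD
  set B : ℝ := ∑ i : ZMod N, ∑ σ, if σ i = xv ∧ σ (i+1) = xv then ‖ψ σ‖^2 else 0 with hB
  set Ω : Finset (Cfg N) := Finset.univ.filter (fun σ => 2 ≤ (holes σ).card) with hΩ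
  have hΩmem : ∀ σ ∈ Ω, 2 ≤ (holes σ).card := fun σ hσ => (Finset.mem_filter.mp hσ).2
  -- the whole mass sits on Ω
  have mass : (∑ σ ∈ Ω, ‖ψ σ‖^2) = 1 := by
    rw [← hnorm]
    apply Finset.sum_subset (Finset.subset_univ Ω)
    intro s _ hs
    have hz : ψ s = 0 := by
      apply hsupp
      intro hcard
      apply hs
      rw [hΩ, Finset.mem_filter]
      exact ⟨Finset.mem_univ s, by rw [holes_card, hcard]; exact ha⟩
    rw [hz]; simp
  have hDnn : 0 ≤ D := by
    rw [hD]
    apply Finset.sum_nonneg; intro j _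
    apply Finset.sum_nonneg; intro τ _
    exact dE_nonneg ψ _ τ
  have hBnn : 0 ≤ B := by
    rw [hB]
    apply Finset.sum_nonneg; intro i _
    apply Finset.sum_nonneg; intro τ _
    split <;> positivity
  -- step 2
  have step2 : (1:ℝ) ≤ (N:ℝ) * ((∑ σ ∈ Ω, ∑ k ∈ Finset.range (Lx σ),
      ‖ψ (mv σ (pIdx σ) k) - ψ (mv σ (pIdx σ) (k+1))‖^2)
      + (∑ σ ∈ Ω, badj ψ (endpt σ))) := by
    rw [← mass, ← Finset.sum_add_distrib, Finset.mul_sum]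
    apply Finset.sum_le_sum
    intro σ hσ
    have h2 := hΩmem σ hσ
    calc ‖ψ σ‖^2 ≤ (N:ℝ) * ((∑ k ∈ Finset.range (Lx σ),
          ‖ψ (mv σ (pIdx σ) k) - ψ (mv σ (pIdx σ) (k+1))‖^2) + ‖ψ (endpt σ)‖^2) :=
        cs_bound h2 ψ
      _ ≤ (N:ℝ) * ((∑ k ∈ Finset.range (Lx σ),
          ‖ψ (mv σ (pIdx σ) k) - ψ (mv σ (pIdx σ) (k+1))‖^2) + badj ψ (endpt σ)) := by
        apply mul_le_mul_of_nonneg_left (add_le_add_right (endpt_le_badj h2 ψ) _)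
          (Nat.cast_nonneg N)
  -- step 3a : endpoint congestion
  have h3a : (∑ σ ∈ Ω, badj ψ (endpt σ)) ≤ (N:ℝ) * B := by
    have hinj : ∀ x ∈ Ω, ∀ y ∈ Ω, (fun σ => (pIdx σ, endpt σ)) x
        = (fun σ => (pIdx σ, endpt σ)) y → x = y := by
      intro x hx y hy h
      simp only [Prod.mk.injEq] at h
      exact inj_end (hΩmem x hx) (hΩmem y hy) h.1 h.2
    have him : (∑ σ ∈ Ω, badj ψ (endpt σ))
        = ∑ y ∈ Ω.image (fun σ => (pIdx σ, endpt σ)), badj ψ y.2 :=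
      (Finset.sum_image (f := fun y : ℕ × Cfg N => badj ψ y.2) hinj).symm
    rw [him]
    have hsub : Ω.image (fun σ => (pIdx σ, endpt σ))
        ⊆ (Finset.range N) ×ˢ (Finset.univ : Finset (Cfg N)) := by
      intro y hy
      obtain ⟨σ, hσ, rfl⟩ := Finset.mem_image.mp hy
      rw [Finset.mem_product]
      refine ⟨?_, Finset.mem_univ _⟩
      rw [Finset.mem_range]
      exact (mem_holes.mp (p_mem (hΩmem σ hσ))).1
    calc ∑ y ∈ Ω.image (fun σ => (pIdx σ, endpt σ)), badj ψ y.2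
        ≤ ∑ y ∈ (Finset.range N) ×ˢ (Finset.univ : Finset (Cfg N)), badj ψ y.2 :=
          Finset.sum_le_sum_of_subset_of_nonneg hsub (fun y _ _ => badj_nonneg ψ y.2)
      _ = ∑ _p ∈ Finset.range N, ∑ τ, badj ψ τ := Finset.sum_product _ _ _
      _ = (N:ℝ) * ∑ τ, badj ψ τ := by
          rw [Finset.sum_const, Finset.card_range, nsmul_eq_mul]
      _ = (N:ℝ) * B := by
          rw [hB]
          congr 1
          rw [Finset.sum_comm]
          rfl
  -- step 3b : edge congestion
  have h3b : (∑ σ ∈ Ω, ∑ k ∈ Finset.range (Lx σ),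
      ‖ψ (mv σ (pIdx σ) k) - ψ (mv σ (pIdx σ) (k+1))‖^2) ≤ (N:ℝ) * D := by
    have hre : (∑ σ ∈ Ω, ∑ k ∈ Finset.range (Lx σ),
        ‖ψ (mv σ (pIdx σ) k) - ψ (mv σ (pIdx σ) (k+1))‖^2)
        = ∑ x ∈ Ω.sigma (fun σ => Finset.range (Lx σ)),
            dE ψ ((pIdx x.1 + x.2 : ℕ) : ZMod N) (mv x.1 (pIdx x.1) (x.2+1)) := by
      rw [Finset.sum_sigma]
      refine Finset.sum_congr rfl fun σ hσ => Finset.sum_congr rfl fun k hk => ?_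
      exact edge_dE (hΩmem σ hσ) ψ (Finset.mem_range.mp hk)
    rw [hre]
    set e2 : (Σ _ : Cfg N, ℕ) → ℕ × (ℕ × Cfg N) :=
      fun x => (pIdx x.1, (pIdx x.1 + x.2, mv x.1 (pIdx x.1) (x.2+1))) with he2
    have hinj : ∀ x ∈ Ω.sigma (fun σ => Finset.range (Lx σ)),
        ∀ y ∈ Ω.sigma (fun σ => Finset.range (Lx σ)), e2 x = e2 y → x = y := by
      rintro ⟨σ, k⟩ hx ⟨τ, m⟩ hy h
      simp only [he2, Prod.mk.injEq] at h
      obtain ⟨h1, h2', h3⟩ := h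
      have hk : k = m := by omega
      subst hk
      have hστ : σ = τ := by
        apply mv_inj (pIdx σ) (k+1)
        rw [h3, h1]
      subst hστ
      rfl
    have him : (∑ x ∈ Ω.sigma (fun σ => Finset.range (Lx σ)),
        dE ψ ((pIdx x.1 + x.2 : ℕ) : ZMod N) (mv x.1 (pIdx x.1) (x.2+1)))
        = ∑ y ∈ (Ω.sigma (fun σ => Finset.range (Lx σ))).image e2,
            dE ψ ((y.2.1 : ℕ) : ZMod N) y.2.2 :=
      (Finset.sum_image (f := fun y : ℕ × (ℕ × Cfg N) => dE ψ ((y.2.1 : ℕ) : ZMod N) y.2.2)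
        hinj).symm
    rw [him]
    have hsub : (Ω.sigma (fun σ => Finset.range (Lx σ))).image e2
        ⊆ (Finset.range N) ×ˢ ((Finset.range (N-1)) ×ˢ (Finset.univ : Finset (Cfg N))) := by
      intro y hy
      obtain ⟨⟨σ, k⟩, hx, rfl⟩ := Finset.mem_image.mp hy
      rw [Finset.mem_sigma] at hx
      rw [Finset.mem_product, Finset.mem_product]
      refine ⟨?_, ?_, Finset.mem_univ _⟩
      · rw [Finset.mem_range]
        exact (mem_holes.mp (p_mem (hΩmem σ hx.1))).1
      · exact edge_mem (hΩmem σ hx.1) (Finset.mem_range.mp hx.2)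
    calc ∑ y ∈ (Ω.sigma (fun σ => Finset.range (Lx σ))).image e2,
          dE ψ ((y.2.1 : ℕ) : ZMod N) y.2.2
        ≤ ∑ y ∈ (Finset.range N) ×ˢ ((Finset.range (N-1)) ×ˢ (Finset.univ : Finset (Cfg N))),
            dE ψ ((y.2.1 : ℕ) : ZMod N) y.2.2 :=
          Finset.sum_le_sum_of_subset_of_nonneg hsub (fun y _ _ => dE_nonneg ψ _ _)
      _ = ∑ _p ∈ Finset.range N, ∑ z ∈ (Finset.range (N-1)) ×ˢ (Finset.univ : Finset (Cfg N)),
            dE ψ ((z.1 : ℕ) : ZMod N) z.2 := Finset.sum_product _ _ _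
      _ = ∑ _p ∈ Finset.range N, ∑ j ∈ Finset.range (N-1), ∑ τ, dE ψ ((j : ℕ) : ZMod N) τ := by
          refine Finset.sum_congr rfl fun p _ => Finset.sum_product _ _ _
      _ = (N:ℝ) * D := by
          rw [Finset.sum_const, Finset.card_range, nsmul_eq_mul, hD]
  calc (1:ℝ) ≤ (N:ℝ) * ((∑ σ ∈ Ω, ∑ k ∈ Finset.range (Lx σ),
        ‖ψ (mv σ (pIdx σ) k) - ψ (mv σ (pIdx σ) (k+1))‖^2)
        + (∑ σ ∈ Ω, badj ψ (endpt σ))) := step2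
    _ ≤ (N:ℝ) * ((N:ℝ) * D + (N:ℝ) * B) :=
        mul_le_mul_of_nonneg_left (add_le_add h3b h3a) (Nat.cast_nonneg N)
    _ = (N:ℝ)^2 * (D + B) := by ring

end Stmt17Aux
end

/-- there is a universal constant c > 0 such that for all sufficiently
large N and every a with 2 ≤ a ≤ N, every unit vector ψ supported on the single-ring
configurations with exactly a holes satisfies ⟨ψ, (H_L + H_V^L)ψ⟩ ≥ c/N³. -/

theorem stmt17 : ∃ c : ℝ, 0 < c ∧ ∃ N₀ : ℕ, ∀ (N : ℕ) [NeZero N], N₀ ≤ N →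
    ∀ a : ℕ, 2 ≤ a → a ≤ N →
    ∀ ψ : Cfg N → ℂ,
      (∀ s : Cfg N, (Finset.univ.filter (fun i => s i = xv)).card ≠ a → ψ s = 0) →
      (∑ s, ‖ψ s‖^2) = 1 →
      c / (N : ℝ)^3 ≤ (star ψ ⬝ᵥ ((HL1 N + HV1 N) *ᵥ ψ)).re := by

  refine ⟨1, one_pos, 2, ?_⟩
  intro N _ hN a ha2 haN ψ hsupp hnorm
  have hNpos : (0:ℝ) < (N:ℝ) := by
    have : 0 < N := by omega
    exact_mod_cast this
  rw [Stmt17Aux.energy_eq ψ a hsupp hnorm]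
  have hkey := Stmt17Aux.key_bound ψ a ha2 hsupp hnorm
  set D : ℝ := ∑ j ∈ Finset.range (N-1), ∑ τ, Stmt17Aux.dE ψ (j : ZMod N) τ with hD
  set B : ℝ := ∑ i : ZMod N, ∑ σ, if σ i = xv ∧ σ (i+1) = xv then ‖ψ σ‖^2 else 0 with hB
  have hS : 1/(N:ℝ)^2 ≤ D + B := by
    rw [div_le_iff₀ (by positivity)]
    nlinarith [hkey]
  have haR : (a:ℝ) ≤ (N:ℝ) := Nat.cast_le.mpr haN
  have e1 : ((1:ℝ) - (N:ℝ))/(N:ℝ)^4 ≤ (1 - (a:ℝ))/(N:ℝ)^4 :=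
    (div_le_div_iff_of_pos_right (by positivity : (0:ℝ) < (N:ℝ)^4)).mpr (by linarith)
  have e2 : (1:ℝ)/(N:ℝ)^3 ≤ 1/(N:ℝ)^2 + (1 - (N:ℝ))/(N:ℝ)^4 := by
    have key : 1/(N:ℝ)^2 + (1-(N:ℝ))/(N:ℝ)^4 - 1/(N:ℝ)^3 = ((N:ℝ)-1)^2/(N:ℝ)^4 := by
      field_simp
      ring
    have hnn : (0:ℝ) ≤ ((N:ℝ)-1)^2/(N:ℝ)^4 := by positivity
    linarith [key]
  calc (1:ℝ)/(N:ℝ)^3 ≤ 1/(N:ℝ)^2 + (1 - (N:ℝ))/(N:ℝ)^4 := e2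
    _ ≤ (D + B) + (1 - (a:ℝ))/(N:ℝ)^4 := add_le_add hS e1
end
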